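/- arXiv:2510.04540 — 7 statements merged into one kernel-verified Lean document; each statement's English description precedes it below -/
import Mathlib

section
/- Nonexpansiveness of the transport solution operator (Lemma 4.1, first part): for every μ∈[−1,1]∖{0} and every φ∈L²(Ω;σ_T), ‖A_μφ‖ ≤ ‖φ‖ in the L²(Ω;σ_T) norm; consequently the operator norm of A_μ satisfies ‖A_μ‖ ≤ 1. -/
open MeasureTheory
open scoped ENNReal

/-- The measure `σ_T(x) dx` on `Ω = [x_L, x_R]`, so that `Lp ℝ 2` of it is `L²(Ω;σ_T)`. -/
noncomputable def transMeasure (xL xR : ℝ) (σT : ℝ → ℝ) : Measure ℝ :=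
  (volume.restrict (Set.Icc xL xR)).withDensity fun x => ENNReal.ofReal (σT x)

/-- The kernel `k_μ(x,y)` of the transport solution operator `A_μ`. -/
noncomputable def transKernel (σT σr : ℝ → ℝ) (μ x y : ℝ) : ℝ :=
  if 0 < μ then
    (if y ≤ x then (1 / μ) * Real.exp (-(1 / μ) * ∫ z in y..x, σT z) * (σr y / σT y) else 0)
  else
    (if x ≤ y then (-(1 / μ)) * Real.exp ((1 / μ) * ∫ z in x..y, σT z) * (σr y / σT y) else 0)

section Aux

open intervalIntegral


lemma schur_aux {α : Type*} [MeasurableSpace α] {ν : Measure α} [SFinite ν]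
    {K : α → α → ℝ≥0∞} (hK : Measurable (Function.uncurry K))
    (hrow : ∀ᵐ x ∂ν, ∫⁻ y, K x y ∂ν ≤ 1)
    (hcol : ∀ᵐ y ∂ν, ∫⁻ x, K x y ∂ν ≤ 1)
    {g : α → ℝ≥0∞} (hg : AEMeasurable g ν) :
    ∫⁻ x, (∫⁻ y, K x y * g y ∂ν) ^ (2:ℝ) ∂ν ≤ ∫⁻ y, (g y) ^ (2:ℝ) ∂ν := by
  have hKx : ∀ x, Measurable (K x) := fun x => hK.comp measurable_prodMk_left
  have hg2 : AEMeasurable (fun y => g y ^ (2:ℝ)) ν :=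
    (ENNReal.continuous_rpow_const.measurable).comp_aemeasurable hg
  have step1 : ∀ᵐ x ∂ν,
      (∫⁻ y, K x y * g y ∂ν) ^ (2:ℝ) ≤ ∫⁻ y, K x y * g y ^ (2:ℝ) ∂ν := by
    filter_upwards [hrow] with x hx
    have hconj : Real.HolderConjugate 2 2 := Real.HolderConjugate.two_two
    have hf1 : AEMeasurable (fun y => (K x y) ^ ((1:ℝ)/2)) ν :=
      (ENNReal.continuous_rpow_const.measurable).comp_aemeasurable (hKx x).aemeasurable
    have hf2 : AEMeasurable (fun y => (K x y) ^ ((1:ℝ)/2) * g y) ν := hf1.mul hg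
    have hold := ENNReal.lintegral_mul_le_Lp_mul_Lq ν hconj hf1 hf2
    have heq : ∀ y, K x y * g y = (K x y) ^ ((1:ℝ)/2) * ((K x y) ^ ((1:ℝ)/2) * g y) := by
      intro y
      rw [← mul_assoc, ← ENNReal.rpow_add_of_nonneg _ _ (by norm_num) (by norm_num)]
      norm_num
    have h1 : ∀ y, ((K x y) ^ ((1:ℝ)/2)) ^ (2:ℝ) = K x y := by
      intro y
      rw [← ENNReal.rpow_mul]
      norm_num
    have h2 : ∀ y, ((K x y) ^ ((1:ℝ)/2) * g y) ^ (2:ℝ) = K x y * g y ^ (2:ℝ) := by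
      intro y
      rw [ENNReal.mul_rpow_of_nonneg _ _ (by norm_num), ← ENNReal.rpow_mul]
      norm_num
    simp only [Pi.mul_apply] at hold
    simp_rw [h1, h2] at hold
    simp_rw [heq]
    calc (∫⁻ y, (K x y) ^ ((1:ℝ)/2) * ((K x y) ^ ((1:ℝ)/2) * g y) ∂ν) ^ (2:ℝ)
        ≤ ((∫⁻ y, K x y ∂ν) ^ ((1:ℝ)/2) * (∫⁻ y, K x y * g y ^ (2:ℝ) ∂ν) ^ ((1:ℝ)/2)) ^ (2:ℝ) := by
          exact ENNReal.rpow_le_rpow (by simpa using hold) (by norm_num)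
      _ = ((∫⁻ y, K x y ∂ν) ^ ((1:ℝ)/2)) ^ (2:ℝ)
            * ((∫⁻ y, K x y * g y ^ (2:ℝ) ∂ν) ^ ((1:ℝ)/2)) ^ (2:ℝ) :=
          ENNReal.mul_rpow_of_nonneg _ _ (by norm_num)
      _ = (∫⁻ y, K x y ∂ν) * (∫⁻ y, K x y * g y ^ (2:ℝ) ∂ν) := by
          rw [← ENNReal.rpow_mul, ← ENNReal.rpow_mul]; norm_num
      _ ≤ 1 * (∫⁻ y, K x y * g y ^ (2:ℝ) ∂ν) := by
          exact mul_le_mul_left hx _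
      _ = _ := one_mul _
  calc ∫⁻ x, (∫⁻ y, K x y * g y ∂ν) ^ (2:ℝ) ∂ν
      ≤ ∫⁻ x, ∫⁻ y, K x y * g y ^ (2:ℝ) ∂ν ∂ν := lintegral_mono_ae step1
    _ = ∫⁻ y, ∫⁻ x, K x y * g y ^ (2:ℝ) ∂ν ∂ν := by
        refine lintegral_lintegral_swap ?_
        exact hK.aemeasurable.mul hg2.comp_snd
    _ ≤ ∫⁻ y, g y ^ (2:ℝ) ∂ν := by
        refine lintegral_mono_ae ?_
        filter_upwards [hcol] with y hy
        have hf : Measurable fun x => K x y := hK.comp (measurable_id.prodMk measurable_const)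
        rw [lintegral_mul_const _ hf]
        calc (∫⁻ x, K x y ∂ν) * g y ^ (2:ℝ) ≤ 1 * g y ^ (2:ℝ) := mul_le_mul_left hy _
          _ = _ := one_mul _


lemma ftc1 {σ : ℝ → ℝ} (hσ : Continuous σ) {G : ℝ → ℝ} (hG : ∀ t, HasDerivAt G (σ t) t)
    {m : ℝ} (hm : 0 < m) (a b : ℝ) :
    ∫ t in a..b, σ t * ((1/m) * Real.exp (-(1/m) * (G b - G t)))
      = 1 - Real.exp (-(1/m) * (G b - G a)) := by
  have hGc : Continuous G := Differentiable.continuous fun t => (hG t).differentiableAt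
  have heq : ∀ c t : ℝ, -(1/m) * (c - G t) = (1/m) * G t - (1/m) * c := fun c t => by ring
  have hF : ∀ t, HasDerivAt (fun t => Real.exp (-(1/m) * (G b - G t)))
      (σ t * ((1/m) * Real.exp (-(1/m) * (G b - G t)))) t := by
    intro t
    have h1 : HasDerivAt (fun t => (1/m) * G t - (1/m) * G b) ((1/m) * σ t) t :=
      ((hG t).const_mul (1/m)).sub_const _
    have h2 := h1.exp
    have h3 : (fun t => Real.exp (-(1/m) * (G b - G t)))
        = fun t => Real.exp ((1/m) * G t - (1/m) * G b) := by
      funext t; rw [heq]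
    rw [h3, heq (G b) t]
    convert h2 using 1; ring
  have hint : IntervalIntegrable
      (fun t => σ t * ((1/m) * Real.exp (-(1/m) * (G b - G t)))) volume a b := by
    apply Continuous.intervalIntegrable
    exact hσ.mul (continuous_const.mul (((continuous_const.mul
      ((continuous_const.sub hGc))).rexp)))
  rw [integral_eq_sub_of_hasDerivAt (fun t _ => hF t) hint]
  simp

lemma ftc2 {σ : ℝ → ℝ} (hσ : Continuous σ) {G : ℝ → ℝ} (hG : ∀ t, HasDerivAt G (σ t) t)
    {m : ℝ} (hm : 0 < m) (a b : ℝ) :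
    ∫ t in a..b, σ t * ((1/m) * Real.exp (-(1/m) * (G t - G a)))
      = 1 - Real.exp (-(1/m) * (G b - G a)) := by
  have hGc : Continuous G := Differentiable.continuous fun t => (hG t).differentiableAt
  have hF : ∀ t, HasDerivAt (fun t => -Real.exp (-(1/m) * (G t - G a)))
      (σ t * ((1/m) * Real.exp (-(1/m) * (G t - G a)))) t := by
    intro t
    have h1 : HasDerivAt (fun t => -(1/m) * G t + (1/m) * G a) (-(1/m) * σ t) t :=
      ((hG t).const_mul (-(1/m))).add_const _
    have h2 : HasDerivAt (fun x => -Real.exp (-(1/m) * G x + (1/m) * G a))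
        (-(Real.exp (-(1/m) * G t + (1/m) * G a) * (-(1/m) * σ t))) t := h1.exp.neg
    have h3 : (fun t => -Real.exp (-(1/m) * (G t - G a)))
        = fun t => -Real.exp (-(1/m) * G t + (1/m) * G a) := by
      funext t; congr 1; ring_nf
    rw [h3, show -(1/m) * (G t - G a) = -(1/m) * G t + (1/m) * G a by ring]
    convert h2 using 1; ring
  have hint : IntervalIntegrable
      (fun t => σ t * ((1/m) * Real.exp (-(1/m) * (G t - G a)))) volume a b := by
    apply Continuous.intervalIntegrable
    exact hσ.mul (continuous_const.mul (((continuous_const.mul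
      ((hGc.sub continuous_const))).rexp)))
  rw [integral_eq_sub_of_hasDerivAt (fun t _ => hF t) hint]
  simp [sub_eq_add_neg, add_comm]

lemma Ebound1 {σ : ℝ → ℝ} (hσ : Continuous σ) {G : ℝ → ℝ} (hG : ∀ t, HasDerivAt G (σ t) t)
    {m : ℝ} (hm : 0 < m) {w : ℝ → ℝ} (hw : Continuous w) (hw0 : ∀ t, 0 ≤ w t)
    (hwσ : ∀ t, w t ≤ σ t) {a b : ℝ} (hab : a ≤ b) :
    ∫ t in Set.Icc a b, w t * ((1/m) * Real.exp (-(1/m) * (G b - G t))) ≤ 1 := by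
  have hGc : Continuous G := Differentiable.continuous fun t => (hG t).differentiableAt
  have hec : Continuous fun t => (1/m) * Real.exp (-(1/m) * (G b - G t)) :=
    continuous_const.mul ((continuous_const.mul (continuous_const.sub hGc)).rexp)
  rw [MeasureTheory.integral_Icc_eq_integral_Ioc, ← intervalIntegral.integral_of_le hab]
  calc ∫ t in a..b, w t * ((1/m) * Real.exp (-(1/m) * (G b - G t)))
      ≤ ∫ t in a..b, σ t * ((1/m) * Real.exp (-(1/m) * (G b - G t))) := by
        apply intervalIntegral.integral_mono_on hab
          ((hw.mul hec).intervalIntegrable a b) ((hσ.mul hec).intervalIntegrable a b)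
        intro t _
        exact mul_le_mul_of_nonneg_right (hwσ t)
          (mul_nonneg (by positivity) (Real.exp_pos _).le)
    _ = 1 - Real.exp (-(1/m) * (G b - G a)) := ftc1 hσ hG hm a b
    _ ≤ 1 := sub_le_self _ (Real.exp_pos _).le

lemma Ebound2 {σ : ℝ → ℝ} (hσ : Continuous σ) {G : ℝ → ℝ} (hG : ∀ t, HasDerivAt G (σ t) t)
    {m : ℝ} (hm : 0 < m) {w : ℝ → ℝ} (hw : Continuous w) (hw0 : ∀ t, 0 ≤ w t)
    (hwσ : ∀ t, w t ≤ σ t) {a b : ℝ} (hab : a ≤ b) :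
    ∫ t in Set.Icc a b, w t * ((1/m) * Real.exp (-(1/m) * (G t - G a))) ≤ 1 := by
  have hGc : Continuous G := Differentiable.continuous fun t => (hG t).differentiableAt
  have hec : Continuous fun t => (1/m) * Real.exp (-(1/m) * (G t - G a)) :=
    continuous_const.mul ((continuous_const.mul (hGc.sub continuous_const)).rexp)
  rw [MeasureTheory.integral_Icc_eq_integral_Ioc, ← intervalIntegral.integral_of_le hab]
  calc ∫ t in a..b, w t * ((1/m) * Real.exp (-(1/m) * (G t - G a)))
      ≤ ∫ t in a..b, σ t * ((1/m) * Real.exp (-(1/m) * (G t - G a))) := by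
        apply intervalIntegral.integral_mono_on hab
          ((hw.mul hec).intervalIntegrable a b) ((hσ.mul hec).intervalIntegrable a b)
        intro t _
        exact mul_le_mul_of_nonneg_right (hwσ t)
          (mul_nonneg (by positivity) (Real.exp_pos _).le)
    _ = 1 - Real.exp (-(1/m) * (G b - G a)) := ftc2 hσ hG hm a b
    _ ≤ 1 := sub_le_self _ (Real.exp_pos _).le

lemma lint_section_le_one {xL xR : ℝ} {σT σT' S W : ℝ → ℝ}
    (hσT : ContinuousOn σT (Set.Icc xL xR))
    (hT'eq : ∀ z ∈ Set.Icc xL xR, σT' z = σT z)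
    (hT'pos : ∀ z, 0 < σT' z)
    (hSm : Measurable S) (hS0 : ∀ z, 0 ≤ S z)
    {s t : Set ℝ} (hΩ : Set.Icc xL xR = s ∪ t) (hd : Disjoint s t)
    (hs : MeasurableSet s) (ht : MeasurableSet t) (hcs : IsCompact s)
    (hWc : Continuous W)
    (hHs : Set.EqOn (fun z => σT' z * S z) W s)
    (hHt : Set.EqOn (fun z => σT' z * S z) (fun _ => 0) t)
    (hWle : ∫ z in s, W z ≤ 1) :
    ∫⁻ z, ENNReal.ofReal (S z) ∂(transMeasure xL xR σT) ≤ 1 := by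
  have hd_aem : AEMeasurable (fun y => ENNReal.ofReal (σT y))
      (volume.restrict (Set.Icc xL xR)) :=
    (hσT.aemeasurable measurableSet_Icc).ennreal_ofReal
  have h1 : IntegrableOn (fun z => σT' z * S z) s volume :=
    (((hWc.continuousOn.integrableOn_compact' hcs hs : IntegrableOn W s volume)).congr_fun hHs.symm hs : )
  have h2 : IntegrableOn (fun z => σT' z * S z) t volume :=
    ((integrableOn_zero (s := t)).congr_fun hHt.symm ht : )
  have hint : IntegrableOn (fun z => σT' z * S z) (Set.Icc xL xR) volume := by
    rw [hΩ]; exact h1.union h2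
  have hreal : ∫ z in Set.Icc xL xR, σT' z * S z ≤ 1 := by
    rw [hΩ, setIntegral_union hd ht h1 h2]
    have hz : ∫ z in t, σT' z * S z = 0 := by
      rw [setIntegral_congr_fun ht hHt]; simp
    rw [hz, add_zero, setIntegral_congr_fun hs hHs]
    exact hWle
  rw [transMeasure, lintegral_withDensity_eq_lintegral_mul₀ hd_aem
    hSm.ennreal_ofReal.aemeasurable]
  simp only [Pi.mul_apply]
  have hcongr : ∫⁻ z in Set.Icc xL xR, ENNReal.ofReal (σT z) * ENNReal.ofReal (S z) ∂volume
      = ∫⁻ z in Set.Icc xL xR, ENNReal.ofReal (σT' z * S z) ∂volume := by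
    refine setLIntegral_congr_fun measurableSet_Icc (fun z hz => ?_)
    rw [← hT'eq z hz, ← ENNReal.ofReal_mul (hT'pos z).le]
  rw [hcongr, ← ofReal_integral_eq_lintegral_ofReal hint
    (Filter.Eventually.of_forall fun z => mul_nonneg (hT'pos z).le (hS0 z))]
  exact ENNReal.ofReal_le_one.mpr hreal

end Aux

/-- **Nonexpansiveness of the transport solution operator** (Lemma 4.1, first part):
for every `μ ∈ [−1,1] \ {0}` and every `φ ∈ L²(Ω;σ_T)`, `‖A_μ φ‖ ≤ ‖φ‖`; consequently
the operator norm satisfies `‖A_μ‖ ≤ 1`. -/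
theorem transport_operator_nonexpansive
    (xL xR : ℝ) (hx : xL < xR)
    (σT σr : ℝ → ℝ)
    (hσT : ContinuousOn σT (Set.Icc xL xR)) (hσT_pos : ∀ x ∈ Set.Icc xL xR, 0 < σT x)
    (hσr : ContinuousOn σr (Set.Icc xL xR))
    (hσr_pos : ∀ x ∈ Set.Icc xL xR, 0 < σr x ∧ σr x ≤ σT x)
    (A : ℝ → Lp ℝ 2 (transMeasure xL xR σT) →L[ℝ] Lp ℝ 2 (transMeasure xL xR σT))
    (hA : ∀ μ : ℝ, μ ∈ Set.Icc (-1 : ℝ) 1 → μ ≠ 0 →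
      ∀ φ : Lp ℝ 2 (transMeasure xL xR σT),
        ∀ᵐ x ∂(transMeasure xL xR σT),
          (A μ φ) x = ∫ y in Set.Icc xL xR, transKernel σT σr μ x y * φ y * σT y) :
    ∀ μ : ℝ, μ ∈ Set.Icc (-1 : ℝ) 1 → μ ≠ 0 →
      (∀ φ : Lp ℝ 2 (transMeasure xL xR σT), ‖A μ φ‖ ≤ ‖φ‖) ∧ ‖A μ‖ ≤ 1 := by
  intro μ hμ1 hμ0
  have hle : xL ≤ xR := hx.le
  haveI hsfin : SFinite (transMeasure xL xR σT) := by rw [transMeasure]; infer_instance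
  -- extensions
  set σT' : ℝ → ℝ := fun t => σT ((Set.projIcc xL xR hle t) : ℝ) with hT'def
  set σr' : ℝ → ℝ := fun t => σr ((Set.projIcc xL xR hle t) : ℝ) with hr'def
  have hTc : Continuous σT' := (hσT.restrict).comp (continuous_projIcc)
  have hrc' : Continuous σr' := (hσr.restrict).comp (continuous_projIcc)
  have hT'eq : ∀ z ∈ Set.Icc xL xR, σT' z = σT z := fun z hz => by
    rw [hT'def]; simp [Set.projIcc_of_mem hle hz]
  have hr'eq : ∀ z ∈ Set.Icc xL xR, σr' z = σr z := fun z hz => by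
    rw [hr'def]; simp [Set.projIcc_of_mem hle hz]
  have hT'pos : ∀ z, 0 < σT' z := fun z => hσT_pos _ (Set.projIcc xL xR hle z).2
  have hr'pos : ∀ z, 0 < σr' z := fun z => (hσr_pos _ (Set.projIcc xL xR hle z).2).1
  have hr'le : ∀ z, σr' z ≤ σT' z := fun z => (hσr_pos _ (Set.projIcc xL xR hle z).2).2
  -- ratio
  set r : ℝ → ℝ := fun z => σr' z / σT' z with hrdef
  have hrc : Continuous r := hrc'.div hTc fun z => (hT'pos z).ne'
  have hr0 : ∀ z, 0 ≤ r z := fun z => div_nonneg (hr'pos z).le (hT'pos z).le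
  have hr1 : ∀ z, r z ≤ 1 := fun z => div_le_one_of_le₀ (hr'le z) (hT'pos z).le
  -- primitive
  set G : ℝ → ℝ := fun t => ∫ z in xL..t, σT' z with hGdef
  have hG : ∀ t, HasDerivAt G (σT' t) t := fun t => by
    rw [hGdef]; exact (hTc.integral_hasStrictDerivAt xL t).hasDerivAt
  have hGc : Continuous G := Differentiable.continuous fun t => (hG t).differentiableAt
  have hGsub : ∀ u v : ℝ, G v - G u = ∫ z in u..v, σT' z := fun u v => by
    rw [hGdef]
    exact intervalIntegral.integral_interval_sub_left
      (hTc.intervalIntegrable _ _) (hTc.intervalIntegrable _ _)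
  -- the nice kernel
  set k' : ℝ → ℝ → ℝ := fun x y =>
    if 0 < μ then
      (if y ≤ x then 1/μ * Real.exp (-(1/μ) * (G x - G y)) * r y else 0)
    else
      (if x ≤ y then -(1/μ) * Real.exp ((1/μ) * (G y - G x)) * r y else 0) with hk'def
  have hk0 : ∀ x y, 0 ≤ k' x y := by
    intro x y
    rw [hk'def]
    dsimp only
    split_ifs with h1 h2 h3
    · exact mul_nonneg (mul_nonneg (one_div_nonneg.mpr h1.le) (Real.exp_pos _).le) (hr0 y)
    · exact le_rfl
    · have hμneg : μ < 0 := (not_lt.mp h1).lt_of_ne hμ0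
      have : (0:ℝ) ≤ -(1/μ) := by
        rw [neg_nonneg]
        exact (div_nonpos_of_nonneg_of_nonpos zero_le_one hμneg.le)
      exact mul_nonneg (mul_nonneg this (Real.exp_pos _).le) (hr0 y)
    · exact le_rfl
  have hww : ∀ (B z : ℝ), σT' z * (B * r z) = σr' z * B := by
    intro B z
    rw [hrdef]
    dsimp only
    have h := (hT'pos z).ne'
    field_simp
  have e1 : (1:ℝ)/(-μ) = -(1/μ) := by rw [div_neg]
  -- joint measurability
  have hkm : Measurable fun p : ℝ × ℝ => k' p.1 p.2 := by
    rw [hk'def]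
    dsimp only
    by_cases hpos : 0 < μ
    · simp only [if_pos hpos]
      exact Measurable.ite (isClosed_le continuous_snd continuous_fst).measurableSet
        (((continuous_const.mul ((continuous_const.mul ((hGc.comp continuous_fst).sub
          (hGc.comp continuous_snd))).rexp)).mul (hrc.comp continuous_snd)).measurable)
        measurable_const
    · simp only [if_neg hpos]
      exact Measurable.ite (isClosed_le continuous_fst continuous_snd).measurableSet
        (((continuous_const.mul ((continuous_const.mul ((hGc.comp continuous_snd).sub
          (hGc.comp continuous_fst))).rexp)).mul (hrc.comp continuous_snd)).measurable)
        measurable_const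
  have hkx : ∀ x, Measurable (k' x) := fun x => hkm.comp measurable_prodMk_left
  have hky : ∀ y, Measurable (fun x => k' x y) := fun y =>
    hkm.comp (measurable_id.prodMk measurable_const)
  -- kernel equality on Icc × Icc
  have hkeq : ∀ x ∈ Set.Icc xL xR, ∀ y ∈ Set.Icc xL xR,
      transKernel σT σr μ x y = k' x y := by
    intro x hxΩ y hyΩ
    have hintc : ∀ u v : ℝ, u ∈ Set.Icc xL xR → v ∈ Set.Icc xL xR →
        (∫ z in u..v, σT z) = G v - G u := by
      intro u v hu hv
      rw [hGsub u v]
      exact intervalIntegral.integral_congr fun z hz =>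
        (hT'eq z (Set.uIcc_subset_Icc hu hv hz)).symm
    rw [transKernel, hk'def]
    dsimp only
    by_cases hpos : 0 < μ
    · simp only [if_pos hpos]
      by_cases hyx : y ≤ x
      · simp only [if_pos hyx]
        rw [hintc y x hyΩ hxΩ, hrdef]
        dsimp only
        rw [hT'eq y hyΩ, hr'eq y hyΩ]
      · simp only [if_neg hyx]
    · simp only [if_neg hpos]
      by_cases hxy : x ≤ y
      · simp only [if_pos hxy]
        rw [hintc x y hxΩ hyΩ, hrdef]
        dsimp only
        rw [hT'eq y hyΩ, hr'eq y hyΩ]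
      · simp only [if_neg hxy]
  -- a.e. membership in Icc
  have hν0 : (transMeasure xL xR σT) (Set.Icc xL xR)ᶜ = 0 := by
    rw [transMeasure, withDensity_apply _ measurableSet_Icc.compl,
      Measure.restrict_restrict measurableSet_Icc.compl]
    simp [Set.compl_inter_self]
  have hνae : ∀ᵐ z ∂(transMeasure xL xR σT), z ∈ Set.Icc xL xR :=
    MeasureTheory.ae_iff.mpr hν0
  -- row bounds
  have hrow : ∀ x ∈ Set.Icc xL xR, ∫⁻ y, ENNReal.ofReal (k' x y) ∂(transMeasure xL xR σT) ≤ 1 := by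
    intro x hxΩ
    rcases lt_or_gt_of_ne hμ0 with hneg | hpos
    · have hnp : ¬ 0 < μ := not_lt.mpr hneg.le
      have hm : 0 < -μ := neg_pos.mpr hneg
      refine lint_section_le_one hσT hT'eq hT'pos (hkx x) (hk0 x)
        (s := Set.Icc x xR) (t := Set.Ico xL x)
        (W := fun z => σr' z * (1/(-μ) * Real.exp (-(1/(-μ)) * (G z - G x))))
        ?_ ?_ measurableSet_Icc measurableSet_Ico isCompact_Icc ?_ ?_ ?_ ?_
      · rw [Set.union_comm]; exact (Set.Ico_union_Icc_eq_Icc hxΩ.1 hxΩ.2).symm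
      · exact Set.disjoint_left.mpr fun z hz1 hz2 => absurd hz1.1 (not_le.mpr hz2.2)
      · exact hrc'.mul (continuous_const.mul
          ((continuous_const.mul (hGc.sub continuous_const)).rexp))
      · intro z hz
        rw [hk'def]
        dsimp only
        rw [if_neg hnp, if_pos hz.1, e1, neg_neg]
        exact hww _ z
      · intro z hz
        rw [hk'def]
        dsimp only
        rw [if_neg hnp, if_neg (not_le.mpr hz.2), mul_zero]
      · exact Ebound2 hTc hG hm hrc' (fun z => (hr'pos z).le) hr'le hxΩ.2
    · refine lint_section_le_one hσT hT'eq hT'pos (hkx x) (hk0 x)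
        (s := Set.Icc xL x) (t := Set.Ioc x xR)
        (W := fun z => σr' z * (1/μ * Real.exp (-(1/μ) * (G x - G z))))
        ?_ ?_ measurableSet_Icc measurableSet_Ioc isCompact_Icc ?_ ?_ ?_ ?_
      · exact (Set.Icc_union_Ioc_eq_Icc hxΩ.1 hxΩ.2).symm
      · exact Set.disjoint_left.mpr fun z hz1 hz2 => absurd hz1.2 (not_le.mpr hz2.1)
      · exact hrc'.mul (continuous_const.mul
          ((continuous_const.mul (continuous_const.sub hGc)).rexp))
      · intro z hz
        rw [hk'def]
        dsimp only
        rw [if_pos hpos, if_pos hz.2]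
        exact hww _ z
      · intro z hz
        rw [hk'def]
        dsimp only
        rw [if_pos hpos, if_neg (not_le.mpr hz.1), mul_zero]
      · exact Ebound1 hTc hG hpos hrc' (fun z => (hr'pos z).le) hr'le hxΩ.1
  -- column bounds
  have hcol : ∀ y ∈ Set.Icc xL xR, ∫⁻ x, ENNReal.ofReal (k' x y) ∂(transMeasure xL xR σT) ≤ 1 := by
    intro y hyΩ
    have hwc : Continuous fun z => r y * σT' z := continuous_const.mul hTc
    have hw0 : ∀ z, 0 ≤ r y * σT' z := fun z => mul_nonneg (hr0 y) (hT'pos z).le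
    have hwσ : ∀ z, r y * σT' z ≤ σT' z := fun z => by
      calc r y * σT' z ≤ 1 * σT' z := mul_le_mul_of_nonneg_right (hr1 y) (hT'pos z).le
        _ = σT' z := one_mul _
    rcases lt_or_gt_of_ne hμ0 with hneg | hpos
    · have hnp : ¬ 0 < μ := not_lt.mpr hneg.le
      have hm : 0 < -μ := neg_pos.mpr hneg
      refine lint_section_le_one hσT hT'eq hT'pos (hky y) (fun x => hk0 x y)
        (s := Set.Icc xL y) (t := Set.Ioc y xR)
        (W := fun z => (r y * σT' z) * (1/(-μ) * Real.exp (-(1/(-μ)) * (G y - G z))))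
        ?_ ?_ measurableSet_Icc measurableSet_Ioc isCompact_Icc ?_ ?_ ?_ ?_
      · exact (Set.Icc_union_Ioc_eq_Icc hyΩ.1 hyΩ.2).symm
      · exact Set.disjoint_left.mpr fun z hz1 hz2 => absurd hz1.2 (not_le.mpr hz2.1)
      · exact hwc.mul (continuous_const.mul
          ((continuous_const.mul (continuous_const.sub hGc)).rexp))
      · intro z hz
        rw [hk'def]
        dsimp only
        rw [if_neg hnp, if_pos hz.2, e1, neg_neg]
        ring
      · intro z hz
        rw [hk'def]
        dsimp only
        rw [if_neg hnp, if_neg (not_le.mpr hz.1), mul_zero]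
      · exact Ebound1 hTc hG hm hwc hw0 hwσ hyΩ.1
    · refine lint_section_le_one hσT hT'eq hT'pos (hky y) (fun x => hk0 x y)
        (s := Set.Icc y xR) (t := Set.Ico xL y)
        (W := fun z => (r y * σT' z) * (1/μ * Real.exp (-(1/μ) * (G z - G y))))
        ?_ ?_ measurableSet_Icc measurableSet_Ico isCompact_Icc ?_ ?_ ?_ ?_
      · rw [Set.union_comm]; exact (Set.Ico_union_Icc_eq_Icc hyΩ.1 hyΩ.2).symm
      · exact Set.disjoint_left.mpr fun z hz1 hz2 => absurd hz1.1 (not_le.mpr hz2.2)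
      · exact hwc.mul (continuous_const.mul
          ((continuous_const.mul (hGc.sub continuous_const)).rexp))
      · intro z hz
        rw [hk'def]
        dsimp only
        rw [if_pos hpos, if_pos hz.1]
        ring
      · intro z hz
        rw [hk'def]
        dsimp only
        rw [if_pos hpos, if_neg (not_le.mpr hz.2), mul_zero]
      · exact Ebound2 hTc hG hpos hwc hw0 hwσ hyΩ.2
  -- density facts
  have hd_aem : AEMeasurable (fun z => ENNReal.ofReal (σT z))
      (volume.restrict (Set.Icc xL xR)) :=
    (hσT.aemeasurable measurableSet_Icc).ennreal_ofReal
  have habs : volume.restrict (Set.Icc xL xR) ≪ transMeasure xL xR σT := by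
    rw [transMeasure]
    refine withDensity_absolutelyContinuous' hd_aem ?_
    refine (ae_restrict_iff' measurableSet_Icc).mpr (Filter.Eventually.of_forall fun z hz => ?_)
    simp [ENNReal.ofReal_eq_zero, not_le, hσT_pos z hz]
  -- main estimate
  have main : ∀ φ : Lp ℝ 2 (transMeasure xL xR σT), ‖A μ φ‖ ≤ ‖φ‖ := by
    intro φ
    have hg : AEMeasurable (fun y => (‖φ y‖₊ : ℝ≥0∞)) (transMeasure xL xR σT) := (Lp.aestronglyMeasurable φ).enorm
    have hgr : AEMeasurable (fun y => (‖φ y‖₊ : ℝ≥0∞)) (volume.restrict (Set.Icc xL xR)) :=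
      hg.mono' habs
    have hptwise : ∀ᵐ x ∂(transMeasure xL xR σT), (‖(A μ φ) x‖₊ : ℝ≥0∞)
        ≤ ∫⁻ y, ENNReal.ofReal (k' x y) * ‖φ y‖₊ ∂(transMeasure xL xR σT) := by
      filter_upwards [hA μ hμ1 hμ0 φ, hνae] with x hfx hxΩ
      rw [hfx]
      have step1 : (‖∫ y in Set.Icc xL xR, transKernel σT σr μ x y * φ y * σT y‖₊ : ℝ≥0∞)
          ≤ ∫⁻ y in Set.Icc xL xR, ‖transKernel σT σr μ x y * φ y * σT y‖₊ ∂volume :=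
        enorm_integral_le_lintegral_enorm _
      have step2 : ∫⁻ y in Set.Icc xL xR, (‖transKernel σT σr μ x y * φ y * σT y‖₊ : ℝ≥0∞) ∂volume
          = ∫⁻ y in Set.Icc xL xR,
              ENNReal.ofReal (σT y) * (ENNReal.ofReal (k' x y) * ‖φ y‖₊) ∂volume := by
        refine setLIntegral_congr_fun measurableSet_Icc
          (fun y hy => ?_)
        rw [hkeq x hxΩ y hy, nnnorm_mul, nnnorm_mul, ENNReal.coe_mul, ENNReal.coe_mul,
          ← enorm_eq_nnnorm (k' x y), Real.enorm_eq_ofReal (hk0 x y),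
          ← enorm_eq_nnnorm (σT y), Real.enorm_eq_ofReal (hσT_pos y hy).le]
        ring
      have step3 : ∫⁻ y, ENNReal.ofReal (k' x y) * ‖φ y‖₊ ∂(transMeasure xL xR σT)
          = ∫⁻ y in Set.Icc xL xR,
              ENNReal.ofReal (σT y) * (ENNReal.ofReal (k' x y) * ‖φ y‖₊) ∂volume := by
        exact lintegral_withDensity_eq_lintegral_mul₀ hd_aem
          (((hkx x).ennreal_ofReal.aemeasurable).mul hgr)
      rw [step3]
      exact step1.trans (le_of_eq step2)
    have hKu : Measurable (Function.uncurry fun x y => ENNReal.ofReal (k' x y)) :=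
      hkm.ennreal_ofReal
    have hrow' : ∀ᵐ x ∂(transMeasure xL xR σT), ∫⁻ y, ENNReal.ofReal (k' x y) ∂(transMeasure xL xR σT) ≤ 1 :=
      hνae.mono fun x hx => hrow x hx
    have hcol' : ∀ᵐ y ∂(transMeasure xL xR σT), ∫⁻ x, ENNReal.ofReal (k' x y) ∂(transMeasure xL xR σT) ≤ 1 :=
      hνae.mono fun y hy => hcol y hy
    have hschur := schur_aux hKu hrow' hcol' hg
    rw [Lp.norm_def, Lp.norm_def]
    refine ENNReal.toReal_mono (Lp.eLpNorm_ne_top φ) ?_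
    rw [eLpNorm_eq_lintegral_rpow_enorm_toReal (by norm_num) ENNReal.ofNat_ne_top,
        eLpNorm_eq_lintegral_rpow_enorm_toReal (by norm_num) ENNReal.ofNat_ne_top]
    refine ENNReal.rpow_le_rpow ?_ (by positivity)
    simp only [ENNReal.toReal_ofNat]
    calc ∫⁻ x, (‖(A μ φ) x‖₊ : ℝ≥0∞) ^ (2:ℝ) ∂(transMeasure xL xR σT)
        ≤ ∫⁻ x, (∫⁻ y, ENNReal.ofReal (k' x y) * ‖φ y‖₊ ∂(transMeasure xL xR σT)) ^ (2:ℝ) ∂(transMeasure xL xR σT) :=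
          lintegral_mono_ae (hptwise.mono fun x hx => ENNReal.rpow_le_rpow hx (by norm_num))
      _ ≤ ∫⁻ y, (‖φ y‖₊ : ℝ≥0∞) ^ (2:ℝ) ∂(transMeasure xL xR σT) := hschur
  exact ⟨main, ContinuousLinearMap.opNorm_le_bound _ zero_le_one fun φ => by
    rw [one_mul]; exact main φ⟩
end

section
/- Convergence of the source-iteration expansion (Corollary 4.2): suppose q/σ_r∈L²(Ω;σ_T), λ∈(0,1), and the boundary data ψ_L, ψ_R are bounded. Define ψ^{(0)}(·,μ)=A_μ(q/σ_r)+b_μ and, for p≥1, ψ^{(p)}(·,μ)=A_μ(I^δ(ψ^{(p−1)})). Then sup over μ∈S^δ and p≥0 of ‖ψ^{(p)}(·,μ)‖ is finite, for each μ∈S^δ the series Σ_{p=0}^∞ λ^p ψ^{(p)}(·,μ) converges in L²(Ω;σ_T) to a limit ψ̄(·,μ), and this limit satisfies ψ̄(·,μ) = A_μ(λ·I^δ(ψ̄) + q/σ_r) + b_μ in L²(Ω;σ_T), i.e., it solves the regularized transport equation. -/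
open MeasureTheory

/-- The boundary propagator `B_μ(x)`. -/
noncomputable def transB (xL xR : ℝ) (σT : ℝ → ℝ) (μ x : ℝ) : ℝ :=
  if 0 < μ then Real.exp (-(1 / μ) * ∫ y in xL..x, σT y)
  else Real.exp ((1 / μ) * ∫ y in x..xR, σT y)

open intervalIntegral
open scoped ENNReal NNReal

lemma ftc_exp (f : ℝ → ℝ) (hf : Continuous f) (r a b : ℝ) :
    ∫ t in a..b, r * f t * Real.exp (r * ∫ z in a..t, f z)
      = Real.exp (r * ∫ z in a..b, f z) - 1 := by
  have hG : ∀ t : ℝ, HasDerivAt (fun u => ∫ z in a..u, f z) (f t) t := fun t =>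
    intervalIntegral.integral_hasDerivAt_right (hf.intervalIntegrable a t)
      (hf.stronglyMeasurable.stronglyMeasurableAtFilter) hf.continuousAt
  have hGc : Continuous (fun u => ∫ z in a..u, f z) :=
    continuous_iff_continuousAt.2 fun t => (hG t).continuousAt
  have hF : ∀ t : ℝ, HasDerivAt (fun u => Real.exp (r * ∫ z in a..u, f z))
      (r * f t * Real.exp (r * ∫ z in a..t, f z)) t := by
    intro t
    have := ((hG t).const_mul r).exp
    convert this using 1
    ring
  have hint : IntervalIntegrable
      (fun t => r * f t * Real.exp (r * ∫ z in a..t, f z)) volume a b := by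
    apply Continuous.intervalIntegrable
    exact (continuous_const.mul hf).mul (continuous_const.mul hGc).rexp
  have := intervalIntegral.integral_eq_sub_of_hasDerivAt (fun t _ => hF t) hint
  rw [this]
  simp

lemma ftc_exp1 (f : ℝ → ℝ) (hf : Continuous f) (s a b : ℝ) :
    ∫ t in a..b, s * f t * Real.exp (-(s * ∫ z in a..t, f z))
      = 1 - Real.exp (-(s * ∫ z in a..b, f z)) := by
  have h := ftc_exp f hf (-s) a b
  have : ∀ t : ℝ, s * f t * Real.exp (-(s * ∫ z in a..t, f z))
      = -((-s) * f t * Real.exp ((-s) * ∫ z in a..t, f z)) := by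
    intro t; ring_nf
  rw [intervalIntegral.integral_congr (fun t _ => this t), intervalIntegral.integral_neg, h]
  ring_nf

lemma ftc_exp2 (f : ℝ → ℝ) (hf : Continuous f) (s a b : ℝ) :
    ∫ t in a..b, s * f t * Real.exp (-(s * ∫ z in t..b, f z))
      = 1 - Real.exp (-(s * ∫ z in a..b, f z)) := by
  have h := ftc_exp f hf s b a
  have key : ∀ t : ℝ, s * f t * Real.exp (-(s * ∫ z in t..b, f z))
      = s * f t * Real.exp (s * ∫ z in b..t, f z) := by
    intro t
    rw [intervalIntegral.integral_symm t b]
    ring_nf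
  rw [intervalIntegral.integral_congr (fun t _ => key t), intervalIntegral.integral_symm b a, h,
    intervalIntegral.integral_symm a b]
  ring_nf

lemma kernel_bnd_fst (f g : ℝ → ℝ) (hf : Continuous f)
    (hfpos : ∀ z, 0 < f z) (hg : ∀ z, 0 ≤ g z ∧ g z ≤ f z) {μ : ℝ} (hμ : μ ≠ 0)
    {xL xR x : ℝ} (hxL : xL ≤ x) (hxR : x ≤ xR) :
    ∫⁻ y in Set.Icc xL xR,
      ENNReal.ofReal (transKernel f g μ x y) * ENNReal.ofReal (f y) ∂volume ≤ 1 := by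
  have hIcont : Continuous fun y : ℝ => ∫ z in y..x, f z := by
    have : ∀ y : ℝ, HasDerivAt (fun u : ℝ => ∫ z in u..x, f z) (-f y) y := fun y =>
      intervalIntegral.integral_hasDerivAt_left (hf.intervalIntegrable y x)
        (hf.stronglyMeasurable.stronglyMeasurableAtFilter) hf.continuousAt
    exact continuous_iff_continuousAt.2 fun y => (this y).continuousAt
  have hIcont2 : Continuous fun y : ℝ => ∫ z in x..y, f z := by
    have : ∀ y : ℝ, HasDerivAt (fun u : ℝ => ∫ z in x..u, f z) (f y) y := fun y =>
      intervalIntegral.integral_hasDerivAt_right (hf.intervalIntegrable x y)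
        (hf.stronglyMeasurable.stronglyMeasurableAtFilter) hf.continuousAt
    exact continuous_iff_continuousAt.2 fun y => (this y).continuousAt
  rcases lt_or_gt_of_ne hμ with hneg | hpos
  · -- μ < 0
    set s : ℝ := -(1/μ) with hs
    have hs0 : 0 < s := by
      rw [hs, neg_pos]; exact one_div_neg.2 hneg
    set D : ℝ → ℝ := fun y => s * f y * Real.exp (-(s * ∫ z in x..y, f z)) with hD
    have hDnn : ∀ y, 0 ≤ D y := fun y =>
      mul_nonneg (mul_nonneg hs0.le (hfpos y).le) (Real.exp_nonneg _)
    have hDcont : Continuous D := (continuous_const.mul hf).mul (continuous_const.mul hIcont2).neg.rexp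
    calc ∫⁻ y in Set.Icc xL xR,
        ENNReal.ofReal (transKernel f g μ x y) * ENNReal.ofReal (f y) ∂volume
        ≤ ∫⁻ y in Set.Icc xL xR,
            (Set.Icc x xR).indicator (fun y => ENNReal.ofReal (D y)) y ∂volume := by
          refine lintegral_mono_ae ?_
          filter_upwards [ae_restrict_mem measurableSet_Icc] with y hy
          rw [transKernel, if_neg (by push_neg; linarith)]
          by_cases hxy : x ≤ y
          · rw [if_pos hxy, Set.indicator_of_mem (Set.mem_Icc.2 ⟨hxy, hy.2⟩)]
            rw [← ENNReal.ofReal_mul (mul_nonneg (mul_nonneg (hs ▸ hs0.le)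
              (Real.exp_nonneg _)) (div_nonneg (hg y).1 (hfpos y).le))]
            apply ENNReal.ofReal_le_ofReal
            have hfy := hfpos y
            have hexp : (1/μ) * ∫ z in x..y, f z = -(s * ∫ z in x..y, f z) := by
              simp only [hs]; ring
            rw [hexp, hD]
            have h1 : g y / f y * f y = g y := div_mul_cancel₀ _ (ne_of_gt hfy)
            calc -(1/μ) * Real.exp (-(s * ∫ z in x..y, f z)) * (g y / f y) * f y
                = Real.exp (-(s * ∫ z in x..y, f z)) * s * (g y / f y * f y) := by
                  simp only [hs]; ring
              _ = Real.exp (-(s * ∫ z in x..y, f z)) * s * g y := by rw [h1]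
              _ ≤ Real.exp (-(s * ∫ z in x..y, f z)) * s * f y := by
                  apply mul_le_mul_of_nonneg_left (hg y).2 (mul_nonneg (Real.exp_nonneg _) hs0.le)
              _ = s * f y * Real.exp (-(s * ∫ z in x..y, f z)) := by ring
          · rw [if_neg hxy]; simp
      _ = ∫⁻ y in Set.Icc x xR, ENNReal.ofReal (D y) ∂volume := by
          rw [lintegral_indicator measurableSet_Icc, Measure.restrict_restrict measurableSet_Icc,
            Set.inter_eq_self_of_subset_left (Set.Icc_subset_Icc_left hxL)]
      _ = ENNReal.ofReal (∫ y in Set.Icc x xR, D y) := by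
          rw [ofReal_integral_eq_lintegral_ofReal (hDcont.integrableOn_Icc)
            (Filter.Eventually.of_forall hDnn)]
      _ ≤ 1 := by
          rw [MeasureTheory.integral_Icc_eq_integral_Ioc,
            ← intervalIntegral.integral_of_le hxR, ftc_exp1 f hf s x xR]
          exact ENNReal.ofReal_le_one.2 (by linarith [Real.exp_nonneg (-(s * ∫ z in x..xR, f z))])
  · -- μ > 0
    set s : ℝ := 1/μ with hs
    have hs0 : 0 < s := one_div_pos.2 hpos
    set D : ℝ → ℝ := fun y => s * f y * Real.exp (-(s * ∫ z in y..x, f z)) with hD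
    have hDnn : ∀ y, 0 ≤ D y := fun y =>
      mul_nonneg (mul_nonneg hs0.le (hfpos y).le) (Real.exp_nonneg _)
    have hDcont : Continuous D := (continuous_const.mul hf).mul (continuous_const.mul hIcont).neg.rexp
    calc ∫⁻ y in Set.Icc xL xR,
        ENNReal.ofReal (transKernel f g μ x y) * ENNReal.ofReal (f y) ∂volume
        ≤ ∫⁻ y in Set.Icc xL xR,
            (Set.Icc xL x).indicator (fun y => ENNReal.ofReal (D y)) y ∂volume := by
          refine lintegral_mono_ae ?_
          filter_upwards [ae_restrict_mem measurableSet_Icc] with y hy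
          rw [transKernel, if_pos hpos]
          by_cases hxy : y ≤ x
          · rw [if_pos hxy, Set.indicator_of_mem (Set.mem_Icc.2 ⟨hy.1, hxy⟩)]
            rw [← ENNReal.ofReal_mul (mul_nonneg (mul_nonneg (by simp only [hs, one_div]; positivity)
              (Real.exp_nonneg _)) (div_nonneg (hg y).1 (hfpos y).le))]
            apply ENNReal.ofReal_le_ofReal
            have hfy := hfpos y
            have hexp : -(1/μ) * ∫ z in y..x, f z = -(s * ∫ z in y..x, f z) := by
              simp only [hs]; ring
            rw [hexp, hD]
            have h1 : g y / f y * f y = g y := div_mul_cancel₀ _ (ne_of_gt hfy)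
            calc (1/μ) * Real.exp (-(s * ∫ z in y..x, f z)) * (g y / f y) * f y
                = Real.exp (-(s * ∫ z in y..x, f z)) * s * (g y / f y * f y) := by
                  simp only [hs]; ring
              _ = Real.exp (-(s * ∫ z in y..x, f z)) * s * g y := by rw [h1]
              _ ≤ Real.exp (-(s * ∫ z in y..x, f z)) * s * f y := by
                  apply mul_le_mul_of_nonneg_left (hg y).2 (mul_nonneg (Real.exp_nonneg _) hs0.le)
              _ = s * f y * Real.exp (-(s * ∫ z in y..x, f z)) := by ring
          · rw [if_neg hxy]; simp
      _ = ∫⁻ y in Set.Icc xL x, ENNReal.ofReal (D y) ∂volume := by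
          rw [lintegral_indicator measurableSet_Icc, Measure.restrict_restrict measurableSet_Icc,
            Set.inter_eq_self_of_subset_left (Set.Icc_subset_Icc_right hxR)]
      _ = ENNReal.ofReal (∫ y in Set.Icc xL x, D y) := by
          rw [ofReal_integral_eq_lintegral_ofReal (hDcont.integrableOn_Icc)
            (Filter.Eventually.of_forall hDnn)]
      _ ≤ 1 := by
          rw [MeasureTheory.integral_Icc_eq_integral_Ioc,
            ← intervalIntegral.integral_of_le hxL, ftc_exp2 f hf s xL x]
          exact ENNReal.ofReal_le_one.2 (by linarith [Real.exp_nonneg (-(s * ∫ z in xL..x, f z))])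

lemma kernel_bnd_snd (f g : ℝ → ℝ) (hf : Continuous f)
    (hfpos : ∀ z, 0 < f z) (hg : ∀ z, 0 ≤ g z ∧ g z ≤ f z) {μ : ℝ} (hμ : μ ≠ 0)
    {xL xR y : ℝ} (hyL : xL ≤ y) (hyR : y ≤ xR) :
    ∫⁻ x in Set.Icc xL xR,
      ENNReal.ofReal (f x) * ENNReal.ofReal (transKernel f g μ x y) ∂volume ≤ 1 := by
  have hIcont : Continuous fun x : ℝ => ∫ z in x..y, f z := by
    have : ∀ x : ℝ, HasDerivAt (fun u : ℝ => ∫ z in u..y, f z) (-f x) x := fun x =>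
      intervalIntegral.integral_hasDerivAt_left (hf.intervalIntegrable x y)
        (hf.stronglyMeasurable.stronglyMeasurableAtFilter) hf.continuousAt
    exact continuous_iff_continuousAt.2 fun x => (this x).continuousAt
  have hIcont2 : Continuous fun x : ℝ => ∫ z in y..x, f z := by
    have : ∀ x : ℝ, HasDerivAt (fun u : ℝ => ∫ z in y..u, f z) (f x) x := fun x =>
      intervalIntegral.integral_hasDerivAt_right (hf.intervalIntegrable y x)
        (hf.stronglyMeasurable.stronglyMeasurableAtFilter) hf.continuousAt
    exact continuous_iff_continuousAt.2 fun x => (this x).continuousAt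
  have hgf1 : g y / f y ≤ 1 := div_le_one_of_le₀ (hg y).2 (hfpos y).le
  have hgf0 : 0 ≤ g y / f y := div_nonneg (hg y).1 (hfpos y).le
  rcases lt_or_gt_of_ne hμ with hneg | hpos
  · -- μ < 0
    set s : ℝ := -(1/μ) with hs
    have hs0 : 0 < s := by rw [hs, neg_pos]; exact one_div_neg.2 hneg
    set D : ℝ → ℝ := fun x => s * f x * Real.exp (-(s * ∫ z in x..y, f z)) with hD
    have hDnn : ∀ x, 0 ≤ D x := fun x =>
      mul_nonneg (mul_nonneg hs0.le (hfpos x).le) (Real.exp_nonneg _)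
    have hDcont : Continuous D :=
      (continuous_const.mul hf).mul (continuous_const.mul hIcont).neg.rexp
    calc ∫⁻ x in Set.Icc xL xR,
        ENNReal.ofReal (f x) * ENNReal.ofReal (transKernel f g μ x y) ∂volume
        ≤ ∫⁻ x in Set.Icc xL xR,
            (Set.Icc xL y).indicator (fun x => ENNReal.ofReal (D x)) x ∂volume := by
          refine lintegral_mono_ae ?_
          filter_upwards [ae_restrict_mem measurableSet_Icc] with x hxm
          rw [transKernel, if_neg (by push_neg; linarith)]
          by_cases hxy : x ≤ y
          · rw [if_pos hxy, Set.indicator_of_mem (Set.mem_Icc.2 ⟨hxm.1, hxy⟩)]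
            rw [← ENNReal.ofReal_mul (hfpos x).le]
            apply ENNReal.ofReal_le_ofReal
            have hexp : (1/μ) * ∫ z in x..y, f z = -(s * ∫ z in x..y, f z) := by
              simp only [hs]; ring
            rw [hexp, hD]
            calc f x * (-(1/μ) * Real.exp (-(s * ∫ z in x..y, f z)) * (g y / f y))
                = s * f x * Real.exp (-(s * ∫ z in x..y, f z)) * (g y / f y) := by
                  simp only [hs]; ring
              _ ≤ s * f x * Real.exp (-(s * ∫ z in x..y, f z)) * 1 :=
                  mul_le_mul_of_nonneg_left hgf1
                    (mul_nonneg (mul_nonneg hs0.le (hfpos x).le) (Real.exp_nonneg _))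
              _ = s * f x * Real.exp (-(s * ∫ z in x..y, f z)) := by ring
          · rw [if_neg hxy]; simp
      _ = ∫⁻ x in Set.Icc xL y, ENNReal.ofReal (D x) ∂volume := by
          rw [lintegral_indicator measurableSet_Icc, Measure.restrict_restrict measurableSet_Icc,
            Set.inter_eq_self_of_subset_left (Set.Icc_subset_Icc_right hyR)]
      _ = ENNReal.ofReal (∫ x in Set.Icc xL y, D x) := by
          rw [ofReal_integral_eq_lintegral_ofReal (hDcont.integrableOn_Icc)
            (Filter.Eventually.of_forall hDnn)]
      _ ≤ 1 := by
          rw [MeasureTheory.integral_Icc_eq_integral_Ioc,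
            ← intervalIntegral.integral_of_le hyL, ftc_exp2 f hf s xL y]
          exact ENNReal.ofReal_le_one.2 (by linarith [Real.exp_nonneg (-(s * ∫ z in xL..y, f z))])
  · -- μ > 0
    set s : ℝ := 1/μ with hs
    have hs0 : 0 < s := one_div_pos.2 hpos
    set D : ℝ → ℝ := fun x => s * f x * Real.exp (-(s * ∫ z in y..x, f z)) with hD
    have hDnn : ∀ x, 0 ≤ D x := fun x =>
      mul_nonneg (mul_nonneg hs0.le (hfpos x).le) (Real.exp_nonneg _)
    have hDcont : Continuous D :=
      (continuous_const.mul hf).mul (continuous_const.mul hIcont2).neg.rexp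
    calc ∫⁻ x in Set.Icc xL xR,
        ENNReal.ofReal (f x) * ENNReal.ofReal (transKernel f g μ x y) ∂volume
        ≤ ∫⁻ x in Set.Icc xL xR,
            (Set.Icc y xR).indicator (fun x => ENNReal.ofReal (D x)) x ∂volume := by
          refine lintegral_mono_ae ?_
          filter_upwards [ae_restrict_mem measurableSet_Icc] with x hxm
          rw [transKernel, if_pos hpos]
          by_cases hxy : y ≤ x
          · rw [if_pos hxy, Set.indicator_of_mem (Set.mem_Icc.2 ⟨hxy, hxm.2⟩)]
            rw [← ENNReal.ofReal_mul (hfpos x).le]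
            apply ENNReal.ofReal_le_ofReal
            have hexp : -(1/μ) * ∫ z in y..x, f z = -(s * ∫ z in y..x, f z) := by
              simp only [hs]; ring
            rw [hexp, hD]
            calc f x * ((1/μ) * Real.exp (-(s * ∫ z in y..x, f z)) * (g y / f y))
                = s * f x * Real.exp (-(s * ∫ z in y..x, f z)) * (g y / f y) := by
                  simp only [hs]; ring
              _ ≤ s * f x * Real.exp (-(s * ∫ z in y..x, f z)) * 1 :=
                  mul_le_mul_of_nonneg_left hgf1
                    (mul_nonneg (mul_nonneg hs0.le (hfpos x).le) (Real.exp_nonneg _))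
              _ = s * f x * Real.exp (-(s * ∫ z in y..x, f z)) := by ring
          · rw [if_neg hxy]; simp
      _ = ∫⁻ x in Set.Icc y xR, ENNReal.ofReal (D x) ∂volume := by
          rw [lintegral_indicator measurableSet_Icc, Measure.restrict_restrict measurableSet_Icc,
            Set.inter_eq_self_of_subset_left (Set.Icc_subset_Icc_left hyL)]
      _ = ENNReal.ofReal (∫ x in Set.Icc y xR, D x) := by
          rw [ofReal_integral_eq_lintegral_ofReal (hDcont.integrableOn_Icc)
            (Filter.Eventually.of_forall hDnn)]
      _ ≤ 1 := by
          rw [MeasureTheory.integral_Icc_eq_integral_Ioc,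
            ← intervalIntegral.integral_of_le hyR, ftc_exp1 f hf s y xR]
          exact ENNReal.ofReal_le_one.2 (by linarith [Real.exp_nonneg (-(s * ∫ z in y..xR, f z))])

noncomputable def clampT (xL xR : ℝ) (f : ℝ → ℝ) : ℝ → ℝ := fun z => f (max xL (min z xR))

lemma clampT_mem {xL xR : ℝ} (hx : xL ≤ xR) (z : ℝ) : max xL (min z xR) ∈ Set.Icc xL xR :=
  ⟨le_max_left _ _, max_le hx (min_le_right _ _)⟩

lemma clampT_eq (xL xR : ℝ) (f : ℝ → ℝ) {z : ℝ} (hz : z ∈ Set.Icc xL xR) :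
    clampT xL xR f z = f z := by
  unfold clampT
  rw [min_eq_left hz.2, max_eq_right hz.1]

lemma clampT_cont {xL xR : ℝ} (hx : xL ≤ xR) {f : ℝ → ℝ}
    (hf : ContinuousOn f (Set.Icc xL xR)) : Continuous (clampT xL xR f) :=
  hf.comp_continuous (continuous_const.max (continuous_id.min continuous_const))
    (fun z => clampT_mem hx z)

lemma kernel_meas (f g : ℝ → ℝ) (hf : Continuous f) (hg : Continuous g)
    (hfpos : ∀ z, 0 < f z) (μ : ℝ) :
    Measurable fun p : ℝ × ℝ => transKernel f g μ p.1 p.2 := by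
  have hG : ∀ t : ℝ, HasDerivAt (fun u : ℝ => ∫ z in (0:ℝ)..u, f z) (f t) t := fun t =>
    intervalIntegral.integral_hasDerivAt_right (hf.intervalIntegrable 0 t)
      (hf.stronglyMeasurable.stronglyMeasurableAtFilter) hf.continuousAt
  have hGc : Continuous (fun u : ℝ => ∫ z in (0:ℝ)..u, f z) :=
    continuous_iff_continuousAt.2 fun t => (hG t).continuousAt
  have key : ∀ x y : ℝ, ∫ z in y..x, f z
      = (∫ z in (0:ℝ)..x, f z) - ∫ z in (0:ℝ)..y, f z := fun x y =>
    (intervalIntegral.integral_interval_sub_left (hf.intervalIntegrable 0 x)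
      (hf.intervalIntegrable 0 y)).symm
  have hIcont : Continuous fun p : ℝ × ℝ => ∫ z in p.2..p.1, f z := by
    have : (fun p : ℝ × ℝ => ∫ z in p.2..p.1, f z)
        = fun p : ℝ × ℝ => (∫ z in (0:ℝ)..p.1, f z) - ∫ z in (0:ℝ)..p.2, f z :=
      funext fun p => key p.1 p.2
    rw [this]
    exact (hGc.comp continuous_fst).sub (hGc.comp continuous_snd)
  have hIcont2 : Continuous fun p : ℝ × ℝ => ∫ z in p.1..p.2, f z := by
    have : (fun p : ℝ × ℝ => ∫ z in p.1..p.2, f z)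
        = fun p : ℝ × ℝ => (∫ z in (0:ℝ)..p.2, f z) - ∫ z in (0:ℝ)..p.1, f z :=
      funext fun p => key p.2 p.1
    rw [this]
    exact (hGc.comp continuous_snd).sub (hGc.comp continuous_fst)
  have hq : Continuous fun p : ℝ × ℝ => g p.2 / f p.2 :=
    (hg.comp continuous_snd).div (hf.comp continuous_snd) fun p => (hfpos p.2).ne'
  unfold transKernel
  by_cases hμ : 0 < μ
  · simp only [if_pos hμ]
    exact Measurable.ite (measurableSet_le measurable_snd measurable_fst)
      (((continuous_const.mul (continuous_const.mul hIcont).rexp).mul hq).measurable)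
      measurable_const
  · simp only [if_neg hμ]
    exact Measurable.ite (measurableSet_le measurable_fst measurable_snd)
      (((continuous_const.mul (continuous_const.mul hIcont2).rexp).mul hq).measurable)
      measurable_const

lemma kernel_nonneg (f g : ℝ → ℝ) (hfpos : ∀ z, 0 < f z) (hgnn : ∀ z, 0 ≤ g z)
    {μ : ℝ} (hμ : μ ≠ 0) (x y : ℝ) : 0 ≤ transKernel f g μ x y := by
  unfold transKernel
  rcases lt_or_gt_of_ne hμ with hneg | hpos
  · rw [if_neg (by push_neg; linarith)]
    split
    · have : (0:ℝ) ≤ -(1/μ) := by rw [neg_nonneg]; exact (one_div_neg.2 hneg).le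
      exact mul_nonneg (mul_nonneg this (Real.exp_nonneg _))
        (div_nonneg (hgnn y) (hfpos y).le)
    · exact le_refl 0
  · rw [if_pos hpos]
    split
    · exact mul_nonneg (mul_nonneg (one_div_pos.2 hpos).le (Real.exp_nonneg _))
        (div_nonneg (hgnn y) (hfpos y).le)
    · exact le_refl 0

lemma contraction_eLpNorm
    (xL xR : ℝ) (hx : xL < xR) (σT σr : ℝ → ℝ)
    (hσT : ContinuousOn σT (Set.Icc xL xR)) (hσT_pos : ∀ x ∈ Set.Icc xL xR, 0 < σT x)
    (hσr : ContinuousOn σr (Set.Icc xL xR))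
    (hσr_pos : ∀ x ∈ Set.Icc xL xR, 0 < σr x ∧ σr x ≤ σT x)
    {μ : ℝ} (hμ : μ ≠ 0) (φf : ℝ → ℝ) (hφsm : StronglyMeasurable φf) :
    eLpNorm (fun x => ∫ y in Set.Icc xL xR, transKernel σT σr μ x y * φf y * σT y)
        2 (transMeasure xL xR σT)
      ≤ eLpNorm φf 2 (transMeasure xL xR σT) := by
  set Ω := Set.Icc xL xR with hΩ
  set ν := volume.restrict Ω with hν
  set fT := clampT xL xR σT with hfT
  set fr := clampT xL xR σr with hfr
  have hfTc : Continuous fT := clampT_cont hx.le hσT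
  have hfrc : Continuous fr := clampT_cont hx.le hσr
  have hfTpos : ∀ z, 0 < fT z := fun z => hσT_pos _ (clampT_mem hx.le z)
  have hfrb : ∀ z, 0 ≤ fr z ∧ fr z ≤ fT z := fun z =>
    ⟨(hσr_pos _ (clampT_mem hx.le z)).1.le, (hσr_pos _ (clampT_mem hx.le z)).2⟩
  set w : ℝ → ℝ≥0∞ := fun z => ENNReal.ofReal (fT z) with hw
  have hw_meas : Measurable w := ENNReal.measurable_ofReal.comp hfTc.measurable
  have hw_lt : ∀ z, w z < ⊤ := fun z => ENNReal.ofReal_lt_top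
  have hmeq : transMeasure xL xR σT = ν.withDensity w := by
    unfold transMeasure
    refine withDensity_congr_ae ?_
    filter_upwards [ae_restrict_mem measurableSet_Icc] with z hz
    show ENNReal.ofReal (σT z) = ENNReal.ofReal (fT z)
    rw [hfT, clampT_eq _ _ _ hz]
  set k : ℝ → ℝ → ℝ := fun x y => transKernel fT fr μ x y with hk
  have hkeq : ∀ x ∈ Ω, ∀ y ∈ Ω, transKernel σT σr μ x y = k x y := by
    intro x hxm y hym
    have hI1 : ∫ z in y..x, σT z = ∫ z in y..x, fT z := by
      refine intervalIntegral.integral_congr fun z hz => ?_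
      have hz' : z ∈ Ω := Set.uIcc_subset_Icc ⟨hym.1, hym.2⟩ ⟨hxm.1, hxm.2⟩ hz
      exact (clampT_eq _ _ _ hz').symm
    have hI2 : ∫ z in x..y, σT z = ∫ z in x..y, fT z := by
      refine intervalIntegral.integral_congr fun z hz => ?_
      have hz' : z ∈ Ω := Set.uIcc_subset_Icc ⟨hxm.1, hxm.2⟩ ⟨hym.1, hym.2⟩ hz
      exact (clampT_eq _ _ _ hz').symm
    have hry : σr y = fr y := (clampT_eq _ _ _ hym).symm
    have hTy : σT y = fT y := (clampT_eq _ _ _ hym).symm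
    rw [hk]; unfold transKernel
    rw [hI1, hI2, hry, hTy]
  have hk_meas : Measurable (fun p : ℝ × ℝ => k p.1 p.2) :=
    kernel_meas fT fr hfTc hfrc hfTpos μ
  have hk_nn : ∀ x y, 0 ≤ k x y :=
    fun x y => kernel_nonneg fT fr hfTpos (fun z => (hfrb z).1) hμ x y
  set K : ℝ → ℝ → ℝ≥0∞ := fun x y => ENNReal.ofReal (k x y) with hK
  set Φ : ℝ → ℝ≥0∞ := fun y => (‖φf y‖₊ : ℝ≥0∞) with hΦ
  have hΦmeas : Measurable Φ := hφsm.measurable.nnnorm.coe_nnreal_ennreal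
  set g₀ : ℝ → ℝ := fun x => ∫ y in Ω, transKernel σT σr μ x y * φf y * σT y with hg₀
  -- pointwise bound
  have key : ∀ x ∈ Ω, (‖g₀ x‖₊ : ℝ≥0∞) ^ (2:ℝ)
      ≤ ∫⁻ y, K x y * w y * Φ y ^ (2:ℝ) ∂ν := by
    intro x hxm
    have h1 : (‖g₀ x‖₊ : ℝ≥0∞) ≤ ∫⁻ y, (K x y * w y) ^ ((1:ℝ)/2) *
        ((K x y * w y) ^ ((1:ℝ)/2) * Φ y) ∂ν := by
      calc (‖g₀ x‖₊ : ℝ≥0∞)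
          ≤ ∫⁻ y, (‖transKernel σT σr μ x y * φf y * σT y‖₊ : ℝ≥0∞) ∂ν :=
            enorm_integral_le_lintegral_enorm _
        _ = ∫⁻ y, K x y * Φ y * w y ∂ν := by
            refine lintegral_congr_ae ?_
            filter_upwards [ae_restrict_mem measurableSet_Icc] with y hym
            rw [← enorm_eq_nnnorm, Real.enorm_eq_ofReal_abs, abs_mul, abs_mul,
              abs_of_nonneg (by rw [hkeq x hxm y hym]; exact hk_nn x y),
              abs_of_nonneg (hσT_pos y hym).le, hkeq x hxm y hym,
              ENNReal.ofReal_mul (mul_nonneg (hk_nn x y) (abs_nonneg _)),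
              ENNReal.ofReal_mul (hk_nn x y)]
            have h2 : ENNReal.ofReal |φf y| = Φ y :=
              (Real.enorm_eq_ofReal_abs (φf y)).symm
            have h3 : ENNReal.ofReal (σT y) = w y := by
              show _ = ENNReal.ofReal (fT y)
              rw [hfT, clampT_eq _ _ _ hym]
            rw [h2, h3]
        _ = ∫⁻ y, (K x y * w y) ^ ((1:ℝ)/2) *
              ((K x y * w y) ^ ((1:ℝ)/2) * Φ y) ∂ν := by
            refine lintegral_congr fun y => ?_
            rw [← mul_assoc, ← ENNReal.rpow_add_of_nonneg _ _ (by norm_num) (by norm_num)]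
            norm_num
            exact mul_right_comm _ _ _
    have hFmeas : AEMeasurable (fun y => (K x y * w y) ^ ((1:ℝ)/2)) ν := by
      refine Measurable.aemeasurable ?_
      exact (((ENNReal.measurable_ofReal.comp (hk_meas.comp measurable_prodMk_left)).mul
        hw_meas).pow_const _)
    have hGmeas : AEMeasurable (fun y => (K x y * w y) ^ ((1:ℝ)/2) * Φ y) ν :=
      hFmeas.mul hΦmeas.aemeasurable
    have CS := ENNReal.lintegral_mul_le_Lp_mul_Lq ν
      Real.HolderConjugate.two_two hFmeas hGmeas
    simp only [Pi.mul_apply] at CS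
    have hF2 : ∀ y, ((K x y * w y) ^ ((1:ℝ)/2)) ^ (2:ℝ) = K x y * w y := by
      intro y
      rw [← ENNReal.rpow_mul]
      norm_num
    have hG2 : ∀ y, ((K x y * w y) ^ ((1:ℝ)/2) * Φ y) ^ (2:ℝ)
        = K x y * w y * Φ y ^ (2:ℝ) := by
      intro y
      rw [ENNReal.mul_rpow_of_nonneg _ _ (by norm_num : (0:ℝ) ≤ 2), ← ENNReal.rpow_mul]
      norm_num
    have hbnd1 : ∫⁻ y, K x y * w y ∂ν ≤ 1 :=
      kernel_bnd_fst fT fr hfTc hfTpos hfrb hμ hxm.1 hxm.2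
    have step : ∫⁻ y, (K x y * w y) ^ ((1:ℝ)/2) *
        ((K x y * w y) ^ ((1:ℝ)/2) * Φ y) ∂ν
        ≤ (∫⁻ y, K x y * w y * Φ y ^ (2:ℝ) ∂ν) ^ ((1:ℝ)/2) := by
      refine le_trans CS ?_
      have e1 : ∫⁻ y, ((K x y * w y) ^ ((1:ℝ)/2)) ^ (2:ℝ) ∂ν ≤ 1 := by
        rw [lintegral_congr fun y => hF2 y]; exact hbnd1
      have e2 : (∫⁻ y, ((K x y * w y) ^ ((1:ℝ)/2)) ^ (2:ℝ) ∂ν) ^ ((1:ℝ)/2) ≤ 1 := by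
        calc _ ≤ (1:ℝ≥0∞) ^ ((1:ℝ)/2) := ENNReal.rpow_le_rpow e1 (by norm_num)
          _ = 1 := ENNReal.one_rpow _
      calc (∫⁻ y, ((K x y * w y) ^ ((1:ℝ)/2)) ^ (2:ℝ) ∂ν) ^ ((1:ℝ)/2) *
            (∫⁻ y, ((K x y * w y) ^ ((1:ℝ)/2) * Φ y) ^ (2:ℝ) ∂ν) ^ ((1:ℝ)/2)
          ≤ 1 * (∫⁻ y, ((K x y * w y) ^ ((1:ℝ)/2) * Φ y) ^ (2:ℝ) ∂ν) ^ ((1:ℝ)/2) :=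
            mul_le_mul_left e2 _
        _ = (∫⁻ y, K x y * w y * Φ y ^ (2:ℝ) ∂ν) ^ ((1:ℝ)/2) := by
            rw [one_mul, lintegral_congr fun y => hG2 y]
    have h4 : (‖g₀ x‖₊ : ℝ≥0∞) ≤ (∫⁻ y, K x y * w y * Φ y ^ (2:ℝ) ∂ν) ^ ((1:ℝ)/2) :=
      le_trans h1 step
    calc (‖g₀ x‖₊ : ℝ≥0∞) ^ (2:ℝ)
        ≤ ((∫⁻ y, K x y * w y * Φ y ^ (2:ℝ) ∂ν) ^ ((1:ℝ)/2)) ^ (2:ℝ) :=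
          ENNReal.rpow_le_rpow h4 (by norm_num)
      _ = ∫⁻ y, K x y * w y * Φ y ^ (2:ℝ) ∂ν := by
          rw [← ENNReal.rpow_mul]; norm_num
  -- global estimate
  have main : ∫⁻ x, (‖g₀ x‖₊ : ℝ≥0∞) ^ (2:ℝ) ∂(transMeasure xL xR σT)
      ≤ ∫⁻ x, (‖φf x‖₊ : ℝ≥0∞) ^ (2:ℝ) ∂(transMeasure xL xR σT) := by
    rw [hmeq, lintegral_withDensity_eq_lintegral_mul_non_measurable ν hw_meas
        (Filter.Eventually.of_forall hw_lt),
      lintegral_withDensity_eq_lintegral_mul_non_measurable ν hw_meas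
        (Filter.Eventually.of_forall hw_lt)]
    simp only [Pi.mul_apply]
    calc ∫⁻ x, w x * (‖g₀ x‖₊ : ℝ≥0∞) ^ (2:ℝ) ∂ν
        ≤ ∫⁻ x, w x * ∫⁻ y, K x y * w y * Φ y ^ (2:ℝ) ∂ν ∂ν := by
          refine lintegral_mono_ae ?_
          filter_upwards [ae_restrict_mem measurableSet_Icc] with x hxm
          exact mul_le_mul_right (key x hxm) _
      _ = ∫⁻ x, ∫⁻ y, w x * (K x y * w y * Φ y ^ (2:ℝ)) ∂ν ∂ν := by
          refine lintegral_congr fun x => ?_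
          rw [lintegral_const_mul' _ _ (hw_lt x).ne]
      _ = ∫⁻ y, ∫⁻ x, w x * (K x y * w y * Φ y ^ (2:ℝ)) ∂ν ∂ν := by
          refine lintegral_lintegral_swap ?_
          refine Measurable.aemeasurable ?_
          exact (hw_meas.comp measurable_fst).mul
            (((ENNReal.measurable_ofReal.comp hk_meas).mul
              (hw_meas.comp measurable_snd)).mul
              ((hΦmeas.comp measurable_snd).pow_const _))
      _ = ∫⁻ y, (∫⁻ x, w x * K x y ∂ν) * (w y * Φ y ^ (2:ℝ)) ∂ν := by
          refine lintegral_congr fun y => ?_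
          rw [← lintegral_mul_const' _ _ (by
            exact ENNReal.mul_ne_top (hw_lt y).ne
              (ENNReal.rpow_ne_top_of_nonneg (by norm_num) ENNReal.coe_ne_top))]
          refine lintegral_congr fun x => ?_
          ring
      _ ≤ ∫⁻ y, 1 * (w y * Φ y ^ (2:ℝ)) ∂ν := by
          refine lintegral_mono_ae ?_
          filter_upwards [ae_restrict_mem measurableSet_Icc] with y hym
          exact mul_le_mul_left (kernel_bnd_snd fT fr hfTc hfTpos hfrb hμ hym.1 hym.2) _
      _ = ∫⁻ y, w y * (‖φf y‖₊ : ℝ≥0∞) ^ (2:ℝ) ∂ν := by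
          refine lintegral_congr fun y => ?_
          rw [one_mul, hΦ]
  -- conclude
  rw [eLpNorm_eq_lintegral_rpow_enorm_toReal (by norm_num) (by norm_num),
    eLpNorm_eq_lintegral_rpow_enorm_toReal (by norm_num) (by norm_num)]
  simp only [ENNReal.toReal_ofNat]
  exact ENNReal.rpow_le_rpow main (by norm_num)

set_option maxHeartbeats 1000000 in
set_option synthInstance.maxHeartbeats 400000 in
/-- **Convergence of the source-iteration expansion** (Corollary 4.2): with
`ψ⁽⁰⁾(·,μ) = A_μ(q/σ_r) + b_μ` and `ψ⁽ᵖ⁾(·,μ) = A_μ(I^δ(ψ⁽ᵖ⁻¹⁾))` for `p ≥ 1`,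
where `I^δ(ψ) = (1/|S^δ|)∫_{S^δ}ψ(·,μ)dμ` with `|S^δ| = 2(1−δ)`: the norms
`‖ψ⁽ᵖ⁾(·,μ)‖` are bounded uniformly in `μ ∈ S^δ` and `p`, for each `μ ∈ S^δ` the
series `Σ_p λ^p ψ⁽ᵖ⁾(·,μ)` converges in `L²(Ω;σ_T)` to `ψ̄(·,μ)`, and the limit
satisfies `ψ̄(·,μ) = A_μ(λ I^δ(ψ̄) + q/σ_r) + b_μ`. -/

theorem source_iteration_expansion_converges
    (xL xR : ℝ) (hx : xL < xR)
    (σT σr : ℝ → ℝ)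
    (hσT : ContinuousOn σT (Set.Icc xL xR)) (hσT_pos : ∀ x ∈ Set.Icc xL xR, 0 < σT x)
    (hσr : ContinuousOn σr (Set.Icc xL xR))
    (hσr_pos : ∀ x ∈ Set.Icc xL xR, 0 < σr x ∧ σr x ≤ σT x)
    (A : ℝ → Lp ℝ 2 (transMeasure xL xR σT) →L[ℝ] Lp ℝ 2 (transMeasure xL xR σT))
    (hA : ∀ μ : ℝ, μ ∈ Set.Icc (-1 : ℝ) 1 → μ ≠ 0 →
      ∀ φ : Lp ℝ 2 (transMeasure xL xR σT),
        ∀ᵐ x ∂(transMeasure xL xR σT),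
          (A μ φ) x = ∫ y in Set.Icc xL xR, transKernel σT σr μ x y * φ y * σT y)
    (δ : ℝ) (hδ : δ ∈ Set.Ioo (0 : ℝ) 1)
    (lam : ℝ) (hlam : lam ∈ Set.Ioo (0 : ℝ) 1)
    -- the source `q`, nonnegative and bounded, with `q/σ_r ∈ L²(Ω;σ_T)` represented by `qf`
    (q : ℝ → ℝ) (Cq : ℝ) (hq : ∀ x ∈ Set.Icc xL xR, 0 ≤ q x ∧ q x ≤ Cq)
    (qf : Lp ℝ 2 (transMeasure xL xR σT))
    (hqf : ∀ᵐ x ∂(transMeasure xL xR σT), qf x = q x / σr x)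
    -- bounded boundary data `ψbd` (`= ψ_L` on `(δ,1]`, `= ψ_R` on `[−1,−δ)`) and the
    -- boundary term `b_μ = B_μ ψbd(μ)` as an element of `L²(Ω;σ_T)`
    (ψbd : ℝ → ℝ) (Cb : ℝ)
    (hψbd : ∀ μ ∈ Set.Ico (-1 : ℝ) (-δ) ∪ Set.Ioc δ 1, |ψbd μ| ≤ Cb)
    (bel : ℝ → Lp ℝ 2 (transMeasure xL xR σT))
    (hbel : ∀ μ ∈ Set.Ico (-1 : ℝ) (-δ) ∪ Set.Ioc δ 1,
      ∀ᵐ x ∂(transMeasure xL xR σT), (bel μ) x = transB xL xR σT μ x * ψbd μ)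
    -- the source-iteration sequence `Ψ p μ = ψ⁽ᵖ⁾(·,μ)`
    (Ψ : ℕ → ℝ → Lp ℝ 2 (transMeasure xL xR σT))
    (hΨint : ∀ p, IntegrableOn (Ψ p) (Set.Ico (-1 : ℝ) (-δ) ∪ Set.Ioc δ 1) volume)
    (hΨ0 : ∀ μ ∈ Set.Ico (-1 : ℝ) (-δ) ∪ Set.Ioc δ 1, Ψ 0 μ = A μ qf + bel μ)
    (hΨrec : ∀ p : ℕ, ∀ μ ∈ Set.Ico (-1 : ℝ) (-δ) ∪ Set.Ioc δ 1,
      Ψ (p + 1) μ = A μ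
        ((2 * (1 - δ))⁻¹ • ∫ ν in Set.Ico (-1 : ℝ) (-δ) ∪ Set.Ioc δ 1, Ψ p ν)) :
    (∃ Cs : ℝ, ∀ p : ℕ, ∀ μ ∈ Set.Ico (-1 : ℝ) (-δ) ∪ Set.Ioc δ 1, ‖Ψ p μ‖ ≤ Cs) ∧
    (∀ μ ∈ Set.Ico (-1 : ℝ) (-δ) ∪ Set.Ioc δ 1,
      HasSum (fun p : ℕ => lam ^ p • Ψ p μ) (∑' p : ℕ, lam ^ p • Ψ p μ)) ∧
    IntegrableOn (fun μ => ∑' p : ℕ, lam ^ p • Ψ p μ)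
      (Set.Ico (-1 : ℝ) (-δ) ∪ Set.Ioc δ 1) volume ∧
    (∀ μ ∈ Set.Ico (-1 : ℝ) (-δ) ∪ Set.Ioc δ 1,
      (∑' p : ℕ, lam ^ p • Ψ p μ)
        = A μ (lam • ((2 * (1 - δ))⁻¹ •
            ∫ ν in Set.Ico (-1 : ℝ) (-δ) ∪ Set.Ioc δ 1, ∑' p : ℕ, lam ^ p • Ψ p ν) + qf)
          + bel μ) := by
  classical
  obtain ⟨hδ0, hδ1⟩ := hδ
  obtain ⟨hlam0, hlam1⟩ := hlam
  set S : Set ℝ := Set.Ico (-1 : ℝ) (-δ) ∪ Set.Ioc δ 1 with hS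
  have hSmeas : MeasurableSet S := measurableSet_Ico.union measurableSet_Ioc
  have hSmem : ∀ μ ∈ S, μ ∈ Set.Icc (-1 : ℝ) 1 ∧ μ ≠ 0 := by
    intro μ hμ
    rcases hμ with h | h
    · exact ⟨⟨h.1, by linarith [h.2]⟩, by intro e; rw [e] at h; linarith [h.2]⟩
    · exact ⟨⟨by linarith [h.1], h.2⟩, by intro e; rw [e] at h; linarith [h.1]⟩
  have h2δ : (0:ℝ) < 2 * (1 - δ) := by linarith
  have hvolS : volume S = ENNReal.ofReal (2 * (1 - δ)) := by
    rw [hS, measure_union ?_ measurableSet_Ioc, Real.volume_Ico, Real.volume_Ioc,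
      ← ENNReal.ofReal_add (by linarith) (by linarith)]
    · congr 1; ring
    · refine Set.disjoint_left.2 fun a ha hb => ?_
      have h1 : a < -δ := ha.2
      have h2 : δ < a := hb.1
      linarith
  have hvolS_ne : volume S ≠ ⊤ := by rw [hvolS]; exact ENNReal.ofReal_ne_top
  have hvolS_toReal : (volume S).toReal = 2 * (1 - δ) := by
    rw [hvolS, ENNReal.toReal_ofReal h2δ.le]
  haveI hfinS : IsFiniteMeasure (volume.restrict S) :=
    ⟨by rw [Measure.restrict_apply_univ]; exact hvolS_ne.lt_top⟩
  haveI hfinm : IsFiniteMeasure (transMeasure xL xR σT) := by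
    constructor
    obtain ⟨C, hC⟩ := isCompact_Icc.exists_bound_of_continuousOn hσT
    unfold transMeasure
    rw [withDensity_apply _ MeasurableSet.univ, Measure.restrict_univ]
    calc ∫⁻ x in Set.Icc xL xR, ENNReal.ofReal (σT x) ∂volume
        ≤ ∫⁻ _x in Set.Icc xL xR, ENNReal.ofReal C ∂volume := by
          refine lintegral_mono_ae ?_
          filter_upwards [ae_restrict_mem measurableSet_Icc] with x hxm
          exact ENNReal.ofReal_le_ofReal
            (le_trans (le_abs_self _) (by simpa using hC x hxm))
      _ = ENNReal.ofReal C * volume (Set.Icc xL xR) := setLIntegral_const _ _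
      _ < ⊤ := ENNReal.mul_lt_top ENNReal.ofReal_lt_top
          (by rw [Real.volume_Icc]; exact ENNReal.ofReal_lt_top)
  have hae_mem : ∀ᵐ x ∂(transMeasure xL xR σT), x ∈ Set.Icc xL xR := by
    have hac : transMeasure xL xR σT ≪ volume.restrict (Set.Icc xL xR) := withDensity_absolutelyContinuous _ _
    exact hac.ae_le (ae_restrict_mem measurableSet_Icc)
  -- contraction property of A μ
  have hAc : ∀ μ ∈ S, ∀ φ : Lp ℝ 2 (transMeasure xL xR σT), ‖A μ φ‖ ≤ ‖φ‖ := by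
    intro μ hμS φ
    obtain ⟨hμI, hμne⟩ := hSmem μ hμS
    have hrep := hA μ hμI hμne φ
    rw [Lp.norm_def, Lp.norm_def]
    refine ENNReal.toReal_mono (Lp.eLpNorm_ne_top φ) ?_
    rw [eLpNorm_congr_ae hrep]
    exact contraction_eLpNorm xL xR hx σT σr hσT hσT_pos hσr hσr_pos hμne _
      (Lp.stronglyMeasurable φ)
  -- bound on the boundary term
  have hCb0 : 0 ≤ Cb := le_trans (abs_nonneg _) (hψbd 1 (Or.inr ⟨hδ1, le_refl 1⟩))
  set Cb' : ℝ := measureUnivNNReal (transMeasure xL xR σT) ^ ((2:ℝ≥0∞)).toReal⁻¹ * Cb with hCb'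
  have hCb'0 : 0 ≤ Cb' := by
    rw [hCb']
    positivity
  have hbelle : ∀ μ ∈ S, ‖bel μ‖ ≤ Cb' := by
    intro μ hμS
    refine Lp.norm_le_of_ae_bound hCb0 ?_
    filter_upwards [hbel μ hμS, hae_mem] with x hxv hxm
    rw [hxv, Real.norm_eq_abs, abs_mul]
    have hB : |transB xL xR σT μ x| ≤ 1 := by
      unfold transB
      split
      · rename_i hpos
        rw [abs_of_nonneg (Real.exp_nonneg _)]
        refine Real.exp_le_one_iff.2 ?_
        have hint : 0 ≤ ∫ y in xL..x, σT y :=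
          intervalIntegral.integral_nonneg hxm.1
            fun u hu => (hσT_pos u ⟨hu.1, le_trans hu.2 hxm.2⟩).le
        have h1μ : 0 ≤ 1 / μ := (one_div_pos.2 hpos).le
        nlinarith
      · rename_i hpos
        rw [abs_of_nonneg (Real.exp_nonneg _)]
        refine Real.exp_le_one_iff.2 ?_
        have hμne : μ ≠ 0 := (hSmem μ hμS).2
        have hneg : μ < 0 := lt_of_le_of_ne (not_lt.1 hpos) hμne
        have hint : 0 ≤ ∫ y in x..xR, σT y :=
          intervalIntegral.integral_nonneg hxm.2
            fun u hu => (hσT_pos u ⟨le_trans hxm.1 hu.1, hu.2⟩).le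
        have h1μ : 1 / μ ≤ 0 := (one_div_neg.2 hneg).le
        nlinarith
    calc |transB xL xR σT μ x| * |ψbd μ| ≤ 1 * Cb :=
        mul_le_mul hB (hψbd μ hμS) (abs_nonneg _) one_pos.le
      _ = Cb := one_mul Cb
  -- uniform bound on the iterates
  set Cs : ℝ := ‖qf‖ + Cb' with hCs
  have hCs0 : 0 ≤ Cs := add_nonneg (norm_nonneg _) hCb'0
  have hbound : ∀ p : ℕ, ∀ μ ∈ S, ‖Ψ p μ‖ ≤ Cs := by
    intro p
    induction p with
    | zero =>
      intro μ hμS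
      rw [hΨ0 μ hμS]
      exact le_trans (norm_add_le _ _) (add_le_add (hAc μ hμS qf) (hbelle μ hμS))
    | succ p ih =>
      intro μ hμS
      rw [hΨrec p μ hμS]
      refine le_trans (hAc μ hμS _) ?_
      rw [norm_smul, Real.norm_eq_abs, abs_of_nonneg (inv_nonneg.2 h2δ.le)]
      have hIle : ‖∫ ν in S, Ψ p ν‖ ≤ Cs * (volume S).toReal :=
        norm_setIntegral_le_of_norm_le_const hvolS_ne.lt_top
          (fun ν hν => ih ν hν)
      rw [hvolS_toReal] at hIle
      calc (2 * (1 - δ))⁻¹ * ‖∫ ν in S, Ψ p ν‖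
          ≤ (2 * (1 - δ))⁻¹ * (Cs * (2 * (1 - δ))) :=
            mul_le_mul_of_nonneg_left hIle (inv_nonneg.2 h2δ.le)
        _ = Cs := by field_simp
  -- summability
  have hsummable : ∀ μ ∈ S, Summable fun p : ℕ => lam ^ p • Ψ p μ := by
    intro μ hμS
    refine Summable.of_norm_bounded (g := fun p => Cs * lam ^ p)
      ((summable_geometric_of_lt_one hlam0.le hlam1).mul_left Cs) ?_
    intro p
    rw [norm_smul, Real.norm_eq_abs, abs_of_nonneg (pow_nonneg hlam0.le p), mul_comm]
    exact mul_le_mul_of_nonneg_right (hbound p μ hμS) (pow_nonneg hlam0.le p)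
  have htbound : ∀ μ ∈ S, ‖∑' p : ℕ, lam ^ p • Ψ p μ‖ ≤ Cs * (1 - lam)⁻¹ := by
    intro μ hμS
    have hns : Summable fun p : ℕ => ‖lam ^ p • Ψ p μ‖ := by
      refine Summable.of_nonneg_of_le (fun p => norm_nonneg _) ?_
        ((summable_geometric_of_lt_one hlam0.le hlam1).mul_left Cs)
      intro p
      rw [norm_smul, Real.norm_eq_abs, abs_of_nonneg (pow_nonneg hlam0.le p), mul_comm]
      exact mul_le_mul_of_nonneg_right (hbound p μ hμS) (pow_nonneg hlam0.le p)
    refine le_trans (norm_tsum_le_tsum_norm hns) ?_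
    calc ∑' p : ℕ, ‖lam ^ p • Ψ p μ‖
        ≤ ∑' p : ℕ, Cs * lam ^ p := by
          refine hns.tsum_le_tsum ?_ ((summable_geometric_of_lt_one hlam0.le hlam1).mul_left Cs)
          intro p
          rw [norm_smul, Real.norm_eq_abs, abs_of_nonneg (pow_nonneg hlam0.le p), mul_comm]
          exact mul_le_mul_of_nonneg_right (hbound p μ hμS) (pow_nonneg hlam0.le p)
      _ = Cs * (1 - lam)⁻¹ := by
          rw [tsum_mul_left, tsum_geometric_of_lt_one hlam0.le hlam1]
  have hAESMsum : ∀ p : ℕ, AEStronglyMeasurable (fun ν => lam ^ p • Ψ p ν)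
      (volume.restrict S) := fun p => (hΨint p).aestronglyMeasurable.const_smul (lam ^ p)
  have hTmeas : AEStronglyMeasurable (fun ν => ∑' p : ℕ, lam ^ p • Ψ p ν)
      (volume.restrict S) := by
    refine aestronglyMeasurable_of_tendsto_ae Filter.atTop
      (f := fun n ν => ∑ p ∈ Finset.range n, lam ^ p • Ψ p ν)
      (fun n => Finset.aestronglyMeasurable_fun_sum _ fun p _ => hAESMsum p) ?_
    filter_upwards [ae_restrict_mem hSmeas] with ν hν
    exact (hsummable ν hν).hasSum.tendsto_sum_nat
  have hTint : IntegrableOn (fun μ => ∑' p : ℕ, lam ^ p • Ψ p μ) S volume := by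
    refine ⟨hTmeas, ?_⟩
    refine HasFiniteIntegral.of_bounded (C := Cs * (1 - lam)⁻¹) ?_
    filter_upwards [ae_restrict_mem hSmeas] with ν hν
    exact htbound ν hν
  -- interchange of sum and integral
  have hlintb : ∑' p : ℕ, ∫⁻ a in S, ‖lam ^ p • Ψ p a‖₊ ∂volume ≠ ⊤ := by
    have hb : ∀ p : ℕ, ∫⁻ a in S, (‖lam ^ p • Ψ p a‖₊ : ℝ≥0∞) ∂volume
        ≤ ENNReal.ofReal Cs * ENNReal.ofReal lam ^ p * volume S := by
      intro p
      calc ∫⁻ a in S, (‖lam ^ p • Ψ p a‖₊ : ℝ≥0∞) ∂volume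
          ≤ ∫⁻ _a in S, ENNReal.ofReal (Cs * lam ^ p) ∂volume := by
            refine lintegral_mono_ae ?_
            filter_upwards [ae_restrict_mem hSmeas] with a ha
            rw [← enorm_eq_nnnorm, ← ofReal_norm]
            refine ENNReal.ofReal_le_ofReal ?_
            rw [norm_smul, Real.norm_eq_abs, abs_of_nonneg (pow_nonneg hlam0.le p), mul_comm]
            exact mul_le_mul_of_nonneg_right (hbound p a ha) (pow_nonneg hlam0.le p)
        _ = ENNReal.ofReal (Cs * lam ^ p) * volume S := setLIntegral_const _ _
        _ = ENNReal.ofReal Cs * ENNReal.ofReal lam ^ p * volume S := by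
            rw [ENNReal.ofReal_mul hCs0, ENNReal.ofReal_pow hlam0.le]
    have hgeo : ∑' p : ℕ, ENNReal.ofReal Cs * ENNReal.ofReal lam ^ p * volume S
        = ENNReal.ofReal Cs * (1 - ENNReal.ofReal lam)⁻¹ * volume S := by
      rw [ENNReal.tsum_mul_right, ENNReal.tsum_mul_left, ENNReal.tsum_geometric]
    refine ne_top_of_le_ne_top ?_ (ENNReal.tsum_le_tsum hb)
    rw [hgeo]
    have h1 : (1 : ℝ≥0∞) - ENNReal.ofReal lam ≠ 0 := by
      intro h
      have := tsub_eq_zero_iff_le.1 h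
      exact absurd this (not_le.2 (ENNReal.ofReal_lt_one.2 hlam1))
    exact ENNReal.mul_ne_top (ENNReal.mul_ne_top ENNReal.ofReal_ne_top
      (ENNReal.inv_ne_top.2 h1)) hvolS_ne
  have hswap : ∫ ν in S, (∑' p : ℕ, lam ^ p • Ψ p ν)
      = ∑' p : ℕ, ∫ ν in S, lam ^ p • Ψ p ν :=
    integral_tsum hAESMsum hlintb
  refine ⟨⟨Cs, hbound⟩, fun μ hμS => (hsummable μ hμS).hasSum, hTint, ?_⟩
  -- the fixed-point identity
  intro μ hμS
  have hsum := hsummable μ hμS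
  rw [hsum.tsum_eq_zero_add]
  simp only [pow_zero, one_smul]
  rw [hΨ0 μ hμS]
  have hVle : ∀ p : ℕ, ‖∫ ν in S, Ψ p ν‖ ≤ Cs * (2 * (1 - δ)) := by
    intro p
    have : ‖∫ ν in S, Ψ p ν‖ ≤ Cs * (volume S).toReal :=
      norm_setIntegral_le_of_norm_le_const hvolS_ne.lt_top
      (fun ν hν => hbound p ν hν)
    rwa [hvolS_toReal] at this
  have hVsum : Summable fun p : ℕ =>
      lam ^ (p + 1) • ((2 * (1 - δ))⁻¹ • ∫ ν in S, Ψ p ν) := by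
    refine Summable.of_norm_bounded (g := fun p => (Cs * lam) * lam ^ p)
      ((summable_geometric_of_lt_one hlam0.le hlam1).mul_left (Cs * lam)) ?_
    intro p
    rw [norm_smul, norm_smul, Real.norm_eq_abs, Real.norm_eq_abs,
      abs_of_nonneg (pow_nonneg hlam0.le _), abs_of_nonneg (inv_nonneg.2 h2δ.le)]
    calc lam ^ (p + 1) * ((2 * (1 - δ))⁻¹ * ‖∫ ν in S, Ψ p ν‖)
        ≤ lam ^ (p + 1) * ((2 * (1 - δ))⁻¹ * (Cs * (2 * (1 - δ)))) := by
          refine mul_le_mul_of_nonneg_left ?_ (pow_nonneg hlam0.le _)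
          exact mul_le_mul_of_nonneg_left (hVle p) (inv_nonneg.2 h2δ.le)
      _ = (Cs * lam) * lam ^ p := by
          field_simp
          ring
  have hVsum2 : Summable fun p : ℕ =>
      lam ^ p • ((2 * (1 - δ))⁻¹ • ∫ ν in S, Ψ p ν) := by
    refine Summable.of_norm_bounded (g := fun p => Cs * lam ^ p)
      ((summable_geometric_of_lt_one hlam0.le hlam1).mul_left Cs) ?_
    intro p
    rw [norm_smul, norm_smul, Real.norm_eq_abs, Real.norm_eq_abs,
      abs_of_nonneg (pow_nonneg hlam0.le _), abs_of_nonneg (inv_nonneg.2 h2δ.le)]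
    calc lam ^ p * ((2 * (1 - δ))⁻¹ * ‖∫ ν in S, Ψ p ν‖)
        ≤ lam ^ p * ((2 * (1 - δ))⁻¹ * (Cs * (2 * (1 - δ)))) := by
          refine mul_le_mul_of_nonneg_left ?_ (pow_nonneg hlam0.le _)
          exact mul_le_mul_of_nonneg_left (hVle p) (inv_nonneg.2 h2δ.le)
      _ = Cs * lam ^ p := by
          field_simp
  have htail : (∑' p : ℕ, lam ^ (p + 1) • Ψ (p + 1) μ)
      = A μ (lam • ((2 * (1 - δ))⁻¹ • ∫ ν in S, ∑' p : ℕ, lam ^ p • Ψ p ν)) := by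
    calc (∑' p : ℕ, lam ^ (p + 1) • Ψ (p + 1) μ)
        = ∑' p : ℕ, A μ (lam ^ (p + 1) • ((2 * (1 - δ))⁻¹ • ∫ ν in S, Ψ p ν)) := by
          refine tsum_congr fun p => ?_
          rw [hΨrec p μ hμS]
          simp only [_root_.map_smul]
      _ = A μ (∑' p : ℕ, lam ^ (p + 1) • ((2 * (1 - δ))⁻¹ • ∫ ν in S, Ψ p ν)) :=
          ((A μ).map_tsum hVsum).symm
      _ = A μ (lam • ((2 * (1 - δ))⁻¹ • ∫ ν in S, ∑' p : ℕ, lam ^ p • Ψ p ν)) := by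
          congr 1
          have hre : ∀ p : ℕ, lam ^ (p + 1) • ((2 * (1 - δ))⁻¹ • ∫ ν in S, Ψ p ν)
              = lam • ((2 * (1 - δ))⁻¹ • (lam ^ p • ∫ ν in S, Ψ p ν)) := by
            intro p
            simp only [smul_smul]
            congr 1
            ring
          rw [tsum_congr hre]
          have hsum3 : Summable fun p : ℕ => lam ^ p • ∫ ν in S, Ψ p ν := by
            refine Summable.of_norm_bounded (g := fun p => (Cs * (2 * (1 - δ))) * lam ^ p)
              ((summable_geometric_of_lt_one hlam0.le hlam1).mul_left _) ?_
            intro p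
            rw [norm_smul, Real.norm_eq_abs, abs_of_nonneg (pow_nonneg hlam0.le _), mul_comm]
            exact mul_le_mul_of_nonneg_right (hVle p) (pow_nonneg hlam0.le _)
          rw [((hsum3.hasSum.const_smul ((2 * (1 - δ))⁻¹ : ℝ)).const_smul lam).tsum_eq]
          congr 2
          rw [hswap]
          refine tsum_congr fun p => ?_
          rw [MeasureTheory.integral_smul]
  rw [htail, map_add]
  abel
end

section
/- Variance of the norm of a sum of independent Banach-valued random vectors (Lemma 'deviates from mean'): let B be a separable Banach space and X_1,…,X_m independent B-valued random vectors with E‖X_j‖²<∞ for each j. Set S_m = Σ_{j=1}^m X_j. Then E|‖S_m‖ − E‖S_m‖|² ≤ 4·Σ_{j=1}^m E‖X_j‖². -/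
open MeasureTheory ProbabilityTheory

section helpers
-- (assume lip_abs_le, var_bound, iIndepFun_comp_embedding, indep_integral_eq available)

-- helper: Lipschitz abs bound
lemma lip_abs_le {B : Type*} [NormedAddCommGroup B] {f : B → ℝ}
    (hf : LipschitzWith 1 f) (u : B) : |f u| ≤ |f 0| + ‖u‖ := by
  have h := hf.dist_le_mul u 0
  simp only [NNReal.coe_one, one_mul, dist_zero_right, Real.dist_eq] at h
  calc |f u| ≤ |f u - f 0| + |f 0| := by
        have := abs_sub_abs_le_abs_sub (f u) (f 0); linarith [abs_abs (f u)]
    _ ≤ |f 0| + ‖u‖ := by linarith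

-- variance-vs-shifted-second-moment
lemma var_bound {α : Type*} [MeasurableSpace α] (β : Measure α) [IsProbabilityMeasure β]
    {Y : α → ℝ} (hY : MemLp Y 2 β) (c d : ℝ) :
    ∫ x, (Y x - c)^2 ∂β ≤ ∫ x, (Y x - d)^2 ∂β + ((∫ x, Y x ∂β) - c)^2 := by
  have hY1 : Integrable Y β := hY.integrable one_le_two
  have hY2 : Integrable (fun x => Y x ^ 2) β := hY.integrable_sq
  have e1 : ∀ c : ℝ, ∫ x, (Y x - c)^2 ∂β
      = (∫ x, Y x ^ 2 ∂β) - 2*c*(∫ x, Y x ∂β) + c^2 := by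
    intro c
    have h : (fun x => (Y x - c)^2) = fun x => (Y x ^ 2 - (2*c)*Y x) + c^2 := by
      funext x; ring
    have hsub : Integrable (fun x => Y x ^ 2 - 2 * c * Y x) β := by
      exact hY2.sub (hY1.const_mul _)
    rw [h, integral_add hsub (integrable_const _),
      integral_sub hY2 (hY1.const_mul (2*c)), integral_const_mul, integral_const]
    simp [measure_univ]
  rw [e1 c, e1 d]
  nlinarith [sq_nonneg ((∫ x, Y x ∂β) - d)]

lemma iIndepFun_comp_embedding {Ω ι ι' β : Type*} [MeasurableSpace Ω] {μ : Measure Ω}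
    [MeasurableSpace β] {f : ι → Ω → β} (e : ι' ↪ ι)
    (h : iIndepFun f μ) :
    iIndepFun (fun i => f (e i)) μ := by
  classical
  rw [iIndepFun_iff_measure_inter_preimage_eq_mul] at h ⊢
  intro S sets hsets
  set sets' : ι → Set β := fun i => ⋂ j ∈ S.filter (fun j => e j = i), sets j with hsets'
  have key1 : ∀ j ∈ S, sets' (e j) = sets j := by
    intro j hj
    have hfil : S.filter (fun j' => e j' = e j) = {j} := by
      ext k
      simp only [Finset.mem_filter, Finset.mem_singleton, e.injective.eq_iff]
      exact ⟨fun hk => hk.2, fun hk => ⟨hk ▸ hj, hk⟩⟩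
    rw [hsets']
    simp only [hfil]
    ext x; simp
  have hmeas' : ∀ i, i ∈ S.map e → MeasurableSet (sets' i) := by
    intro i _
    exact Finset.measurableSet_biInter _ fun j hj => hsets j (Finset.mem_of_mem_filter j hj)
  have h2 := h (S.map e) hmeas'
  have hInter : (⋂ i ∈ S.map e, f i ⁻¹' sets' i) = ⋂ j ∈ S, f (e j) ⁻¹' sets j := by
    ext ω
    simp only [Set.mem_iInter, Finset.mem_map]
    constructor
    · intro hw j hj
      have := hw (e j) ⟨j, hj, rfl⟩
      rwa [key1 j hj] at this
    · rintro hw i ⟨j, hj, rfl⟩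
      rw [key1 j hj]; exact hw j hj
  rw [hInter, Finset.prod_map] at h2
  rw [Finset.prod_congr rfl (fun j hj => by rw [key1 j hj])] at h2
  exact h2

-- transfer integral of a function of two independent RVs to iterated integral
lemma indep_integral_eq {Θ B : Type*} [MeasurableSpace Θ] [MeasurableSpace B]
    {P : Measure Θ} [IsProbabilityMeasure P] {A W : Θ → B}
    (hA : Measurable A) (hW : Measurable W) (hind : IndepFun A W P)
    {φ : B × B → ℝ} (hφ : StronglyMeasurable φ)
    (hint : Integrable (fun θ => φ (A θ, W θ)) P) :
    ∫ θ, φ (A θ, W θ) ∂P = ∫ a, ∫ x, φ (a, x) ∂(P.map W) ∂(P.map A) := by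
  have hmap : P.map (fun θ => (A θ, W θ)) = (P.map A).prod (P.map W) :=
    (indepFun_iff_map_prod_eq_prod_map_map hA.aemeasurable hW.aemeasurable).mp hind
  have hpm : Measurable fun θ => (A θ, W θ) := hA.prodMk hW
  haveI : IsProbabilityMeasure (P.map A) := Measure.isProbabilityMeasure_map hA.aemeasurable
  haveI : IsProbabilityMeasure (P.map W) := Measure.isProbabilityMeasure_map hW.aemeasurable
  have hint2 : Integrable φ ((P.map A).prod (P.map W)) := by
    rw [← hmap]
    exact (integrable_map_measure hφ.aestronglyMeasurable hpm.aemeasurable).mpr hint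
  rw [← integral_prod φ hint2, ← hmap, integral_map hpm.aemeasurable hφ.aestronglyMeasurable]
end helpers

lemma key_lip {B : Type*} [NormedAddCommGroup B] [NormedSpace ℝ B]
    [TopologicalSpace.SeparableSpace B] [MeasurableSpace B] [BorelSpace B]
    (m : ℕ) {Θ : Type*} [MeasurableSpace Θ] (P : Measure Θ) [IsProbabilityMeasure P]
    (X : Fin m → Θ → B) (hmeas : ∀ j, Measurable (X j))
    (hindep : iIndepFun X P)
    (hL2 : ∀ j, Integrable (fun θ => ‖X j θ‖ ^ 2) P)
    (f : B → ℝ) (hf : LipschitzWith 1 f) :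
    (∫ θ, (f (∑ j, X j θ) - ∫ θ', f (∑ j, X j θ') ∂P) ^ 2 ∂P)
      ≤ ∑ j, ∫ θ, ‖X j θ‖ ^ 2 ∂P := by
  haveI : SecondCountableTopology B := UniformSpace.secondCountable_of_separable B
  induction m generalizing f with
  | zero => simp
  | succ m IH =>
    classical
    set A : Θ → B := fun θ => ∑ j : Fin m, X j.castSucc θ with hA
    set W : Θ → B := X (Fin.last m) with hW
    have hAmeas : Measurable A := Finset.measurable_sum _ fun j _ => hmeas _
    have hWmeas : Measurable W := hmeas _
    have hsumapp : ∀ θ, (∑ j, X j θ) = A θ + W θ := fun θ => by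
      rw [Fin.sum_univ_castSucc]
    -- independence of A and W
    have hindAW : IndepFun A W P := by
      have h0 : IndepFun (∑ j ∈ Finset.univ.erase (Fin.last m), X j) (X (Fin.last m)) P :=
        hindep.indepFun_finset_sum_of_notMem hmeas (Finset.notMem_erase _ _)
      have heq : (∑ j ∈ Finset.univ.erase (Fin.last m), X j) = A := by
        funext θ
        have h2 : (∑ j ∈ Finset.univ.erase (Fin.last m), X j) θ + X (Fin.last m) θ
            = A θ + X (Fin.last m) θ := by
          rw [Finset.sum_apply]
          rw [Finset.sum_erase_add _ _ (Finset.mem_univ _), Fin.sum_univ_castSucc]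
        exact add_right_cancel h2
      rwa [heq] at h0
    set α : Measure B := P.map A with hα
    set β : Measure B := P.map W with hβ
    haveI : IsProbabilityMeasure α := Measure.isProbabilityMeasure_map hAmeas.aemeasurable
    haveI : IsProbabilityMeasure β := Measure.isProbabilityMeasure_map hWmeas.aemeasurable
    -- second moment of β
    have hWβ : Integrable (fun x : B => ‖x‖ ^ 2) β := by
      rw [hβ, integrable_map_measure ((by fun_prop : Continuous fun x : B => ‖x‖ ^ 2).aestronglyMeasurable)
        hWmeas.aemeasurable]
      exact hL2 (Fin.last m)
    have hnormβ2 : MemLp (fun x : B => ‖x‖) 2 β :=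
      (memLp_two_iff_integrable_sq continuous_norm.aestronglyMeasurable).mpr hWβ
    have hnormβ1 : Integrable (fun x : B => ‖x‖) β := hnormβ2.integrable one_le_two
    -- the conditioned function g
    set g : B → ℝ := fun a => ∫ x, f (a + x) ∂β with hg
    have hfx_bound : ∀ a x : B, |f (a + x)| ≤ |f a| + ‖x‖ := by
      intro a x
      have h := hf.dist_le_mul (a + x) a
      simp only [NNReal.coe_one, one_mul, Real.dist_eq, dist_eq_norm, add_sub_cancel_left, Real.norm_eq_abs] at h
      have := abs_sub_abs_le_abs_sub (f (a + x)) (f a)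
      linarith
    have hfx_aesm : ∀ a : B, AEStronglyMeasurable (fun x => f (a + x)) β := fun a =>
      (hf.continuous.comp (continuous_const.add continuous_id)).aestronglyMeasurable
    have hfx_memℒp : ∀ a : B, MemLp (fun x => f (a + x)) 2 β := by
      intro a
      refine MemLp.of_le ((memLp_const (|f a|)).add hnormβ2) (hfx_aesm a)
        (ae_of_all _ fun x => ?_)
      have h1 := hfx_bound a x
      have h2 : |f a| + ‖x‖ ≤ ‖|f a| + ‖x‖‖ := le_abs_self _
      calc ‖f (a + x)‖ = |f (a + x)| := rfl
        _ ≤ ‖|f a| + ‖x‖‖ := le_trans h1 h2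
    have hfx_int : ∀ a : B, Integrable (fun x => f (a + x)) β := fun a =>
      (hfx_memℒp a).integrable one_le_two
    have hglip : LipschitzWith 1 g := by
      refine LipschitzWith.of_dist_le_mul fun a b => ?_
      rw [Real.dist_eq, NNReal.coe_one, one_mul]
      have hsub : g a - g b = ∫ x, (f (a + x) - f (b + x)) ∂β :=
        (integral_sub (hfx_int a) (hfx_int b)).symm
      calc |g a - g b| = |∫ x, (f (a + x) - f (b + x)) ∂β| := by rw [hsub]
        _ ≤ ∫ x, |f (a + x) - f (b + x)| ∂β := by
            simpa [Real.norm_eq_abs] using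
              norm_integral_le_integral_norm (μ := β) (fun x => f (a + x) - f (b + x))
        _ ≤ ∫ _x, dist a b ∂β := by
            refine integral_mono ((hfx_int a).sub (hfx_int b)).abs (integrable_const _)
              fun x => ?_
            have h := hf.dist_le_mul (a + x) (b + x)
            simpa [Real.dist_eq, dist_add_right] using h
        _ = dist a b := by simp [measure_univ]
    have hgcont : Continuous g := hglip.continuous
    -- L² bounds on P
    have hXl2 : ∀ j : Fin (m + 1), MemLp (fun θ => ‖X j θ‖) 2 P := fun j =>
      (memLp_two_iff_integrable_sq ((hmeas j).norm.aestronglyMeasurable)).mpr (hL2 j)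
    have hdom : MemLp (fun θ => |f 0| + ∑ j, ‖X j θ‖) 2 P :=
      (memLp_const (|f 0|) : MemLp (fun _ : Θ => |f 0|) 2 P).add
        (memLp_finset_sum (f := fun j θ => ‖X j θ‖) _ fun j _ => hXl2 j :
          MemLp (fun θ => ∑ j, ‖X j θ‖) 2 P)
    have hSmeas : Measurable fun θ => ∑ j, X j θ :=
      Finset.measurable_sum _ fun j _ => hmeas j
    have hF2 : MemLp (fun θ => f (∑ j, X j θ)) 2 P := by
      refine MemLp.of_le hdom (hf.continuous.measurable.comp hSmeas).aestronglyMeasurable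
        (ae_of_all _ fun θ => ?_)
      have h1 := lip_abs_le hf (∑ j, X j θ)
      have h2 : ‖∑ j, X j θ‖ ≤ ∑ j, ‖X j θ‖ := norm_sum_le _ _
      have h3 : |f 0| + ∑ j, ‖X j θ‖ ≤ ‖|f 0| + ∑ j, ‖X j θ‖‖ := le_abs_self _
      calc ‖f (∑ j, X j θ)‖ = |f (∑ j, X j θ)| := rfl
        _ ≤ ‖|f 0| + ∑ j, ‖X j θ‖‖ := by linarith
    set c : ℝ := ∫ θ, f (∑ j, X j θ) ∂P with hc
    have heqF : (fun θ => f (A θ + W θ)) = fun θ => f (∑ j, X j θ) :=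
      funext fun θ => by rw [hsumapp θ]
    have hFint : Integrable (fun θ => f (A θ + W θ)) P := by
      rw [heqF]; exact hF2.integrable one_le_two
    -- transfer 1 : c = ∫ g(A)
    have hφ1 : StronglyMeasurable (fun p : B × B => f (p.1 + p.2)) :=
      (hf.continuous.comp continuous_add).stronglyMeasurable
    have ht1 : ∫ θ, f (A θ + W θ) ∂P = ∫ a, ∫ x, f (a + x) ∂β ∂α :=
      indep_integral_eq hAmeas hWmeas hindAW hφ1 hFint
    have hgA : ∫ a, g a ∂α = ∫ θ, g (A θ) ∂P :=
      integral_map hAmeas.aemeasurable hgcont.aestronglyMeasurable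
    have hcg : c = ∫ θ, g (A θ) ∂P := by
      rw [hc, ← heqF, ht1, ← hgA]
    -- transfer 2 : main quantity
    have hφ2 : StronglyMeasurable (fun p : B × B => (f (p.1 + p.2) - c) ^ 2) :=
      (((hf.continuous.comp continuous_add).sub continuous_const).pow 2).stronglyMeasurable
    have hF2c : Integrable (fun θ => (f (A θ + W θ) - c) ^ 2) P := by
      have h1 : MemLp (fun θ => f (A θ + W θ) - c) 2 P := by
        rw [show (fun θ => f (A θ + W θ) - c) = fun θ => f (∑ j, X j θ) - c by
          funext θ; rw [hsumapp θ]]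
        exact hF2.sub (memLp_const c)
      exact h1.integrable_sq
    have ht2 : ∫ θ, (f (A θ + W θ) - c) ^ 2 ∂P = ∫ a, ∫ x, (f (a + x) - c) ^ 2 ∂β ∂α :=
      indep_integral_eq hAmeas hWmeas hindAW hφ2 hF2c
    set K : ℝ := ∫ x, ‖x‖ ^ 2 ∂β with hK
    have hKeq : K = ∫ θ, ‖W θ‖ ^ 2 ∂P := by
      rw [hK, hβ, integral_map hWmeas.aemeasurable
        ((by fun_prop : Continuous fun x : B => ‖x‖ ^ 2).aestronglyMeasurable)]
    -- inner pointwise bound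
    have hinner : ∀ a : B, ∫ x, (f (a + x) - c) ^ 2 ∂β ≤ (g a - c) ^ 2 + K := by
      intro a
      have h1 := var_bound β (hfx_memℒp a) c (f a)
      have h2 : ∫ x, (f (a + x) - f a) ^ 2 ∂β ≤ ∫ x, ‖x‖ ^ 2 ∂β := by
        have hptw : ∀ x : B, (f (a + x) - f a) ^ 2 ≤ ‖x‖ ^ 2 := by
          intro x
          have h := hf.dist_le_mul (a + x) a
          simp only [NNReal.coe_one, one_mul, Real.dist_eq, dist_eq_norm,
            add_sub_cancel_left, Real.norm_eq_abs] at h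
          nlinarith [abs_nonneg (f (a + x) - f a), sq_abs (f (a + x) - f a),
            norm_nonneg x]
        refine integral_mono ?_ hWβ hptw
        refine hWβ.mono (((hfx_aesm a).sub aestronglyMeasurable_const).pow 2)
          (ae_of_all _ fun x => ?_)
        have := hptw x
        have h0 : (0:ℝ) ≤ (f (a + x) - f a) ^ 2 := sq_nonneg _
        have h0' : (0:ℝ) ≤ ‖x‖ ^ 2 := sq_nonneg _
        simpa [Real.norm_eq_abs, abs_of_nonneg h0, abs_of_nonneg h0'] using this
      have h3 : (∫ x, f (a + x) ∂β) = g a := rfl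
      rw [h3] at h1
      linarith
    -- second moment of α
    have hAsq : Integrable (fun θ => ‖A θ‖ ^ 2) P := by
      have hsumsq : Integrable (fun θ => (|f 0| + ∑ j, ‖X j θ‖) ^ 2) P := hdom.integrable_sq
      refine hsumsq.mono (((continuous_norm.pow 2).measurable.comp hAmeas).aestronglyMeasurable)
        (ae_of_all _ fun θ => ?_)
      have h1 : ‖A θ‖ ≤ ∑ j : Fin m, ‖X j.castSucc θ‖ := norm_sum_le _ _
      have h2 : (∑ j : Fin m, ‖X j.castSucc θ‖) ≤ ∑ j : Fin (m + 1), ‖X j θ‖ := by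
        rw [Fin.sum_univ_castSucc (f := fun j => ‖X j θ‖)]
        have := norm_nonneg (X (Fin.last m) θ)
        linarith
      have h3 : (0:ℝ) ≤ ∑ j : Fin (m + 1), ‖X j θ‖ :=
        Finset.sum_nonneg fun j _ => norm_nonneg _
      have h4 : (0:ℝ) ≤ |f 0| := abs_nonneg _
      have h5 : ‖A θ‖ ^ 2 ≤ (|f 0| + ∑ j, ‖X j θ‖) ^ 2 := by nlinarith [norm_nonneg (A θ)]
      have h6 : (0:ℝ) ≤ ‖A θ‖ ^ 2 := sq_nonneg _
      have h7 : (0:ℝ) ≤ (|f 0| + ∑ j, ‖X j θ‖) ^ 2 := sq_nonneg _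
      simpa [Real.norm_eq_abs, abs_of_nonneg h6, abs_of_nonneg h7] using h5
    have hnormα2 : MemLp (fun a : B => ‖a‖) 2 α := by
      refine (memLp_two_iff_integrable_sq continuous_norm.aestronglyMeasurable).mpr ?_
      rw [hα, integrable_map_measure ((by fun_prop : Continuous fun x : B => ‖x‖ ^ 2).aestronglyMeasurable)
        hAmeas.aemeasurable]
      exact hAsq
    have hgα2 : MemLp g 2 α := by
      refine MemLp.of_le ((memLp_const (|g 0|)).add hnormα2) hgcont.aestronglyMeasurable
        (ae_of_all _ fun a => ?_)
      have h1 := lip_abs_le hglip a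
      have h2 : |g 0| + ‖a‖ ≤ ‖|g 0| + ‖a‖‖ := le_abs_self _
      calc ‖g a‖ = |g a| := rfl
        _ ≤ ‖|g 0| + ‖a‖‖ := by linarith
    have hgc2 : Integrable (fun a => (g a - c) ^ 2) α := (hgα2.sub (memLp_const c)).integrable_sq
    -- outer inequality
    have hout : ∫ a, ∫ x, (f (a + x) - c) ^ 2 ∂β ∂α ≤ ∫ a, ((g a - c) ^ 2 + K) ∂α := by
      refine integral_mono_of_nonneg (ae_of_all _ fun a => integral_nonneg fun x => sq_nonneg _)
        (hgc2.add (integrable_const _)) (ae_of_all _ hinner)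
    have hsplit : ∫ a, ((g a - c) ^ 2 + K) ∂α = (∫ a, (g a - c) ^ 2 ∂α) + K := by
      rw [integral_add hgc2 (integrable_const _), integral_const]
      simp [measure_univ]
    have hback : ∫ a, (g a - c) ^ 2 ∂α = ∫ θ, (g (A θ) - c) ^ 2 ∂P := by
      rw [hα, integral_map hAmeas.aemeasurable
        ((by fun_prop : Continuous fun a => (g a - c) ^ 2).aestronglyMeasurable)]
    -- induction hypothesis applied to g
    have hIH := IH (fun j => X j.castSucc) (fun j => hmeas _)
      (iIndepFun_comp_embedding ⟨Fin.castSucc, Fin.castSucc_injective m⟩ hindep)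
      (fun j => hL2 _) g hglip
    have hAapp : ∀ θ, (∑ j : Fin m, X (Fin.castSucc j) θ) = A θ := fun _ => rfl
    simp only [hAapp] at hIH
    rw [← hcg] at hIH
    -- final chain
    calc ∫ θ, (f (∑ j, X j θ) - c) ^ 2 ∂P
        = ∫ θ, (f (A θ + W θ) - c) ^ 2 ∂P := by
          refine integral_congr_ae (ae_of_all _ fun θ => ?_)
          simp only [hsumapp]
      _ = ∫ a, ∫ x, (f (a + x) - c) ^ 2 ∂β ∂α := ht2
      _ ≤ ∫ a, ((g a - c) ^ 2 + K) ∂α := hout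
      _ = (∫ θ, (g (A θ) - c) ^ 2 ∂P) + K := by rw [hsplit, hback]
      _ ≤ (∑ j : Fin m, ∫ θ, ‖X (Fin.castSucc j) θ‖ ^ 2 ∂P) + ∫ θ, ‖W θ‖ ^ 2 ∂P := by
          rw [hKeq]
          exact add_le_add_left hIH _
      _ = ∑ j : Fin (m + 1), ∫ θ, ‖X j θ‖ ^ 2 ∂P := by
          rw [Fin.sum_univ_castSucc (f := fun j => ∫ θ, ‖X j θ‖ ^ 2 ∂P), hW]

/-- **Variance of the norm of a sum of independent Banach-valued random vectors**:
if `B` is a separable Banach space and `X_1, …, X_m` are independent `B`-valued random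
vectors with `E‖X_j‖² < ∞`, then with `S_m = Σ_j X_j`,
`E |‖S_m‖ − E‖S_m‖|² ≤ 4 Σ_j E ‖X_j‖²`. -/
theorem variance_norm_sum_indep_banach
    {B : Type*} [NormedAddCommGroup B] [NormedSpace ℝ B] [CompleteSpace B]
    [TopologicalSpace.SeparableSpace B] [MeasurableSpace B] [BorelSpace B]
    {Θ : Type*} [MeasurableSpace Θ] (P : Measure Θ) [IsProbabilityMeasure P]
    (m : ℕ) (X : Fin m → Θ → B)
    (hmeas : ∀ j, Measurable (X j))
    (hindep : iIndepFun X P)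
    (hL2 : ∀ j, Integrable (fun θ => ‖X j θ‖ ^ 2) P) :
    (∫ θ, |‖∑ j, X j θ‖ - ∫ θ', ‖∑ j, X j θ'‖ ∂P| ^ 2 ∂P)
      ≤ 4 * ∑ j, ∫ θ, ‖X j θ‖ ^ 2 ∂P := by
  have hkey := key_lip m P X hmeas hindep hL2 (fun b => ‖b‖) lipschitzWith_one_norm
  have hPos : 0 ≤ ∑ j, ∫ θ, ‖X j θ‖ ^ 2 ∂P :=
    Finset.sum_nonneg fun j _ => integral_nonneg fun θ => sq_nonneg _
  calc ∫ θ, |‖∑ j, X j θ‖ - ∫ θ', ‖∑ j, X j θ'‖ ∂P| ^ 2 ∂P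
      = ∫ θ, (‖∑ j, X j θ‖ - ∫ θ', ‖∑ j, X j θ'‖ ∂P) ^ 2 ∂P := by
        simp only [sq_abs]
    _ ≤ ∑ j, ∫ θ, ‖X j θ‖ ^ 2 ∂P := hkey
    _ ≤ 4 * ∑ j, ∫ θ, ‖X j θ‖ ^ 2 ∂P := by linarith
end

section
/- Geometric mean–arithmetic mean trace inequality for self-adjoint Hilbert–Schmidt operators: let H, W, Y be self-adjoint Hilbert–Schmidt operators on a separable Hilbert space, and let q, r be integers with r≥1 and 0≤q≤2r. Then the operators HW^qHY^{2r−q}, HW^{2r−q}HY^q and H²(W^{2r}+Y^{2r}) are trace class, and tr(HW^qHY^{2r−q}) + tr(HW^{2r−q}HY^q) ≤ tr(H²(W^{2r}+Y^{2r})). -/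
set_option maxHeartbeats 1000000

open scoped RealInnerProductSpace

section GmAmAux

variable {E : Type*} [NormedAddCommGroup E] [InnerProductSpace ℝ E] [CompleteSpace E]
  {ι : Type*} (e : HilbertBasis ι ℝ E)

/-- Hilbert–Schmidt property relative to the basis `e`. -/
def IsHSb (A : E →L[ℝ] E) : Prop := Summable fun i => ‖A (e i)‖ ^ 2

/-- The "trace inner product" `∑ᵢ ⟪A eᵢ, B eᵢ⟫`. -/
noncomputable def ipb (A B : E →L[ℝ] E) : ℝ := ∑' i, ⟪A (e i), B (e i)⟫

variable {e}

lemma summable_norm_mul_norm {A B : E →L[ℝ] E} (hA : IsHSb e A) (hB : IsHSb e B) :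
    Summable fun i => ‖A (e i)‖ * ‖B (e i)‖ := by
  refine Summable.of_nonneg_of_le (fun i => by positivity) (fun i => ?_)
    ((hA.add hB).div_const 2)
  have h := two_mul_le_add_sq ‖A (e i)‖ ‖B (e i)‖
  show _ ≤ (‖A (e i)‖ ^ 2 + ‖B (e i)‖ ^ 2) / 2
  linarith

lemma summable_abs_inner {A B : E →L[ℝ] E} (hA : IsHSb e A) (hB : IsHSb e B) :
    Summable fun i => |⟪A (e i), B (e i)⟫| :=
  Summable.of_nonneg_of_le (fun i => abs_nonneg _)
    (fun i => abs_real_inner_le_norm _ _) (summable_norm_mul_norm hA hB)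

lemma summable_inner {A B : E →L[ℝ] E} (hA : IsHSb e A) (hB : IsHSb e B) :
    Summable fun i => ⟪A (e i), B (e i)⟫ :=
  (summable_abs_inner hA hB).of_abs

lemma ipb_self_eq {A : E →L[ℝ] E} : ipb e A A = ∑' i, ‖A (e i)‖ ^ 2 :=
  tsum_congr fun i => real_inner_self_eq_norm_sq _

/-- Termwise AM–GM for the trace inner product. -/
lemma ipb_le {A B : E →L[ℝ] E} (hA : IsHSb e A) (hB : IsHSb e B) :
    ipb e A B ≤ (ipb e A A + ipb e B B) / 2 := by
  rw [ipb_self_eq, ipb_self_eq]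
  have h1 : ipb e A B ≤ ∑' i, (‖A (e i)‖ ^ 2 + ‖B (e i)‖ ^ 2) / 2 := by
    refine (summable_inner hA hB).tsum_le_tsum (fun i => ?_) ((hA.add hB).div_const 2)
    have h := real_inner_le_norm (A (e i)) (B (e i))
    have h2 := two_mul_le_add_sq ‖A (e i)‖ ‖B (e i)‖
    linarith
  calc ipb e A B ≤ ∑' i, (‖A (e i)‖ ^ 2 + ‖B (e i)‖ ^ 2) / 2 := h1
    _ = ((∑' i, ‖A (e i)‖ ^ 2) + ∑' i, ‖B (e i)‖ ^ 2) / 2 := by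
        rw [tsum_div_const, Summable.tsum_add hA hB]

/-- Parseval: real form. -/
lemma parseval_mul (x y : E) : ∑' j, ⟪x, e j⟫ * ⟪y, e j⟫ = ⟪x, y⟫ := by
  have h := e.tsum_inner_mul_inner x y
  simpa [real_inner_comm] using h

lemma summable_parseval_mul (x y : E) : Summable fun j => ⟪x, e j⟫ * ⟪y, e j⟫ := by
  have h := e.summable_inner_mul_inner x y
  simpa [real_inner_comm] using h

lemma norm_sq_eq_tsum (x : E) : ‖x‖ ^ 2 = ∑' j, ⟪x, e j⟫ ^ 2 := by
  have h := parseval_mul (e := e) x x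
  rw [real_inner_self_eq_norm_sq] at h
  rw [← h]
  exact tsum_congr fun j => (sq _).symm

lemma summable_sq_coeff (x : E) : Summable fun j => ⟪x, e j⟫ ^ 2 := by
  have h := summable_parseval_mul (e := e) x x
  simpa [← sq] using h

lemma summable_sq_prod {A : E →L[ℝ] E} (hA : IsHSb e A) :
    Summable fun p : ι × ι => ⟪A (e p.1), e p.2⟫ ^ 2 := by
  refine (summable_prod_of_nonneg (f := fun p : ι × ι => ⟪A (e p.1), e p.2⟫ ^ 2)
    (fun p => sq_nonneg _)).mpr ⟨fun i => summable_sq_coeff (A (e i)), ?_⟩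
  have h : (fun i => ∑' j, ⟪A (e i), e j⟫ ^ 2) = fun i => ‖A (e i)‖ ^ 2 := by
    funext i; exact (norm_sq_eq_tsum _).symm
  rw [h]
  exact hA

lemma summable_mul_prod {A B : E →L[ℝ] E} (hA : IsHSb e A) (hB : IsHSb e B) :
    Summable fun p : ι × ι => ⟪A (e p.1), e p.2⟫ * ⟪B (e p.1), e p.2⟫ := by
  refine Summable.of_abs (Summable.of_nonneg_of_le (fun p => abs_nonneg _) (fun p => ?_)
    (((summable_sq_prod hA).add (summable_sq_prod hB)).div_const 2))
  have key : ∀ x y : ℝ, |x * y| ≤ (x ^ 2 + y ^ 2) / 2 := fun x y => by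
    rcases abs_cases (x * y) with ⟨h, _⟩ | ⟨h, _⟩ <;>
      nlinarith [sq_nonneg (x - y), sq_nonneg (x + y)]
  simpa using key ⟪A (e p.1), e p.2⟫ ⟪B (e p.1), e p.2⟫

lemma ipb_eq_tsum_prod {A B : E →L[ℝ] E} (hA : IsHSb e A) (hB : IsHSb e B) :
    ipb e A B = ∑' p : ι × ι, ⟪A (e p.1), e p.2⟫ * ⟪B (e p.1), e p.2⟫ := by
  have h := Summable.tsum_prod' (f := fun p : ι × ι => ⟪A (e p.1), e p.2⟫ * ⟪B (e p.1), e p.2⟫)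
    (summable_mul_prod hA hB) (fun i => summable_parseval_mul (A (e i)) (B (e i)))
  calc ipb e A B = ∑' i, ∑' j, ⟪A (e i), e j⟫ * ⟪B (e i), e j⟫ :=
        tsum_congr fun i => (parseval_mul _ _).symm
    _ = ∑' p : ι × ι, ⟪A (e p.1), e p.2⟫ * ⟪B (e p.1), e p.2⟫ := h.symm

lemma adjoint_coeff (A : E →L[ℝ] E) (i j : ι) :
    ⟪(ContinuousLinearMap.adjoint A) (e j), e i⟫ = ⟪A (e i), e j⟫ := by
  rw [ContinuousLinearMap.adjoint_inner_left]
  exact real_inner_comm _ _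

lemma IsHSb.adjoint {A : E →L[ℝ] E} (hA : IsHSb e A) :
    IsHSb e (ContinuousLinearMap.adjoint A) := by
  have hswap : Summable fun p : ι × ι => ⟪A (e p.2), e p.1⟫ ^ 2 :=
    (summable_sq_prod hA).prod_symm
  have hcol : Summable fun j => ∑' i, ⟪A (e i), e j⟫ ^ 2 :=
    ((summable_prod_of_nonneg (f := fun p : ι × ι => ⟪A (e p.2), e p.1⟫ ^ 2)
      (fun p => sq_nonneg _)).mp hswap).2
  refine (summable_congr fun j => ?_).mpr hcol
  rw [norm_sq_eq_tsum ((ContinuousLinearMap.adjoint A) (e j))]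
  exact tsum_congr fun i => by rw [adjoint_coeff]

lemma ipb_star {A B : E →L[ℝ] E} (hA : IsHSb e A) (hB : IsHSb e B) :
    ipb e A B = ipb e (ContinuousLinearMap.adjoint A) (ContinuousLinearMap.adjoint B) := by
  rw [ipb_eq_tsum_prod hA hB, ipb_eq_tsum_prod hA.adjoint hB.adjoint]
  have h := (Equiv.prodComm ι ι).tsum_eq
    (fun p : ι × ι => ⟪(ContinuousLinearMap.adjoint A) (e p.1), e p.2⟫ *
      ⟪(ContinuousLinearMap.adjoint B) (e p.1), e p.2⟫)
  rw [← h]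
  refine tsum_congr fun p => ?_
  simp only [Equiv.prodComm_apply, Prod.fst_swap, Prod.snd_swap]
  rw [adjoint_coeff, adjoint_coeff]

lemma IsHSb.comp_left {A : E →L[ℝ] E} (B : E →L[ℝ] E) (hA : IsHSb e A) :
    IsHSb e (B * A) := by
  refine Summable.of_nonneg_of_le (fun i => by positivity) (fun i => ?_) (hA.mul_left (‖B‖ ^ 2))
  rw [ContinuousLinearMap.mul_apply]
  have h := B.le_opNorm (A (e i))
  calc ‖B (A (e i))‖ ^ 2 ≤ (‖B‖ * ‖A (e i)‖) ^ 2 :=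
        pow_le_pow_left₀ (norm_nonneg _) h 2
    _ = ‖B‖ ^ 2 * ‖A (e i)‖ ^ 2 := by ring

lemma IsHSb.comp_right {A : E →L[ℝ] E} (hA : IsHSb e A) (B : E →L[ℝ] E) :
    IsHSb e (A * B) := by
  have h1 : IsHSb e (ContinuousLinearMap.adjoint B * ContinuousLinearMap.adjoint A) :=
    hA.adjoint.comp_left _
  have h2 := h1.adjoint
  have h3 : ContinuousLinearMap.adjoint
      (ContinuousLinearMap.adjoint B * ContinuousLinearMap.adjoint A) = A * B := by
    simp only [ContinuousLinearMap.mul_def, ContinuousLinearMap.adjoint_comp,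
      ContinuousLinearMap.adjoint_adjoint]
  rwa [h3] at h2

lemma ipb_comm (A B : E →L[ℝ] E) : ipb e A B = ipb e B A :=
  tsum_congr fun i => real_inner_comm _ _

lemma ipb_move_left (A B C : E →L[ℝ] E) :
    ipb e (C * A) B = ipb e A (ContinuousLinearMap.adjoint C * B) := by
  refine tsum_congr fun i => ?_
  simp only [ContinuousLinearMap.mul_apply]
  rw [real_inner_comm, ← ContinuousLinearMap.adjoint_inner_left]
  exact real_inner_comm _ _

lemma ipb_move_right {A B : E →L[ℝ] E} (hA : IsHSb e A) (hB : IsHSb e B) (C : E →L[ℝ] E) :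
    ipb e (A * C) B = ipb e A (B * ContinuousLinearMap.adjoint C) := by
  rw [ipb_star (hA.comp_right C) hB]
  have h1 : ContinuousLinearMap.adjoint (A * C) =
      ContinuousLinearMap.adjoint C * ContinuousLinearMap.adjoint A := by
    simp only [ContinuousLinearMap.mul_def, ContinuousLinearMap.adjoint_comp]
  rw [h1, ipb_move_left, ContinuousLinearMap.adjoint_adjoint]
  have h2 : C * ContinuousLinearMap.adjoint B =
      ContinuousLinearMap.adjoint (B * ContinuousLinearMap.adjoint C) := by
    simp only [ContinuousLinearMap.mul_def, ContinuousLinearMap.adjoint_comp,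
      ContinuousLinearMap.adjoint_adjoint]
  rw [h2]
  exact (ipb_star hA (hB.comp_right _)).symm

/-- The purely combinatorial maximum argument. -/
lemma gm_am_abstract (r : ℕ) (t : ℕ → ℝ)
    (h4 : ∀ a c : ℕ, a ≤ r → c ≤ r → t (a + c) ≤ (t (2 * a) + t (2 * c)) / 2) :
    ∀ q, q ≤ 2 * r → t q + t (2 * r - q) ≤ t 0 + t (2 * r) := by
  intro q hq
  obtain ⟨k₀, hk₀mem, hk₀max⟩ := Finset.exists_max_image (Finset.range (2 * r + 1))
    (fun k => t k + t (2 * r - k)) ⟨0, by simp⟩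
  have hk₀ : k₀ ≤ 2 * r := by
    have := Finset.mem_range.mp hk₀mem; omega
  have hqle := hk₀max q (Finset.mem_range.mpr (by omega))
  have hMT : t k₀ + t (2 * r - k₀) ≤ t 0 + t (2 * r) := by
    by_cases h0 : k₀ = 0
    · subst h0; simp
    by_cases h2r : k₀ = 2 * r
    · subst h2r
      rw [Nat.sub_self]
      linarith
    · set j := min k₀ (2 * r - k₀) with hj
      have hj1 : 1 ≤ j := by omega
      have hjr : j ≤ r := by omega
      have hFj : t j + t (2 * r - j) = t k₀ + t (2 * r - k₀) := by
        rcases le_total k₀ (2 * r - k₀) with h | h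
        · rw [hj, min_eq_left h]
        · rw [hj, min_eq_right h]
          have hx : 2 * r - (2 * r - k₀) = k₀ := by omega
          rw [hx]; ring
      have h1 : t j ≤ (t 0 + t (2 * j)) / 2 := by
        have h := h4 0 j (Nat.zero_le r) hjr
        simpa using h
      have h2 : t (2 * r - j) ≤ (t (2 * r) + t (2 * r - 2 * j)) / 2 := by
        have h := h4 r (r - j) le_rfl (Nat.sub_le r j)
        have e1 : r + (r - j) = 2 * r - j := by omega
        have e2 : 2 * (r - j) = 2 * r - 2 * j := by omega
        rw [e1, e2] at h
        exact h
      have h3 : t (2 * j) + t (2 * r - 2 * j) ≤ t k₀ + t (2 * r - k₀) :=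
        hk₀max (2 * j) (Finset.mem_range.mpr (by omega))
      linarith
  linarith

end GmAmAux

/-- **Geometric mean–arithmetic mean trace inequality for self-adjoint Hilbert–Schmidt
operators**: for self-adjoint Hilbert–Schmidt operators `H, W, Y` on a separable Hilbert
space (traces computed in a Hilbert basis `(e_i)`; they are basis-independent) and
integers `r ≥ 1`, `0 ≤ q ≤ 2r`, the operators `H W^q H Y^{2r−q}`, `H W^{2r−q} H Y^q`
and `H²(W^{2r}+Y^{2r})` are trace class (their diagonal sums converge absolutely) and
`tr(H W^q H Y^{2r−q}) + tr(H W^{2r−q} H Y^q) ≤ tr(H²(W^{2r}+Y^{2r}))`. -/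
theorem gm_am_trace_inequality
    {E : Type*} [NormedAddCommGroup E] [InnerProductSpace ℝ E] [CompleteSpace E]
    {ι : Type*} [Countable ι] (e : HilbertBasis ι ℝ E)
    (H W Y : E →L[ℝ] E)
    (hH : IsSelfAdjoint H) (hW : IsSelfAdjoint W) (hY : IsSelfAdjoint Y)
    (hHS_H : Summable fun i => ‖H (e i)‖ ^ 2)
    (hHS_W : Summable fun i => ‖W (e i)‖ ^ 2)
    (hHS_Y : Summable fun i => ‖Y (e i)‖ ^ 2)
    (q r : ℕ) (hr : 1 ≤ r) (hq : q ≤ 2 * r) :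
    (Summable fun i => |⟪(H * W ^ q * H * Y ^ (2 * r - q)) (e i), e i⟫|) ∧
    (Summable fun i => |⟪(H * W ^ (2 * r - q) * H * Y ^ q) (e i), e i⟫|) ∧
    (Summable fun i => |⟪(H ^ 2 * (W ^ (2 * r) + Y ^ (2 * r))) (e i), e i⟫|) ∧
    (∑' i, ⟪(H * W ^ q * H * Y ^ (2 * r - q)) (e i), e i⟫)
        + (∑' i, ⟪(H * W ^ (2 * r - q) * H * Y ^ q) (e i), e i⟫)
      ≤ ∑' i, ⟪(H ^ 2 * (W ^ (2 * r) + Y ^ (2 * r))) (e i), e i⟫ := by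
  classical
  have hHa : IsHSb e H := hHS_H
  have haH : ContinuousLinearMap.adjoint H = H :=
    ContinuousLinearMap.isSelfAdjoint_iff'.mp hH
  have haW : ∀ k : ℕ, ContinuousLinearMap.adjoint (W ^ k) = W ^ k := fun k =>
    ContinuousLinearMap.isSelfAdjoint_iff'.mp (hW.pow k)
  have haY : ∀ k : ℕ, ContinuousLinearMap.adjoint (Y ^ k) = Y ^ k := fun k =>
    ContinuousLinearMap.isSelfAdjoint_iff'.mp (hY.pow k)
  have hHsym : ∀ x y : E, ⟪H x, y⟫ = ⟪x, H y⟫ := fun x y => by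
    conv_lhs => rw [← haH]
    rw [ContinuousLinearMap.adjoint_inner_left]
  -- Hilbert–Schmidt property of the sandwiched operators
  have hsP : ∀ a b : ℕ, IsHSb e (W ^ a * H * Y ^ b) := fun a b =>
    (hHa.comp_left (W ^ a)).comp_right (Y ^ b)
  -- master reduction lemma
  have key1 : ∀ a b c d : ℕ,
      ipb e (W ^ a * H * Y ^ b) (W ^ c * H * Y ^ d)
        = ipb e H (W ^ (a + c) * H * Y ^ (b + d)) := by
    intro a b c d
    rw [mul_assoc (W ^ a) H (Y ^ b), ipb_move_left, haW a]
    have e2 : W ^ a * (W ^ c * H * Y ^ d) = W ^ (a + c) * H * Y ^ d := by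
      simp only [pow_add, mul_assoc]
    rw [e2, ipb_move_right hHa ((hHa.comp_left (W ^ (a + c))).comp_right (Y ^ d)) (Y ^ b),
      haY b]
    congr 1
    rw [Nat.add_comm b d, pow_add Y d b]
    simp only [mul_assoc]
  -- hypothesis of the abstract lemma, stated without abbreviations
  have h4 : ∀ a c : ℕ, a ≤ r → c ≤ r →
      ipb e H (W ^ (a + c) * H * Y ^ (2 * r - (a + c)))
        ≤ (ipb e H (W ^ (2 * a) * H * Y ^ (2 * r - 2 * a))
            + ipb e H (W ^ (2 * c) * H * Y ^ (2 * r - 2 * c))) / 2 := by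
    intro a c ha hc
    have e1 : ipb e H (W ^ (a + c) * H * Y ^ (2 * r - (a + c)))
        = ipb e (W ^ a * H * Y ^ (r - a)) (W ^ c * H * Y ^ (r - c)) := by
      rw [key1]
      have hx : 2 * r - (a + c) = r - a + (r - c) := by omega
      rw [hx]
    have e2 : ipb e H (W ^ (2 * a) * H * Y ^ (2 * r - 2 * a))
        = ipb e (W ^ a * H * Y ^ (r - a)) (W ^ a * H * Y ^ (r - a)) := by
      rw [key1]
      have hx1 : 2 * a = a + a := by omega
      have hx2 : 2 * r - (a + a) = r - a + (r - a) := by omega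
      rw [hx1, hx2]
    have e3 : ipb e H (W ^ (2 * c) * H * Y ^ (2 * r - 2 * c))
        = ipb e (W ^ c * H * Y ^ (r - c)) (W ^ c * H * Y ^ (r - c)) := by
      rw [key1]
      have hx1 : 2 * c = c + c := by omega
      have hx2 : 2 * r - (c + c) = r - c + (r - c) := by omega
      rw [hx1, hx2]
    rw [e1, e2, e3]
    exact ipb_le (hsP a (r - a)) (hsP c (r - c))
  -- identify the three traces
  have eT1 : (∑' i, ⟪(H * W ^ q * H * Y ^ (2 * r - q)) (e i), e i⟫)
      = ipb e H (W ^ q * H * Y ^ (2 * r - q)) := by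
    unfold ipb
    refine tsum_congr fun i => ?_
    simp only [ContinuousLinearMap.mul_apply]
    rw [hHsym, real_inner_comm]
  have hmq : 2 * r - (2 * r - q) = q := by omega
  have eT2 : (∑' i, ⟪(H * W ^ (2 * r - q) * H * Y ^ q) (e i), e i⟫)
      = ipb e H (W ^ (2 * r - q) * H * Y ^ q) := by
    unfold ipb
    refine tsum_congr fun i => ?_
    simp only [ContinuousLinearMap.mul_apply]
    rw [hHsym, real_inner_comm]
  -- the right-hand side
  have hptR : ∀ x : E, ⟪(H ^ 2 * (W ^ (2 * r) + Y ^ (2 * r))) x, x⟫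
      = ⟪(H * W ^ (2 * r)) x, H x⟫ + ⟪(H * Y ^ (2 * r)) x, H x⟫ := by
    intro x
    rw [pow_two H]
    simp only [ContinuousLinearMap.mul_apply, ContinuousLinearMap.add_apply]
    rw [hHsym, map_add, inner_add_left]
  have hsHW : IsHSb e (H * W ^ (2 * r)) := hHa.comp_right _
  have hsHY : IsHSb e (H * Y ^ (2 * r)) := hHa.comp_right _
  have eRHS : (∑' i, ⟪(H ^ 2 * (W ^ (2 * r) + Y ^ (2 * r))) (e i), e i⟫)
      = ipb e (H * W ^ (2 * r)) H + ipb e (H * Y ^ (2 * r)) H := by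
    rw [show (∑' i, ⟪(H ^ 2 * (W ^ (2 * r) + Y ^ (2 * r))) (e i), e i⟫)
        = ∑' i, (⟪(H * W ^ (2 * r)) (e i), H (e i)⟫ + ⟪(H * Y ^ (2 * r)) (e i), H (e i)⟫)
      from tsum_congr fun i => hptR (e i)]
    exact Summable.tsum_add (summable_inner hsHW hHa) (summable_inner hsHY hHa)
  -- identify the W-part of the RHS
  have hW2r : ipb e (H * W ^ (2 * r)) H = ipb e H (W ^ (2 * r) * H) := by
    have e1 : H * W ^ (2 * r) = (H * W ^ r) * W ^ r := by
      rw [two_mul, pow_add, mul_assoc]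
    rw [e1, ipb_move_right (hHa.comp_right (W ^ r)) hHa (W ^ r), haW r]
    have e2 : ipb e (H * W ^ r) (H * W ^ r) = ipb e (W ^ r * H) (W ^ r * H) := by
      rw [ipb_star (hHa.comp_right (W ^ r)) (hHa.comp_right (W ^ r))]
      have e3 : ContinuousLinearMap.adjoint (H * W ^ r) = W ^ r * H := by
        simp only [ContinuousLinearMap.mul_def, ContinuousLinearMap.adjoint_comp, haW r, haH]
      rw [e3]
    rw [e2]
    have e4 : ipb e (W ^ r * H) (W ^ r * H)
        = ipb e (W ^ r * H * Y ^ 0) (W ^ r * H * Y ^ 0) := by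
      rw [pow_zero, mul_one]
    rw [e4, key1, pow_zero, mul_one, ← two_mul]
  -- identify the Y-part of the RHS
  have hY2r : ipb e (H * Y ^ (2 * r)) H = ipb e H (H * Y ^ (2 * r)) := ipb_comm _ _
  -- summability of the three diagonal families
  have hS1 : Summable fun i => |⟪(H * W ^ q * H * Y ^ (2 * r - q)) (e i), e i⟫| := by
    refine (summable_congr fun i => ?_).mpr
      (summable_abs_inner (hsP q (2 * r - q)) hHa)
    congr 1
    simp only [ContinuousLinearMap.mul_apply]
    rw [hHsym, real_inner_comm]
  have hS2 : Summable fun i => |⟪(H * W ^ (2 * r - q) * H * Y ^ q) (e i), e i⟫| := by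
    refine (summable_congr fun i => ?_).mpr
      (summable_abs_inner (hsP (2 * r - q) q) hHa)
    congr 1
    simp only [ContinuousLinearMap.mul_apply]
    rw [hHsym, real_inner_comm]
  have hS3 : Summable fun i => |⟪(H ^ 2 * (W ^ (2 * r) + Y ^ (2 * r))) (e i), e i⟫| := by
    refine Summable.of_nonneg_of_le (fun i => abs_nonneg _) (fun i => ?_)
      ((summable_abs_inner hsHW hHa).add (summable_abs_inner hsHY hHa))
    rw [hptR (e i)]
    exact abs_add_le _ _
  refine ⟨hS1, hS2, hS3, ?_⟩
  have habs := gm_am_abstract r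
    (fun k => ipb e H (W ^ k * H * Y ^ (2 * r - k))) h4 q hq
  rw [hmq, Nat.sub_zero, Nat.sub_self, pow_zero, pow_zero, one_mul, mul_one] at habs
  rw [eT1, eT2, eRHS, hW2r, hY2r]
  linarith
end

section
/- Boundary propagator estimates (key step of Lemma 4.9): let M(x)=∫_{x_L}^x σ_T(y)dy and B_μ(x)=exp(−M(x)/μ) for μ>0. Then (i) for every μ∈(0,1], ‖B_μ‖²_{L²(Ω;σ_T)} ≤ μ/2; and (ii) for all 0<μ₁≤μ₂≤1, ‖B_{μ₁}−B_{μ₂}‖²_{L²(Ω;σ_T)} ≤ (μ₂−μ₁)²·μ₂/(4μ₁²). -/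
open MeasureTheory Real

private lemma bp_aux1 (μ R : ℝ) (hμ : 0 < μ) (hR : 0 ≤ R) :
    (∫ m in (0:ℝ)..R, (Real.exp (-m / μ)) ^ 2) ≤ μ / 2 := by
  have key : ∀ m : ℝ, HasDerivAt (fun m => -(μ/2) * Real.exp (-(2/μ) * m))
      ((Real.exp (-m / μ)) ^ 2) m := by
    intro m
    have h1 : HasDerivAt (fun m : ℝ => -(2/μ) * m) (-(2/μ)) m := by
      simpa using (hasDerivAt_id m).const_mul (-(2/μ))
    have h2 := (Real.hasDerivAt_exp (-(2/μ) * m)).comp m h1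
    have h3 := h2.const_mul (-(μ/2))
    refine h3.congr_deriv ?_
    have he : (Real.exp (-m / μ)) ^ 2 = Real.exp (-(2/μ) * m) := by
      rw [sq, ← Real.exp_add]; ring_nf
    rw [he]; field_simp
  have hcont : Continuous fun m : ℝ => (Real.exp (-m / μ)) ^ 2 := by fun_prop
  rw [intervalIntegral.integral_eq_sub_of_hasDerivAt (fun m _ => key m)
    (hcont.intervalIntegrable 0 R)]
  have := Real.exp_pos (-(2/μ) * R)
  simp only [mul_zero, Real.exp_zero]
  nlinarith

private lemma bp_aux2 (μ R : ℝ) (hμ : 0 < μ) (hR : 0 ≤ R) :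
    (∫ m in (0:ℝ)..R, m ^ 2 * Real.exp (-(2/μ) * m)) ≤ μ ^ 3 / 4 := by
  set F : ℝ → ℝ := fun m => -Real.exp (-(2/μ) * m) * (μ*m^2/2 + μ^2*m/2 + μ^3/4) with hF
  have key : ∀ m : ℝ, HasDerivAt F (m ^ 2 * Real.exp (-(2/μ) * m)) m := by
    intro m
    have h1 : HasDerivAt (fun m : ℝ => -(2/μ) * m) (-(2/μ)) m := by
      simpa using (hasDerivAt_id m).const_mul (-(2/μ))
    have h2 := (Real.hasDerivAt_exp (-(2/μ) * m)).comp m h1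
    have hpoly : HasDerivAt (fun m : ℝ => μ*m^2/2 + μ^2*m/2 + μ^3/4) (μ*m + μ^2/2) m := by
      have ha : HasDerivAt (fun m : ℝ => μ*m^2/2) (μ*m) m := by
        have := ((hasDerivAt_pow 2 m).const_mul μ).div_const 2
        simpa using this.congr_deriv (by ring)
      have hb : HasDerivAt (fun m : ℝ => μ^2*m/2 + μ^3/4) (μ^2/2) m := by
        have := (((hasDerivAt_id m).const_mul (μ^2)).div_const 2).add_const (μ^3/4)
        simpa using this
      exact (ha.add hb).congr_of_eventuallyEq
        (Filter.Eventually.of_forall fun x => by rw [Pi.add_apply]; ring)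
    have h3 := (h2.neg).mul hpoly
    refine h3.congr_deriv ?_
    simp only [Pi.neg_apply, Function.comp_apply]
    field_simp
    ring
  have hcont : Continuous fun m : ℝ => m ^ 2 * Real.exp (-(2/μ) * m) := by fun_prop
  rw [intervalIntegral.integral_eq_sub_of_hasDerivAt (fun m _ => key m)
    (hcont.intervalIntegrable 0 R)]
  have hFR : F R ≤ 0 := by
    have := Real.exp_pos (-(2/μ) * R)
    have : 0 ≤ μ*R^2/2 + μ^2*R/2 + μ^3/4 := by positivity
    simp only [hF]
    nlinarith [Real.exp_pos (-(2/μ) * R)]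
  have hF0 : F 0 = -(μ^3/4) := by simp [hF]
  rw [hF0]; linarith

private lemma bp_aux3 (μ₁ μ₂ m : ℝ) (h1 : 0 < μ₁) (h12 : μ₁ ≤ μ₂) (hm : 0 ≤ m) :
    (Real.exp (-m / μ₁) - Real.exp (-m / μ₂)) ^ 2
      ≤ ((μ₂ - μ₁) / (μ₁ * μ₂)) ^ 2 * (m ^ 2 * Real.exp (-(2/μ₂) * m)) := by
  have h2 : 0 < μ₂ := h1.trans_le h12
  set t : ℝ := m / μ₁ - m / μ₂ with ht
  have htn : 0 ≤ t := by
    have h : m / μ₂ ≤ m / μ₁ := by gcongr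
    rw [ht]; linarith
  have hsplit : Real.exp (-m / μ₁) = Real.exp (-m / μ₂) * Real.exp (-t) := by
    rw [← Real.exp_add, ht]; ring_nf
  have hexpt : 1 - t ≤ Real.exp (-t) := by
    have := Real.add_one_le_exp (-t); linarith
  have hle : Real.exp (-m / μ₂) - Real.exp (-m / μ₁) ≤ t * Real.exp (-m / μ₂) := by
    rw [hsplit]
    nlinarith [mul_le_mul_of_nonneg_left hexpt (Real.exp_pos (-m / μ₂)).le]
  have hge : 0 ≤ Real.exp (-m / μ₂) - Real.exp (-m / μ₁) := by
    have : Real.exp (-m / μ₁) ≤ Real.exp (-m / μ₂) := by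
      apply Real.exp_le_exp.2
      have h : m / μ₂ ≤ m / μ₁ := by gcongr
      rw [neg_div, neg_div]; linarith
    linarith
  have hsq : (Real.exp (-m / μ₁) - Real.exp (-m / μ₂)) ^ 2
      ≤ (t * Real.exp (-m / μ₂)) ^ 2 := by
    nlinarith [Real.exp_pos (-m / μ₂), mul_nonneg htn (Real.exp_pos (-m / μ₂)).le]
  have heq : (t * Real.exp (-m / μ₂)) ^ 2
      = ((μ₂ - μ₁) / (μ₁ * μ₂)) ^ 2 * (m ^ 2 * Real.exp (-(2/μ₂) * m)) := by
    have he : Real.exp (-(2/μ₂) * m) = Real.exp (-m / μ₂) ^ 2 := by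
      rw [sq, ← Real.exp_add]; ring_nf
    rw [he, ht]
    field_simp
  linarith [hsq, heq.le]

/-- **Boundary propagator estimates** (key step of Lemma 4.9).
With `M x = ∫_{x_L}^x σ_T(y) dy` and `B_μ(x) = exp(−M(x)/μ)` for `μ > 0`:
(i) for every `μ ∈ (0,1]`, `‖B_μ‖²_{L²(Ω;σ_T)} ≤ μ/2`;
(ii) for all `0 < μ₁ ≤ μ₂ ≤ 1`,
`‖B_{μ₁} − B_{μ₂}‖²_{L²(Ω;σ_T)} ≤ (μ₂−μ₁)²·μ₂/(4μ₁²)`. -/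
theorem boundary_propagator_estimates
    (xL xR : ℝ) (hx : xL < xR)
    (σT : ℝ → ℝ) (hσT : ContinuousOn σT (Set.Icc xL xR))
    (hσT_pos : ∀ x ∈ Set.Icc xL xR, 0 < σT x)
    (M : ℝ → ℝ) (hM : ∀ x, M x = ∫ y in xL..x, σT y) :
    (∀ μ : ℝ, μ ∈ Set.Ioc (0 : ℝ) 1 →
      (∫ x in Set.Icc xL xR, (Real.exp (-(M x) / μ)) ^ 2 * σT x) ≤ μ / 2) ∧
    (∀ μ₁ μ₂ : ℝ, 0 < μ₁ → μ₁ ≤ μ₂ → μ₂ ≤ 1 →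
      (∫ x in Set.Icc xL xR,
          (Real.exp (-(M x) / μ₁) - Real.exp (-(M x) / μ₂)) ^ 2 * σT x)
        ≤ (μ₂ - μ₁) ^ 2 * μ₂ / (4 * μ₁ ^ 2)) := by
  set σ' : ℝ → ℝ := Set.IccExtend hx.le ((Set.Icc xL xR).restrict σT) with hσ'
  have hσ'c : Continuous σ' := hσT.restrict.Icc_extend'
  have hσ'eq : ∀ x ∈ Set.Icc xL xR, σ' x = σT x := fun x hx' =>
    Set.IccExtend_of_mem hx.le _ hx'
  have hσ'pos : ∀ x, 0 < σ' x := fun x =>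
    hσT_pos _ (Set.projIcc xL xR hx.le x).2
  set N : ℝ → ℝ := fun x => ∫ y in xL..x, σ' y with hN
  have hNderiv : ∀ x, HasDerivAt N (σ' x) x := fun x =>
    (hσ'c.integral_hasStrictDerivAt xL x).hasDerivAt
  have hNeq : ∀ x ∈ Set.Icc xL xR, M x = N x := by
    intro x hx'
    rw [hM]
    apply intervalIntegral.integral_congr
    intro y hy
    have hsub : Set.uIcc xL x ⊆ Set.Icc xL xR := by
      rw [Set.uIcc_of_le hx'.1]
      exact Set.Icc_subset_Icc le_rfl hx'.2
    exact (hσ'eq y (hsub hy)).symm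
  have hN0 : N xL = 0 := intervalIntegral.integral_same
  have hNR : 0 ≤ N xR :=
    intervalIntegral.integral_nonneg hx.le (fun u _ => (hσ'pos u).le)
  have hsub : ∀ g : ℝ → ℝ, Continuous g →
      (∫ x in Set.Icc xL xR, g (M x) * σT x) = ∫ m in (0:ℝ)..(N xR), g m := by
    intro g hg
    have h1 : (∫ x in Set.Icc xL xR, g (M x) * σT x)
        = ∫ x in Set.Icc xL xR, g (N x) * σ' x := by
      apply setIntegral_congr_fun measurableSet_Icc
      intro x hx'
      show g (M x) * σT x = g (N x) * σ' x
      rw [hNeq x hx', hσ'eq x hx']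
    rw [h1, integral_Icc_eq_integral_Ioc, ← intervalIntegral.integral_of_le hx.le]
    have h2 := intervalIntegral.integral_comp_mul_deriv (a := xL) (b := xR)
      (f := N) (f' := σ') (g := g) (fun x _ => hNderiv x) hσ'c.continuousOn hg
    simpa [Function.comp, hN0] using h2
  constructor
  · intro μ hμ
    have hg : Continuous fun m : ℝ => (Real.exp (-m / μ)) ^ 2 := by fun_prop
    rw [hsub _ hg]
    exact bp_aux1 μ (N xR) hμ.1 hNR
  · intro μ₁ μ₂ h1 h12 h21
    have h2 : 0 < μ₂ := h1.trans_le h12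
    have hg : Continuous fun m : ℝ =>
        (Real.exp (-m / μ₁) - Real.exp (-m / μ₂)) ^ 2 := by fun_prop
    rw [hsub _ hg]
    have hg2 : Continuous fun m : ℝ =>
        ((μ₂ - μ₁) / (μ₁ * μ₂)) ^ 2 * (m ^ 2 * Real.exp (-(2/μ₂) * m)) := by fun_prop
    calc (∫ m in (0:ℝ)..(N xR), (Real.exp (-m / μ₁) - Real.exp (-m / μ₂)) ^ 2)
        ≤ ∫ m in (0:ℝ)..(N xR),
            ((μ₂ - μ₁) / (μ₁ * μ₂)) ^ 2 * (m ^ 2 * Real.exp (-(2/μ₂) * m)) := by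
          apply intervalIntegral.integral_mono_on hNR
            (hg.intervalIntegrable 0 (N xR)) (hg2.intervalIntegrable 0 (N xR))
          intro m hm
          exact bp_aux3 μ₁ μ₂ m h1 h12 hm.1
      _ = ((μ₂ - μ₁) / (μ₁ * μ₂)) ^ 2
            * ∫ m in (0:ℝ)..(N xR), m ^ 2 * Real.exp (-(2/μ₂) * m) := by
          rw [intervalIntegral.integral_const_mul]
      _ ≤ ((μ₂ - μ₁) / (μ₁ * μ₂)) ^ 2 * (μ₂ ^ 3 / 4) := by
          apply mul_le_mul_of_nonneg_left (bp_aux2 μ₂ (N xR) h2 hNR) (by positivity)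
      _ = (μ₂ - μ₁) ^ 2 * μ₂ / (4 * μ₁ ^ 2) := by
          field_simp
end

section
/- Stability estimate for the regularization error (Appendix A Proposition): let λ∈(0,1) and f∈L²(Ω;σ_T). Suppose v:Ω×S^δ→ℝ is such that for each μ∈S^δ, v(·,μ)∈L²(Ω;σ_T), the map μ↦v(·,μ) is Bochner integrable over S^δ, and v(·,μ) = λ·A_μ(I^δ(v) + f), i.e., v(·,μ) solves μ∂_xv+σ_Tv = λσ_r(I^δ(v)+f) with zero inflow boundary conditions. Then ‖I^δ(v)‖ ≤ sup_{μ∈S^δ}‖v(·,μ)‖ ≤ (λ/(1−λ))·‖f‖ and ‖I^δ(v)+f‖ ≤ (1/(1−λ))·‖f‖ (so the regularized mean density differs from the true one, φ^δ−φ = I^δ(v)+f, by at most (1/(1−λ))‖f‖ in L²(Ω;σ_T)). -/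
open MeasureTheory

open intervalIntegral

lemma ftc_exp1_s17 (σ F : ℝ → ℝ) (hσ : Continuous σ)
    (hF : ∀ t, HasDerivAt F (σ t) t) (m c a b : ℝ) :
    ∫ t in a..b, σ t / m * Real.exp ((F t - c) / m) =
      Real.exp ((F b - c) / m) - Real.exp ((F a - c) / m) := by
  have hFc : Continuous F := by
    rw [continuous_iff_continuousAt]; exact fun t => (hF t).continuousAt
  refine integral_eq_sub_of_hasDerivAt (f := fun t => Real.exp ((F t - c)/m)) (fun t _ => ?_) ?_
  · have h := (((hF t).sub_const c).div_const m).exp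
    exact h.congr_deriv (by ring)
  · exact (Continuous.intervalIntegrable (by continuity) a b)

lemma ftc_exp2_s17 (σ F : ℝ → ℝ) (hσ : Continuous σ)
    (hF : ∀ t, HasDerivAt F (σ t) t) (m c a b : ℝ) :
    ∫ t in a..b, σ t / m * Real.exp ((c - F t) / m) =
      Real.exp ((c - F a) / m) - Real.exp ((c - F b) / m) := by
  have hFc : Continuous F := by
    rw [continuous_iff_continuousAt]; exact fun t => (hF t).continuousAt
  have h2 : ∫ t in a..b, σ t / m * Real.exp ((c - F t) / m) =
      (-Real.exp ((c - F b)/m)) - (-Real.exp ((c - F a)/m)) := by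
    refine integral_eq_sub_of_hasDerivAt (f := fun t => -Real.exp ((c - F t)/m)) (fun t _ => ?_) ?_
    · have h := ((((hF t).const_sub c).div_const m).exp).neg
      exact h.congr_deriv (by ring)
    · exact (Continuous.intervalIntegrable (by continuity) a b)
  rw [h2]; ring

lemma kernel_op_bound
    (xL xR : ℝ) (hx : xL < xR)
    (σT σr : ℝ → ℝ)
    (hσT : ContinuousOn σT (Set.Icc xL xR)) (hσT_pos : ∀ x ∈ Set.Icc xL xR, 0 < σT x)
    (hσr : ContinuousOn σr (Set.Icc xL xR))
    (hσr_pos : ∀ x ∈ Set.Icc xL xR, 0 < σr x ∧ σr x ≤ σT x)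
    (μ : ℝ) (hμ0 : μ ≠ 0)
    (ψ : Lp ℝ 2 (transMeasure xL xR σT))
    (g : ℝ → ℝ)
    (hg : ∀ x, g x = ∫ y in Set.Icc xL xR, transKernel σT σr μ x y * (ψ : ℝ → ℝ) y * σT y) :
    eLpNorm g 2 (transMeasure xL xR σT) ≤
      eLpNorm (ψ : ℝ → ℝ) 2 (transMeasure xL xR σT) := by
  have hμabs : 0 < |μ| := abs_pos.2 hμ0
  set Ω : Set ℝ := Set.Icc xL xR with hΩ
  -- continuous extensions of σT, σr by clamping
  set e : ℝ → ℝ := fun t => max xL (min t xR) with he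
  have hec : Continuous e := by fun_prop
  have heΩ : ∀ t, e t ∈ Ω := fun t =>
    ⟨le_max_left _ _, max_le hx.le (min_le_right _ _)⟩
  have heid : ∀ t ∈ Ω, e t = t := by
    intro t ht
    simp only [he]
    rw [min_eq_left ht.2, max_eq_right ht.1]
  set T : ℝ → ℝ := fun t => σT (e t) with hTdef
  set r : ℝ → ℝ := fun t => σr (e t) with hrdef
  have hT : Continuous T := hσT.comp_continuous hec heΩ
  have hr : Continuous r := hσr.comp_continuous hec heΩ
  have hTpos : ∀ t, 0 < T t := fun t => hσT_pos _ (heΩ t)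
  have hrpos : ∀ t, 0 < r t := fun t => (hσr_pos _ (heΩ t)).1
  have hrleT : ∀ t, r t ≤ T t := fun t => (hσr_pos _ (heΩ t)).2
  have hTeq : ∀ t ∈ Ω, T t = σT t := fun t ht => by rw [hTdef]; simp [heid t ht]
  have hreq : ∀ t ∈ Ω, r t = σr t := fun t ht => by rw [hrdef]; simp [heid t ht]
  -- antiderivative
  set F : ℝ → ℝ := fun t => ∫ z in xL..t, T z with hFdef
  have hF : ∀ t, HasDerivAt F (T t) t := fun t =>
    integral_hasDerivAt_right (hT.intervalIntegrable _ _)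
      (hT.stronglyMeasurableAtFilter _ _) hT.continuousAt
  have hFc : Continuous F := by
    rw [continuous_iff_continuousAt]; exact fun t => (hF t).continuousAt
  have hFmono : Monotone F :=
    monotone_of_deriv_nonneg (fun t => (hF t).differentiableAt)
      (fun t => by rw [(hF t).deriv]; exact (hTpos t).le)
  have hFint : ∀ x ∈ Ω, ∀ y ∈ Ω, (∫ z in y..x, σT z) = F x - F y := by
    intro x hxx y hyy
    have h1 : Set.uIcc y x ⊆ Ω := Set.uIcc_subset_Icc hyy hxx
    have h2 : (∫ z in y..x, σT z) = ∫ z in y..x, T z :=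
      integral_congr (fun z hz => (hTeq z (h1 hz)).symm)
    rw [h2]
    exact (integral_interval_sub_left (hT.intervalIntegrable xL x)
      (hT.intervalIntegrable xL y)).symm
  -- nice version of the kernel
  set K : ℝ → ℝ → ℝ := fun x y =>
    if 0 < μ then (if y ≤ x then (1/μ) * Real.exp ((F y - F x)/μ) * (r y / T y) else 0)
    else (if x ≤ y then (1/(-μ)) * Real.exp ((F x - F y)/(-μ)) * (r y / T y) else 0)
    with hKdef
  have hKK : ∀ x ∈ Ω, ∀ y ∈ Ω, transKernel σT σr μ x y = K x y := by
    intro x hxx y hyy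
    rw [transKernel, hKdef]
    by_cases hμp : 0 < μ
    · simp only [if_pos hμp]
      by_cases hyx : y ≤ x
      · simp only [if_pos hyx]
        rw [hFint x hxx y hyy, hreq y hyy, hTeq y hyy,
          show -(1/μ) * (F x - F y) = (F y - F x)/μ by ring]
      · simp [hyx]
    · simp only [if_neg hμp]
      by_cases hxy : x ≤ y
      · simp only [if_pos hxy]
        rw [hFint y hyy x hxx, hreq y hyy, hTeq y hyy,
          show (1/μ) * (F y - F x) = (F x - F y)/(-μ) by ring,
          show -(1/μ) = 1/(-μ) by ring]
      · simp [hxy]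
  have hμneg : ¬ 0 < μ → 0 < -μ := fun h => by
    rcases hμ0.lt_or_gt with h' | h'
    · linarith
    · exact absurd h' h
  have hKnn : ∀ x y, 0 ≤ K x y := by
    intro x y
    simp only [hKdef]
    split_ifs with h1 h2 h3
    · exact mul_nonneg (mul_nonneg (one_div_pos.2 h1).le (Real.exp_pos _).le)
        (div_nonneg (hrpos y).le (hTpos y).le)
    · exact le_rfl
    · exact mul_nonneg (mul_nonneg (one_div_pos.2 (neg_pos.2 (hμ0.lt_or_gt.resolve_right h1))).le
        (Real.exp_pos _).le) (div_nonneg (hrpos y).le (hTpos y).le)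
    · exact le_rfl
  have hKle : ∀ x y, K x y ≤ 1/|μ| := by
    intro x y
    simp only [hKdef]
    split_ifs with h1 h2 h3
    · rw [abs_of_pos h1]
      calc 1 / μ * Real.exp ((F y - F x) / μ) * (r y / T y)
          ≤ 1 / μ * 1 * 1 := by
            apply mul_le_mul (mul_le_mul le_rfl ?_ (Real.exp_pos _).le (one_div_pos.2 h1).le)
              ?_ (div_nonneg (hrpos y).le (hTpos y).le) (by positivity)
            · rw [Real.exp_le_one_iff]
              exact div_nonpos_of_nonpos_of_nonneg (sub_nonpos.2 (hFmono h2)) h1.le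
            · exact (div_le_one (hTpos y)).2 (hrleT y)
        _ = 1 / μ := by ring
    · exact le_trans le_rfl (by positivity)
    · have hm : 0 < -μ := neg_pos.2 (hμ0.lt_or_gt.resolve_right h1)
      rw [abs_of_neg (neg_pos.1 hm)]
      calc 1 / -μ * Real.exp ((F x - F y) / -μ) * (r y / T y)
          ≤ 1 / -μ * 1 * 1 := by
            apply mul_le_mul (mul_le_mul le_rfl ?_ (Real.exp_pos _).le (one_div_pos.2 hm).le)
              ?_ (div_nonneg (hrpos y).le (hTpos y).le) (by positivity)
            · rw [Real.exp_le_one_iff]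
              exact div_nonpos_of_nonpos_of_nonneg (sub_nonpos.2 (hFmono h3)) hm.le
            · exact (div_le_one (hTpos y)).2 (hrleT y)
        _ = 1 / -μ := by ring
    · exact le_trans le_rfl (by positivity)
  have hKmeas : Measurable (Function.uncurry K) := by
    by_cases hμp : 0 < μ
    · have hU : Function.uncurry K = fun p : ℝ × ℝ =>
          if p.2 ≤ p.1 then (1/μ) * Real.exp ((F p.2 - F p.1)/μ) * (r p.2 / T p.2) else 0 := by
        funext p
        simp only [Function.uncurry, hKdef, if_pos hμp]
      rw [hU]
      refine Measurable.ite (measurableSet_le measurable_snd measurable_fst) ?_ measurable_const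
      have : Continuous fun p : ℝ × ℝ =>
          (1/μ) * Real.exp ((F p.2 - F p.1)/μ) * (r p.2 / T p.2) := by
        refine ((continuous_const.mul ?_).mul
          ((hr.comp continuous_snd).div (hT.comp continuous_snd) fun p => (hTpos p.2).ne'))
        exact (Real.continuous_exp.comp
          ((((hFc.comp continuous_snd).sub (hFc.comp continuous_fst)).div_const μ)))
      exact this.measurable
    · have hU : Function.uncurry K = fun p : ℝ × ℝ =>
          if p.1 ≤ p.2 then (1/(-μ)) * Real.exp ((F p.1 - F p.2)/(-μ)) * (r p.2 / T p.2) else 0 := by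
        funext p
        simp only [Function.uncurry, hKdef, if_neg hμp]
      rw [hU]
      refine Measurable.ite (measurableSet_le measurable_fst measurable_snd) ?_ measurable_const
      have : Continuous fun p : ℝ × ℝ =>
          (1/(-μ)) * Real.exp ((F p.1 - F p.2)/(-μ)) * (r p.2 / T p.2) := by
        refine ((continuous_const.mul ?_).mul
          ((hr.comp continuous_snd).div (hT.comp continuous_snd) fun p => (hTpos p.2).ne'))
        exact (Real.continuous_exp.comp
          ((((hFc.comp continuous_fst).sub (hFc.comp continuous_snd)).div_const (-μ))))
      exact this.measurable
  -- integrability of rows and columns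
  obtain ⟨C, hC⟩ := (isCompact_Icc (a := xL) (b := xR)).exists_bound_of_continuousOn hT.continuousOn
  set μ0 : Measure ℝ := volume.restrict Ω with hμ0def
  have hΩfin : volume Ω < ⊤ := measure_Icc_lt_top
  have hrowInt : ∀ x : ℝ, IntegrableOn (fun y => K x y * T y) Ω volume := by
    intro x
    refine Integrable.mono' (g := fun _ => 1/|μ| * C)
      ((integrableOn_const_iff (C := 1/|μ| * C)).2 (Or.inr hΩfin)) ?_ ?_
    · exact ((hKmeas.of_uncurry_left).mul hT.measurable).aestronglyMeasurable
    · filter_upwards [ae_restrict_mem measurableSet_Icc] with y hy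
      rw [Real.norm_eq_abs, abs_of_nonneg (mul_nonneg (hKnn x y) (hTpos y).le)]
      exact mul_le_mul (hKle x y) ((le_abs_self _).trans (hC y hy)) (hTpos y).le
        (by positivity)
  have hcolInt : ∀ y : ℝ, IntegrableOn (fun x => K x y * T x) Ω volume := by
    intro y
    refine Integrable.mono' (g := fun _ => 1/|μ| * C)
      ((integrableOn_const_iff (C := 1/|μ| * C)).2 (Or.inr hΩfin)) ?_ ?_
    · exact ((hKmeas.of_uncurry_right).mul hT.measurable).aestronglyMeasurable
    · filter_upwards [ae_restrict_mem measurableSet_Icc] with x hxx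
      rw [Real.norm_eq_abs, abs_of_nonneg (mul_nonneg (hKnn x y) (hTpos x).le)]
      exact mul_le_mul (hKle x y) ((le_abs_self _).trans (hC x hxx)) (hTpos x).le
        (by positivity)
  -- row bound
  have hrow : ∀ x ∈ Ω, (∫ y in Ω, K x y * T y) ≤ 1 := by
    intro x hxx
    by_cases hμp : 0 < μ
    · have h1 : (fun y => K x y * T y) = Set.indicator (Set.Iic x)
          (fun y => 1/μ * Real.exp ((F y - F x)/μ) * r y) := by
        funext y
        simp only [hKdef, if_pos hμp]
        by_cases hyx : y ≤ x
        · rw [Set.indicator_of_mem (show y ∈ Set.Iic x from hyx), if_pos hyx,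
            mul_assoc, div_mul_cancel₀ _ (hTpos y).ne']
        · rw [Set.indicator_of_notMem (show y ∉ Set.Iic x from hyx), if_neg hyx, zero_mul]
      have hset : Set.Icc xL xR ∩ Set.Iic x = Set.Icc xL x :=
        Set.ext fun t => by
          simp only [Set.mem_inter_iff, Set.mem_Icc, Set.mem_Iic]
          exact ⟨fun h => ⟨h.1.1, h.2⟩, fun h => ⟨⟨h.1, h.2.trans hxx.2⟩, h.2⟩⟩
      rw [h1, setIntegral_indicator measurableSet_Iic, hΩ, hset,
        integral_Icc_eq_integral_Ioc, ← integral_of_le hxx.1]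
      have hE : Continuous fun y => Real.exp ((F y - F x)/μ) :=
        Real.continuous_exp.comp ((hFc.sub continuous_const).div_const μ)
      have h2 : (∫ y in xL..x, 1/μ * Real.exp ((F y - F x)/μ) * r y)
          ≤ ∫ y in xL..x, T y / μ * Real.exp ((F y - F x)/μ) := by
        refine integral_mono_on hxx.1 ?_ ?_ fun y _ => ?_
        · exact Continuous.intervalIntegrable ((continuous_const.mul hE).mul hr) _ _
        · exact Continuous.intervalIntegrable ((hT.div_const μ).mul hE) _ _
        · calc 1/μ * Real.exp ((F y - F x)/μ) * r y
              ≤ 1/μ * Real.exp ((F y - F x)/μ) * T y := by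
                refine mul_le_mul_of_nonneg_left (hrleT y) ?_
                positivity
            _ = T y / μ * Real.exp ((F y - F x)/μ) := by ring
      refine h2.trans ?_
      rw [ftc_exp1_s17 T F hT hF μ (F x) xL x, sub_self, zero_div, Real.exp_zero]
      exact sub_le_self _ (Real.exp_pos _).le
    · have hm : 0 < -μ := neg_pos.2 (hμ0.lt_or_gt.resolve_right hμp)
      have h1 : (fun y => K x y * T y) = Set.indicator (Set.Ici x)
          (fun y => 1/(-μ) * Real.exp ((F x - F y)/(-μ)) * r y) := by
        funext y
        simp only [hKdef, if_neg hμp]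
        by_cases hxy : x ≤ y
        · rw [Set.indicator_of_mem (show y ∈ Set.Ici x from hxy), if_pos hxy,
            mul_assoc, div_mul_cancel₀ _ (hTpos y).ne']
        · rw [Set.indicator_of_notMem (show y ∉ Set.Ici x from hxy), if_neg hxy, zero_mul]
      have hset : Set.Icc xL xR ∩ Set.Ici x = Set.Icc x xR :=
        Set.ext fun t => by
          simp only [Set.mem_inter_iff, Set.mem_Icc, Set.mem_Ici]
          exact ⟨fun h => ⟨h.2, h.1.2⟩, fun h => ⟨⟨hxx.1.trans h.1, h.2⟩, h.1⟩⟩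
      rw [h1, setIntegral_indicator measurableSet_Ici, hΩ, hset,
        integral_Icc_eq_integral_Ioc, ← integral_of_le hxx.2]
      have hE : Continuous fun y => Real.exp ((F x - F y)/(-μ)) :=
        Real.continuous_exp.comp ((continuous_const.sub hFc).div_const (-μ))
      have h2 : (∫ y in x..xR, 1/(-μ) * Real.exp ((F x - F y)/(-μ)) * r y)
          ≤ ∫ y in x..xR, T y / (-μ) * Real.exp ((F x - F y)/(-μ)) := by
        refine integral_mono_on hxx.2 ?_ ?_ fun y _ => ?_
        · exact Continuous.intervalIntegrable ((continuous_const.mul hE).mul hr) _ _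
        · exact Continuous.intervalIntegrable ((hT.div_const (-μ)).mul hE) _ _
        · calc 1/(-μ) * Real.exp ((F x - F y)/(-μ)) * r y
              ≤ 1/(-μ) * Real.exp ((F x - F y)/(-μ)) * T y := by
                refine mul_le_mul_of_nonneg_left (hrleT y) ?_
                positivity
            _ = T y / (-μ) * Real.exp ((F x - F y)/(-μ)) := by ring
      refine h2.trans ?_
      rw [ftc_exp2_s17 T F hT hF (-μ) (F x) x xR, sub_self, zero_div, Real.exp_zero]
      exact sub_le_self _ (Real.exp_pos _).le
  -- column bound
  have hcol : ∀ y ∈ Ω, (∫ x in Ω, K x y * T x) ≤ 1 := by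
    intro y hyy
    have hrT1 : r y / T y ≤ 1 := (div_le_one (hTpos y)).2 (hrleT y)
    have hrT0 : 0 ≤ r y / T y := div_nonneg (hrpos y).le (hTpos y).le
    by_cases hμp : 0 < μ
    · have h1 : (fun x => K x y * T x) = Set.indicator (Set.Ici y)
          (fun x => (r y / T y) * (T x / μ * Real.exp ((F y - F x)/μ))) := by
        funext x
        simp only [hKdef, if_pos hμp]
        by_cases hyx : y ≤ x
        · rw [Set.indicator_of_mem (show x ∈ Set.Ici y from hyx), if_pos hyx]
          ring
        · rw [Set.indicator_of_notMem (show x ∉ Set.Ici y from hyx), if_neg hyx, zero_mul]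
      have hset : Set.Icc xL xR ∩ Set.Ici y = Set.Icc y xR :=
        Set.ext fun t => by
          simp only [Set.mem_inter_iff, Set.mem_Icc, Set.mem_Ici]
          exact ⟨fun h => ⟨h.2, h.1.2⟩, fun h => ⟨⟨hyy.1.trans h.1, h.2⟩, h.1⟩⟩
      rw [h1, setIntegral_indicator measurableSet_Ici, hΩ, hset,
        integral_Icc_eq_integral_Ioc, ← integral_of_le hyy.2, intervalIntegral.integral_const_mul,
        ftc_exp2_s17 T F hT hF μ (F y) y xR, sub_self, zero_div, Real.exp_zero]
      refine mul_le_one₀ hrT1 ?_ ?_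
      · rw [sub_nonneg, Real.exp_le_one_iff]
        exact div_nonpos_of_nonpos_of_nonneg (sub_nonpos.2 (hFmono hyy.2)) hμp.le
      · exact sub_le_self _ (Real.exp_pos _).le
    · have hm : 0 < -μ := neg_pos.2 (hμ0.lt_or_gt.resolve_right hμp)
      have h1 : (fun x => K x y * T x) = Set.indicator (Set.Iic y)
          (fun x => (r y / T y) * (T x / (-μ) * Real.exp ((F x - F y)/(-μ)))) := by
        funext x
        simp only [hKdef, if_neg hμp]
        by_cases hxy : x ≤ y
        · rw [Set.indicator_of_mem (show x ∈ Set.Iic y from hxy), if_pos hxy]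
          ring
        · rw [Set.indicator_of_notMem (show x ∉ Set.Iic y from hxy), if_neg hxy, zero_mul]
      have hset : Set.Icc xL xR ∩ Set.Iic y = Set.Icc xL y :=
        Set.ext fun t => by
          simp only [Set.mem_inter_iff, Set.mem_Icc, Set.mem_Iic]
          exact ⟨fun h => ⟨h.1.1, h.2⟩, fun h => ⟨⟨h.1, h.2.trans hyy.2⟩, h.2⟩⟩
      rw [h1, setIntegral_indicator measurableSet_Iic, hΩ, hset,
        integral_Icc_eq_integral_Ioc, ← integral_of_le hyy.1, intervalIntegral.integral_const_mul,
        ftc_exp1_s17 T F hT hF (-μ) (F y) xL y, sub_self, zero_div, Real.exp_zero]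
      refine mul_le_one₀ hrT1 ?_ ?_
      · rw [sub_nonneg, Real.exp_le_one_iff]
        exact div_nonpos_of_nonpos_of_nonneg (sub_nonpos.2 (hFmono hyy.1)) hm.le
      · exact sub_le_self _ (Real.exp_pos _).le
  -- ENNReal setup
  set wE : ℝ → ENNReal := fun t => ENNReal.ofReal (T t) with hwEdef
  have hwEmeas : Measurable wE := ENNReal.measurable_ofReal.comp hT.measurable
  have hν : transMeasure xL xR σT = μ0.withDensity wE := by
    refine withDensity_congr_ae ?_
    filter_upwards [ae_restrict_mem measurableSet_Icc] with t ht
    show ENNReal.ofReal (σT t) = ENNReal.ofReal (T t)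
    rw [hTeq t ht]
  have habs : μ0 ≪ transMeasure xL xR σT := by
    rw [hν]
    exact withDensity_absolutelyContinuous' hwEmeas.aemeasurable
      (Filter.Eventually.of_forall fun t => (ENNReal.ofReal_pos.2 (hTpos t)).ne')
  have hψae : AEStronglyMeasurable (ψ : ℝ → ℝ) μ0 := (Lp.aestronglyMeasurable ψ).mono_ac habs
  set ψm : ℝ → ℝ := hψae.mk _ with hψmdef
  have hψmm : StronglyMeasurable ψm := hψae.stronglyMeasurable_mk
  have hψeq : (ψ : ℝ → ℝ) =ᵐ[μ0] ψm := hψae.ae_eq_mk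
  set ψE : ℝ → ENNReal := fun y => ((‖ψm y‖₊ : NNReal) : ENNReal) with hψEdef
  have hψEmeas : Measurable ψE := hψmm.measurable.enorm
  set kE : ℝ → ℝ → ENNReal := fun x y => ENNReal.ofReal (K x y) with hkEdef
  have hkEp : Measurable fun p : ℝ × ℝ => kE p.1 p.2 :=
    ENNReal.measurable_ofReal.comp hKmeas
  -- ENNReal row/column bounds
  have hrowE : ∀ x ∈ Ω, (∫⁻ y, kE x y * wE y ∂μ0) ≤ 1 := by
    intro x hxx
    have h1 : ∀ y, kE x y * wE y = ENNReal.ofReal (K x y * T y) :=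
      fun y => (ENNReal.ofReal_mul (hKnn x y)).symm
    rw [lintegral_congr h1, ← ofReal_integral_eq_lintegral_ofReal (hrowInt x)
      (Filter.Eventually.of_forall fun y => mul_nonneg (hKnn x y) (hTpos y).le)]
    exact ENNReal.ofReal_le_one.2 (hrow x hxx)
  have hcolE : ∀ y ∈ Ω, (∫⁻ x, kE x y * wE x ∂μ0) ≤ 1 := by
    intro y hyy
    have h1 : ∀ x, kE x y * wE x = ENNReal.ofReal (K x y * T x) :=
      fun x => (ENNReal.ofReal_mul (hKnn x y)).symm
    rw [lintegral_congr h1, ← ofReal_integral_eq_lintegral_ofReal (hcolInt y)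
      (Filter.Eventually.of_forall fun x => mul_nonneg (hKnn x y) (hTpos x).le)]
    exact ENNReal.ofReal_le_one.2 (hcol y hyy)
  -- reduce to a lintegral estimate
  have hsq : ∀ a : ENNReal, (a ^ (1/2:ℝ)) ^ (2:ℝ) = a := fun a => by
    rw [← ENNReal.rpow_mul]; norm_num
  set Ψ : ℝ → ENNReal := fun x => ∫⁻ y, kE x y * ψE y ^ (2:ℝ) * wE y ∂μ0 with hΨdef
  have step1 : ∀ᵐ x ∂μ0, ((‖g x‖₊ : NNReal) : ENNReal) ^ (2:ℝ) ≤ Ψ x := by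
    filter_upwards [ae_restrict_mem measurableSet_Icc] with x hxx
    have hgx : g x = ∫ y in Ω, K x y * ψm y * T y := by
      have e1 : (∫ y in Ω, transKernel σT σr μ x y * (ψ:ℝ→ℝ) y * σT y)
          = ∫ y in Ω, K x y * (ψ:ℝ→ℝ) y * T y :=
        setIntegral_congr_fun measurableSet_Icc fun y hy => by
          rw [hKK x hxx y hy, hTeq y hy]
      have e2 : (∫ y in Ω, K x y * (ψ:ℝ→ℝ) y * T y) = ∫ y in Ω, K x y * ψm y * T y :=
        integral_congr_ae (by filter_upwards [hψeq] with y hy; rw [hy])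
      rw [hg x, e1, e2]
    have h2 : ((‖g x‖₊ : NNReal) : ENNReal) ≤ ∫⁻ y, kE x y * ψE y * wE y ∂μ0 := by
      rw [hgx]
      refine le_trans (enorm_integral_le_lintegral_enorm _)
        (le_of_eq (lintegral_congr fun y => ?_))
      rw [enorm_mul, enorm_mul,
        Real.enorm_eq_ofReal (hKnn x y), Real.enorm_eq_ofReal (hTpos y).le]
      rfl
    have h3 : (∫⁻ y, kE x y * ψE y * wE y ∂μ0) ≤ (Ψ x) ^ (1/2:ℝ) := by
      have hconj : Real.HolderConjugate 2 2 := Real.HolderConjugate.two_two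
      have hkx : Measurable fun y => kE x y :=
        ENNReal.measurable_ofReal.comp hKmeas.of_uncurry_left
      have hfm : AEMeasurable (fun y => (kE x y * wE y) ^ (1/2:ℝ)) μ0 :=
        ((hkx.mul hwEmeas).pow_const _).aemeasurable
      have hgm : AEMeasurable (fun y => (kE x y * wE y) ^ (1/2:ℝ) * ψE y) μ0 :=
        (((hkx.mul hwEmeas).pow_const _).mul hψEmeas).aemeasurable
      have hCS := ENNReal.lintegral_mul_le_Lp_mul_Lq μ0 hconj hfm hgm
      calc ∫⁻ y, kE x y * ψE y * wE y ∂μ0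
          = ∫⁻ y, ((fun y => (kE x y * wE y) ^ (1/2:ℝ)) *
              (fun y => (kE x y * wE y) ^ (1/2:ℝ) * ψE y)) y ∂μ0 := by
            refine lintegral_congr fun y => ?_
            simp only [Pi.mul_apply]
            rw [← mul_assoc, ← ENNReal.rpow_add_of_nonneg _ _ (by norm_num) (by norm_num)]
            norm_num
            ring
        _ ≤ (∫⁻ y, ((kE x y * wE y) ^ (1/2:ℝ)) ^ (2:ℝ) ∂μ0) ^ (1/2:ℝ) *
            (∫⁻ y, ((kE x y * wE y) ^ (1/2:ℝ) * ψE y) ^ (2:ℝ) ∂μ0) ^ (1/2:ℝ) := hCS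
        _ ≤ 1 * (Ψ x) ^ (1/2:ℝ) := by
            refine mul_le_mul' ?_ (le_of_eq ?_)
            · calc (∫⁻ y, ((kE x y * wE y) ^ (1/2:ℝ)) ^ (2:ℝ) ∂μ0) ^ (1/2:ℝ)
                  = (∫⁻ y, kE x y * wE y ∂μ0) ^ (1/2:ℝ) := by
                    rw [lintegral_congr fun y => hsq (kE x y * wE y)]
                _ ≤ (1:ENNReal) ^ (1/2:ℝ) :=
                    ENNReal.rpow_le_rpow (hrowE x hxx) (by norm_num)
                _ = 1 := ENNReal.one_rpow _
            · refine congrArg (· ^ (1/2:ℝ)) (lintegral_congr fun y => ?_)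
              rw [ENNReal.mul_rpow_of_nonneg _ _ (by norm_num), hsq]
              ring
        _ = (Ψ x) ^ (1/2:ℝ) := one_mul _
    calc ((‖g x‖₊ : NNReal) : ENNReal) ^ (2:ℝ)
        ≤ ((Ψ x) ^ (1/2:ℝ)) ^ (2:ℝ) := ENNReal.rpow_le_rpow (h2.trans h3) (by norm_num)
      _ = Ψ x := hsq _
  -- swap the order of integration
  have hswap : (∫⁻ x, wE x * Ψ x ∂μ0) ≤ ∫⁻ y, wE y * ψE y ^ (2:ℝ) ∂μ0 := by
    have hmeasP : AEMeasurable
        (Function.uncurry fun x y => wE x * (kE x y * ψE y ^ (2:ℝ) * wE y)) (μ0.prod μ0) := by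
      refine Measurable.aemeasurable ?_
      exact (hwEmeas.comp measurable_fst).mul
        ((hkEp.mul ((hψEmeas.comp measurable_snd).pow_const _)).mul
          (hwEmeas.comp measurable_snd))
    have hc : ∀ y, ψE y ^ (2:ℝ) * wE y ≠ ⊤ := fun y =>
      ENNReal.mul_ne_top (ENNReal.rpow_ne_top_of_nonneg (by norm_num) ENNReal.coe_ne_top)
        ENNReal.ofReal_ne_top
    calc ∫⁻ x, wE x * Ψ x ∂μ0
        = ∫⁻ x, ∫⁻ y, wE x * (kE x y * ψE y ^ (2:ℝ) * wE y) ∂μ0 ∂μ0 :=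
          lintegral_congr fun x => (lintegral_const_mul' _ _ ENNReal.ofReal_ne_top).symm
      _ = ∫⁻ y, ∫⁻ x, wE x * (kE x y * ψE y ^ (2:ℝ) * wE y) ∂μ0 ∂μ0 :=
          lintegral_lintegral_swap hmeasP
      _ = ∫⁻ y, (∫⁻ x, kE x y * wE x ∂μ0) * (ψE y ^ (2:ℝ) * wE y) ∂μ0 := by
          refine lintegral_congr fun y => ?_
          calc ∫⁻ x, wE x * (kE x y * ψE y ^ (2:ℝ) * wE y) ∂μ0
              = ∫⁻ x, (kE x y * wE x) * (ψE y ^ (2:ℝ) * wE y) ∂μ0 :=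
                lintegral_congr fun x => by ring
            _ = (∫⁻ x, kE x y * wE x ∂μ0) * (ψE y ^ (2:ℝ) * wE y) :=
                lintegral_mul_const' _ _ (hc y)
      _ ≤ ∫⁻ y, ψE y ^ (2:ℝ) * wE y ∂μ0 := by
          refine lintegral_mono_ae ?_
          filter_upwards [ae_restrict_mem measurableSet_Icc] with y hy
          calc (∫⁻ x, kE x y * wE x ∂μ0) * (ψE y ^ (2:ℝ) * wE y)
              ≤ 1 * (ψE y ^ (2:ℝ) * wE y) := mul_le_mul_left (hcolE y hy) _
            _ = ψE y ^ (2:ℝ) * wE y := one_mul _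
      _ = ∫⁻ y, wE y * ψE y ^ (2:ℝ) ∂μ0 := lintegral_congr fun y => mul_comm _ _
  -- finish
  obtain ⟨φf, hφf⟩ : ∃ φf : ℝ → ℝ, (ψ : ℝ → ℝ) = φf := ⟨_, rfl⟩
  rw [hφf] at hψeq
  rw [hφf, hν, eLpNorm_congr_ae ((withDensity_absolutelyContinuous μ0 wE).ae_eq hψeq),
    eLpNorm_eq_lintegral_rpow_enorm_toReal (by norm_num) (by norm_num),
    eLpNorm_eq_lintegral_rpow_enorm_toReal (by norm_num) (by norm_num)]
  simp only [ENNReal.toReal_ofNat]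
  refine ENNReal.rpow_le_rpow ?_ (by norm_num)
  have hwfin : ∀ᵐ x ∂μ0, wE x < ⊤ := Filter.Eventually.of_forall fun x => ENNReal.ofReal_lt_top
  rw [lintegral_withDensity_eq_lintegral_mul_non_measurable μ0 hwEmeas hwfin,
    lintegral_withDensity_eq_lintegral_mul_non_measurable μ0 hwEmeas hwfin]
  simp only [Pi.mul_apply]
  calc ∫⁻ x, wE x * ((‖g x‖₊ : NNReal) : ENNReal) ^ (2:ℝ) ∂μ0
      ≤ ∫⁻ x, wE x * Ψ x ∂μ0 :=
        lintegral_mono_ae (step1.mono fun x h => mul_le_mul_right h _)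
    _ ≤ ∫⁻ y, wE y * ψE y ^ (2:ℝ) ∂μ0 := hswap

/-- **Stability estimate for the regularization error** (Appendix A): if, for each
`μ ∈ S^δ = [−1,−δ) ∪ (δ,1]`, `v(·,μ) = λ A_μ(I^δ(v) + f)` (i.e. `v` solves
`μ∂_x v + σ_T v = λσ_r(I^δ(v)+f)` with zero inflow boundary conditions), where
`I^δ(v) = (1/|S^δ|)∫_{S^δ} v(·,μ)dμ` and `|S^δ| = 2(1−δ)`, then
`‖I^δ(v)‖ ≤ sup_{μ∈S^δ}‖v(·,μ)‖ ≤ (λ/(1−λ))‖f‖` and `‖I^δ(v)+f‖ ≤ (1/(1−λ))‖f‖`. -/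
theorem regularization_stability_estimate
    (xL xR : ℝ) (hx : xL < xR)
    (σT σr : ℝ → ℝ)
    (hσT : ContinuousOn σT (Set.Icc xL xR)) (hσT_pos : ∀ x ∈ Set.Icc xL xR, 0 < σT x)
    (hσr : ContinuousOn σr (Set.Icc xL xR))
    (hσr_pos : ∀ x ∈ Set.Icc xL xR, 0 < σr x ∧ σr x ≤ σT x)
    (A : ℝ → Lp ℝ 2 (transMeasure xL xR σT) →L[ℝ] Lp ℝ 2 (transMeasure xL xR σT))
    (hA : ∀ μ : ℝ, μ ∈ Set.Icc (-1 : ℝ) 1 → μ ≠ 0 →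
      ∀ φ : Lp ℝ 2 (transMeasure xL xR σT),
        ∀ᵐ x ∂(transMeasure xL xR σT),
          (A μ φ) x = ∫ y in Set.Icc xL xR, transKernel σT σr μ x y * φ y * σT y)
    (δ : ℝ) (hδ : δ ∈ Set.Ioo (0 : ℝ) 1)
    (lam : ℝ) (hlam : lam ∈ Set.Ioo (0 : ℝ) 1)
    (f : Lp ℝ 2 (transMeasure xL xR σT))
    (v : ℝ → Lp ℝ 2 (transMeasure xL xR σT))
    (hvint : IntegrableOn v (Set.Ico (-1 : ℝ) (-δ) ∪ Set.Ioc δ 1) volume)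
    (hv : ∀ μ ∈ Set.Ico (-1 : ℝ) (-δ) ∪ Set.Ioc δ 1,
      v μ = lam • A μ
        (((2 * (1 - δ))⁻¹ • ∫ ν in Set.Ico (-1 : ℝ) (-δ) ∪ Set.Ioc δ 1, v ν) + f)) :
    ‖(2 * (1 - δ))⁻¹ • ∫ ν in Set.Ico (-1 : ℝ) (-δ) ∪ Set.Ioc δ 1, v ν‖
        ≤ sSup ((fun μ => ‖v μ‖) '' (Set.Ico (-1 : ℝ) (-δ) ∪ Set.Ioc δ 1)) ∧
    sSup ((fun μ => ‖v μ‖) '' (Set.Ico (-1 : ℝ) (-δ) ∪ Set.Ioc δ 1))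
        ≤ (lam / (1 - lam)) * ‖f‖ ∧
    ‖((2 * (1 - δ))⁻¹ • ∫ ν in Set.Ico (-1 : ℝ) (-δ) ∪ Set.Ioc δ 1, v ν) + f‖
        ≤ (1 / (1 - lam)) * ‖f‖ := by
  obtain ⟨hδ0, hδ1⟩ := hδ
  obtain ⟨hlam0, hlam1⟩ := hlam
  set S : Set ℝ := Set.Ico (-1 : ℝ) (-δ) ∪ Set.Ioc δ 1 with hSdef
  set w0 : Lp ℝ 2 (transMeasure xL xR σT) := (2 * (1 - δ))⁻¹ • ∫ ν in S, v ν with hw0def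
  have key : ∀ μ' ∈ S, ‖v μ'‖ ≤ lam * ‖w0 + f‖ := by
    intro μ' hμ'
    have hμ'0 : μ' ≠ 0 := by
      rcases hμ' with h | h
      · exact ne_of_lt (by linarith [h.2])
      · exact ne_of_gt (by linarith [h.1])
    have hμ'1 : μ' ∈ Set.Icc (-1 : ℝ) 1 := by
      rcases hμ' with h | h
      · exact ⟨h.1, by linarith [h.2]⟩
      · exact ⟨by linarith [h.1], h.2⟩
    have hae := hA μ' hμ'1 hμ'0 (w0 + f)
    have hop : ‖A μ' (w0 + f)‖ ≤ ‖w0 + f‖ := by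
      rw [Lp.norm_def, Lp.norm_def]
      refine ENNReal.toReal_mono (Lp.eLpNorm_ne_top _) ?_
      calc eLpNorm (A μ' (w0 + f) : ℝ → ℝ) 2 (transMeasure xL xR σT)
          = eLpNorm (fun x => ∫ y in Set.Icc xL xR,
              transKernel σT σr μ' x y * ((w0 + f : Lp ℝ 2 (transMeasure xL xR σT)) : ℝ → ℝ) y
                * σT y) 2 (transMeasure xL xR σT) := eLpNorm_congr_ae hae
        _ ≤ eLpNorm ((w0 + f : Lp ℝ 2 (transMeasure xL xR σT)) : ℝ → ℝ) 2
              (transMeasure xL xR σT) :=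
            kernel_op_bound xL xR hx σT σr hσT hσT_pos hσr hσr_pos μ' hμ'0 (w0 + f) _
              (fun x => rfl)
    rw [hv μ' hμ', norm_smul, Real.norm_eq_abs, abs_of_pos hlam0]
    exact mul_le_mul_of_nonneg_left hop hlam0.le
  have hne : S.Nonempty := ⟨1, Or.inr ⟨hδ1, le_refl 1⟩⟩
  have himg : ((fun μ => ‖v μ‖) '' S).Nonempty := hne.image _
  have hbdd : BddAbove ((fun μ => ‖v μ‖) '' S) := by
    refine ⟨lam * ‖w0 + f‖, ?_⟩
    rintro _ ⟨μ', hμ', rfl⟩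
    exact key μ' hμ'
  set M := sSup ((fun μ => ‖v μ‖) '' S) with hMdef
  have hvle : ∀ μ' ∈ S, ‖v μ'‖ ≤ M := fun μ' h => le_csSup hbdd ⟨μ', h, rfl⟩
  have hM0 : 0 ≤ M := le_trans (norm_nonneg (v 1)) (hvle 1 (Or.inr ⟨hδ1, le_refl 1⟩))
  have hSmeas : MeasurableSet S := measurableSet_Ico.union measurableSet_Ioc
  have hSfin : volume S < ⊤ :=
    lt_of_le_of_lt (measure_union_le _ _)
      (ENNReal.add_lt_top.2 ⟨measure_Ico_lt_top, measure_Ioc_lt_top⟩)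
  have hSvol : (volume S).toReal = 2 * (1 - δ) := by
    have hdisj : Disjoint (Set.Ico (-1 : ℝ) (-δ)) (Set.Ioc δ 1) := by
      refine Set.disjoint_left.2 fun x hx hx' => ?_
      have h1 : x < -δ := hx.2
      have h2 : δ < x := hx'.1
      linarith
    rw [hSdef, measure_union hdisj measurableSet_Ioc, Real.volume_Ico, Real.volume_Ioc,
      ENNReal.toReal_add ENNReal.ofReal_ne_top ENNReal.ofReal_ne_top,
      ENNReal.toReal_ofReal (by linarith), ENNReal.toReal_ofReal (by linarith)]
    ring
  have hIneq : ‖∫ ν in S, v ν‖ ≤ M * (2 * (1 - δ)) := by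
    have h := norm_setIntegral_le_of_norm_le_const hSfin hvle
    rwa [measureReal_def, hSvol] at h
  have h2δ : (0:ℝ) < 2 * (1 - δ) := by linarith
  have hw0M : ‖w0‖ ≤ M := by
    rw [hw0def, norm_smul, Real.norm_eq_abs, abs_of_pos (inv_pos.2 h2δ)]
    calc (2 * (1 - δ))⁻¹ * ‖∫ ν in S, v ν‖
        ≤ (2 * (1 - δ))⁻¹ * (M * (2 * (1 - δ))) :=
          mul_le_mul_of_nonneg_left hIneq (inv_pos.2 h2δ).le
      _ = M := by field_simp
  have hMle : M ≤ lam * ‖w0 + f‖ := by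
    refine csSup_le himg ?_
    rintro _ ⟨μ', hμ', rfl⟩
    exact key μ' hμ'
  have htri : ‖w0 + f‖ ≤ M + ‖f‖ := by
    refine (norm_add_le _ _).trans ?_
    linarith [hw0M]
  have h1lam : (0:ℝ) < 1 - lam := by linarith
  have hX : (1 - lam) * ‖w0 + f‖ ≤ ‖f‖ := by nlinarith [htri, hMle]
  have hwf : ‖w0 + f‖ ≤ 1 / (1 - lam) * ‖f‖ := by
    rw [div_mul_eq_mul_div, one_mul, le_div_iff₀ h1lam]
    nlinarith [hX]
  refine ⟨hw0M, ?_, hwf⟩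
  refine hMle.trans ?_
  have := mul_le_mul_of_nonneg_left hwf hlam0.le
  refine this.trans (le_of_eq ?_)
  field_simp
end

section
/- Double factorial bound: for every positive integer p, (2p−1)!! ≤ ((2p+1)/e)^p, where (2p−1)!! = 1·3·5·⋯·(2p−1) and e is Euler's number. -/
lemma exp_key {t : ℝ} (h0 : 0 ≤ t) (h1 : t ≤ 1) :
    Real.exp t * (2 - t) ≤ 2 + t := by
  have hb := Real.exp_bound' h0 h1 (n := 4) (by norm_num)
  norm_num [Finset.sum_range_succ, Nat.factorial] at hb
  nlinarith [pow_nonneg h0 3, pow_nonneg h0 4, pow_nonneg h0 5, Real.exp_pos t,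
    sq_nonneg t, mul_nonneg (pow_nonneg h0 4) h0]

lemma exp_frac (p : ℕ) :
    Real.exp (1 / (p + 1 : ℝ)) ≤ (2 * p + 3) / (2 * p + 1) := by
  have hp1 : (0:ℝ) < p + 1 := by positivity
  set t : ℝ := 1 / (p + 1 : ℝ) with ht
  have h0 : 0 ≤ t := by positivity
  have h1 : t ≤ 1 := by
    rw [ht]
    have : (1:ℝ) ≤ p + 1 := by
      have := Nat.cast_nonneg (α := ℝ) p; linarith
    rw [div_le_one hp1]; exact this
  have hk := exp_key h0 h1
  have h2t : 0 < 2 - t := by linarith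
  have hkey : Real.exp t ≤ (2 + t) / (2 - t) := by
    rw [le_div_iff₀ h2t]; exact hk
  have heq : (2 + t) / (2 - t) = (2 * p + 3) / (2 * p + 1) := by
    rw [ht]
    rw [div_eq_div_iff (by linarith [one_div_pos.mpr hp1]) (by positivity)]
    field_simp
    ring
  rw [heq] at hkey
  exact hkey

lemma key_pow (p : ℕ) : Real.exp 1 * (2 * p + 1) ^ (p + 1) ≤ (2 * p + 3 : ℝ) ^ (p + 1) := by
  have hp1 : (0:ℝ) < 2 * p + 1 := by positivity
  have h := exp_frac p
  have hpow := pow_le_pow_left₀ (le_of_lt (Real.exp_pos _)) h (p + 1)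
  have hexp : Real.exp (1 / (p + 1 : ℝ)) ^ (p + 1) = Real.exp 1 := by
    rw [← Real.exp_nat_mul]
    congr 1
    field_simp
    push_cast; ring
  rw [hexp, div_pow] at hpow
  rw [le_div_iff₀ (by positivity)] at hpow
  linarith [hpow]

lemma df_aux (p : ℕ) (hp : 0 < p) :
    ((Nat.doubleFactorial (2 * p - 1) : ℝ)) * Real.exp 1 ^ p ≤ (2 * p + 1 : ℝ) ^ p := by
  induction p, hp using Nat.le_induction with
  | base =>
    simp [Nat.doubleFactorial]
    linarith [Real.exp_one_lt_d9]
  | succ n hn ih =>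
    have h2n : 2 * (n + 1) - 1 = (2 * n - 1) + 2 := by omega
    rw [h2n, Nat.doubleFactorial]
    have hcast : ((2 * n - 1 + 2 : ℕ) : ℝ) = 2 * n + 1 := by
      have : 2 * n - 1 + 2 = 2 * n + 1 := by omega
      rw [this]; push_cast; ring
    push_cast [hcast]
    have hDnn : (0:ℝ) ≤ (Nat.doubleFactorial (2 * n - 1) : ℝ) := Nat.cast_nonneg _
    have hkp := key_pow n
    have h1 : (2 * (n:ℝ) + 1) * (Nat.doubleFactorial (2 * n - 1) : ℝ) * Real.exp 1 ^ (n + 1)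
        = (2 * (n:ℝ) + 1) * Real.exp 1 * ((Nat.doubleFactorial (2 * n - 1) : ℝ) * Real.exp 1 ^ n) := by
      ring
    rw [h1]
    have h2 : (2 * (n:ℝ) + 1) * Real.exp 1 * ((Nat.doubleFactorial (2 * n - 1) : ℝ) * Real.exp 1 ^ n)
        ≤ (2 * (n:ℝ) + 1) * Real.exp 1 * (2 * n + 1) ^ n := by
      apply mul_le_mul_of_nonneg_left ih
      positivity
    refine h2.trans ?_
    have h3 : (2 * (n:ℝ) + 1) * Real.exp 1 * (2 * n + 1) ^ n
        = Real.exp 1 * (2 * n + 1) ^ (n + 1) := by ring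
    rw [h3]
    have := key_pow n
    calc Real.exp 1 * (2 * (n:ℝ) + 1) ^ (n + 1) ≤ (2 * n + 3 : ℝ) ^ (n + 1) := this
      _ = (2 * ((n:ℝ) + 1) + 1) ^ (n + 1) := by ring_nf

/-- **Double factorial bound**: for every positive integer `p`,
`(2p−1)!! ≤ ((2p+1)/e)^p`, where `e` is Euler's number. -/
theorem double_factorial_bound (p : ℕ) (hp : 0 < p) :
    ((Nat.doubleFactorial (2 * p - 1) : ℝ)) ≤ ((2 * p + 1 : ℝ) / Real.exp 1) ^ p := by
  have h := df_aux p hp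
  have he : (0:ℝ) < Real.exp 1 ^ p := by positivity
  rw [div_pow, le_div_iff₀ he]
  exact h
end
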